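/- arXiv:1906.04575 — 5 statements merged into one kernel-verified Lean document; each statement's English description precedes it below -/
import Mathlib

section
/- Fix integers r ≥ 2 and k ≥ r + 2. There exists a constant C > 0 (depending only on k and r) such that ex_→(n, P_k^r) ≤ C · n^{r−1} · log n for all n ≥ 2. -/
open Finset


/-- `IsOrdCrossPath r k H v` says that `v 0, v 1, ..., v (k+r-2)` are distinct vertices forming
an `r`-uniform crossing `k`-path in the ordered `r`-graph `H` on the linearly ordered vertex set
`Fin n`: the edges are `{v i, ..., v (i+r-1)}` for `0 ≤ i ≤ k-1`, and in the linear order: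
(i) `v 0 < v 1 < ... < v (r-1)`;
(ii) for each `j < r-1`, `v j < v (j+r) < v (j+2r) < ... < v (j+1)`, the chain running over all
indices `j + i*r ≤ k+r-2`;
(iii) `v 0 < v (r-1) < v (2r-1) < ... < v (⌊(r+k-2)/r⌋*r - 1)`. -/
def IsOrdCrossPath (r k : ℕ) {n : ℕ} (H : Finset (Finset (Fin n))) (v : ℕ → Fin n) : Prop :=
  (∀ i j : ℕ, i < k + r - 1 → j < k + r - 1 → v i = v j → i = j) ∧
  (∀ i : ℕ, i < k → Finset.image v (Finset.Ico i (i + r)) ∈ H) ∧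
  (∀ i : ℕ, i + 1 < r → v i < v (i + 1)) ∧
  (∀ j i : ℕ, j + 1 < r → 1 ≤ i → j + i * r ≤ k + r - 2 →
      v (j + (i - 1) * r) < v (j + i * r) ∧ v (j + i * r) < v (j + 1)) ∧
  (v 0 < v (r - 1) ∧
    ∀ i : ℕ, 1 ≤ i → (i + 1) * r ≤ k + r - 2 → v (i * r - 1) < v ((i + 1) * r - 1))

/-- `exOrdP n r k` is the maximum number of edges in an `n`-vertex ordered `r`-graph
containing no crossing `k`-path `P_k^r`. -/
noncomputable def exOrdP (n r k : ℕ) : ℕ :=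
  sSup {m | ∃ H : Finset (Finset (Fin n)),
    (∀ e ∈ H, e.card = r) ∧ (¬ ∃ v : ℕ → Fin n, IsOrdCrossPath r k H v) ∧ H.card = m}

namespace CPP


def levN (a b : ℕ) : ℕ := Nat.findGreatest (fun ℓ => a < 2^ℓ * (b / 2^ℓ)) (Nat.log 2 b)

def threshN (a b : ℕ) : ℕ := 2 ^ levN a b * (b / 2 ^ levN a b)

lemma thresh_gt {a b : ℕ} (h : a < b) : a < threshN a b := by
  have h0 : a < 2^0 * (b / 2^0) := by simpa using h
  exact Nat.findGreatest_spec (P := fun ℓ => a < 2^ℓ * (b / 2^ℓ)) (Nat.zero_le _) h0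

lemma thresh_le (a b : ℕ) : threshN a b ≤ b := by
  unfold threshN
  rw [mul_comm]
  exact Nat.div_mul_le_self b _

lemma thresh_dvd (a b : ℕ) : 2 ^ levN a b ∣ threshN a b := Dvd.intro _ rfl

lemma lt_thresh_add (a b : ℕ) : b < threshN a b + 2 ^ levN a b := by
  unfold threshN
  have hp : 0 < 2 ^ levN a b := Nat.pow_pos (by norm_num)
  have h1 := Nat.div_add_mod b (2 ^ levN a b)
  have h2 := Nat.mod_lt b hp
  nlinarith [Nat.div_add_mod b (2 ^ levN a b)]

lemma lev_le (a b : ℕ) : levN a b ≤ Nat.log 2 b := Nat.findGreatest_le _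

lemma thresh_le_add {a b : ℕ} (h : a < b) : threshN a b ≤ a + 2 ^ levN a b := by
  by_contra hcon
  push_neg at hcon
  have hgt : a < threshN a b := thresh_gt h
  have hm : threshN a b = 2 ^ levN a b * (b / 2 ^ levN a b) := rfl
  set ℓ := levN a b with hℓ
  set q := b / 2 ^ ℓ with hq
  have hqq : b / 2 ^ (ℓ+1) = q / 2 := by
    rw [hq, Nat.div_div_eq_div_mul, pow_succ]
  have hP1 : a < 2 ^ (ℓ+1) * (b / 2 ^ (ℓ+1)) := by
    rw [hqq]
    rcases Nat.even_or_odd q with ⟨u, hu⟩ | ⟨u, hu⟩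
    · have hu' : q = 2 * u := by omega
      have h1 : q / 2 = u := by omega
      have h2 : 2 ^ (ℓ+1) * u = 2 ^ ℓ * q := by rw [hu', pow_succ]; ring
      rw [h1]; omega
    · have h1 : q / 2 = u := by omega
      have h2 : 2 ^ (ℓ+1) * u + 2 ^ ℓ = 2 ^ ℓ * q := by rw [hu, pow_succ]; ring
      rw [h1]; omega
  have hle : ℓ + 1 ≤ Nat.log 2 b := by
    have h1 : 1 ≤ b / 2 ^ (ℓ+1) := by
      rcases Nat.eq_zero_or_pos (b / 2 ^ (ℓ+1)) with h' | h'
      · rw [h'] at hP1; omega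
      · exact h'
    have hb2 : 2 ^ (ℓ+1) ≤ b := by
      calc 2 ^ (ℓ+1) = 2 ^ (ℓ+1) * 1 := by ring
        _ ≤ 2 ^ (ℓ+1) * (b / 2 ^ (ℓ+1)) := Nat.mul_le_mul_left _ h1
        _ ≤ b := by rw [mul_comm]; exact Nat.div_mul_le_self b _
    exact (Nat.le_log_iff_pow_le (by norm_num) (by omega)).mpr hb2
  exact Nat.findGreatest_is_greatest (Nat.lt_succ_self ℓ) hle hP1

lemma recA {m Y ℓ : ℕ} (h1 : m ≤ Y) (h2 : Y < m + 2^ℓ) (h3 : 2^ℓ ∣ m) :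
    m = 2^ℓ * (Y / 2^ℓ) := by
  obtain ⟨c, hc⟩ := h3
  subst hc
  have h1' : c * 2^ℓ ≤ Y := by rw [mul_comm]; exact h1
  have h2' : Y < (c+1) * 2^ℓ := by rw [add_mul, one_mul, mul_comm]; omega
  have : Y / 2^ℓ = c := Nat.div_eq_of_lt_le h1' h2'
  rw [this]

lemma recB {m Y ℓ : ℕ} (h1 : Y < m) (h2 : m ≤ Y + 2^ℓ) (h3 : 2^ℓ ∣ m) :
    m = 2^ℓ * (Y / 2^ℓ) + 2^ℓ := by
  obtain ⟨c, hc⟩ := h3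
  subst hc
  have hc1 : 1 ≤ c := by
    rcases Nat.eq_zero_or_pos c with h' | h'
    · subst h'; omega
    · exact h'
  have h1' : (c-1) * 2^ℓ ≤ Y := by
    cases' Nat.exists_eq_add_of_le hc1 with d hd
    subst hd
    have : (1 + d - 1) = d := by omega
    rw [this]
    have : 2 ^ ℓ * (1 + d) = d * 2 ^ ℓ + 2 ^ ℓ := by ring
    omega
  have h2' : Y < (c-1+1) * 2^ℓ := by
    have hcc : c - 1 + 1 = c := by omega
    rw [hcc, mul_comm]; omega
  have : Y / 2^ℓ = c - 1 := Nat.div_eq_of_lt_le h1' h2'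
  rw [this]
  cases' Nat.exists_eq_add_of_le hc1 with d hd
  subst hd
  have : (1 + d - 1) = d := by omega
  rw [this]; ring



section Walk
variable {n : ℕ} (r : ℕ) (H : Finset (Finset (Fin n))) (w0 : ℕ → Fin n)

open scoped Classical

def v1 (x : Fin n) : ℕ := x.1 + 1

/-- threshold between slot `j` and slot `j+1` of the initial window -/
def mth (j : ℕ) : ℕ := threshN (v1 (w0 j)) (v1 (w0 (j+1)))

/-- corresponding dyadic scale -/
def dth (j : ℕ) : ℕ := 2 ^ levN (v1 (w0 j)) (v1 (w0 (j+1)))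

/-- cap for values at slot `p` during the walk -/
def Mcap (p : ℕ) : ℕ :=
  if p = 0 then mth w0 0
  else if p + 1 < r then min (mth w0 p) (mth w0 (p-1) + dth w0 (p-1))
  else mth w0 (p-1) + dth w0 (p-1)

def okP (w : ℕ → Fin n) (p : ℕ) (x : Fin n) : Prop :=
  w p < x ∧ v1 x < Mcap r w0 p ∧ Finset.image (Function.update w p x) (Finset.range r) ∈ H

noncomputable def Sset (w : ℕ → Fin n) (p : ℕ) : Finset (Fin n) :=
  Finset.univ.filter (okP r H w0 w p)

noncomputable def walk : ℕ → ℕ → Fin n := fun t =>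
  Nat.rec w0 (fun t' w =>
    if h : (Sset r H w0 w (t' % r)).Nonempty
    then Function.update w (t' % r) ((Sset r H w0 w (t' % r)).min' h)
    else w) t

def aliveP (t : ℕ) : Prop := ∀ t' < t, (Sset r H w0 (walk r H w0 t') (t' % r)).Nonempty

lemma walk_zero : walk r H w0 0 = w0 := rfl

lemma walk_succ (t : ℕ) (h : (Sset r H w0 (walk r H w0 t) (t % r)).Nonempty) :
    walk r H w0 (t+1) = Function.update (walk r H w0 t) (t % r)
      ((Sset r H w0 (walk r H w0 t) (t % r)).min' h) := by
  have hrfl : walk r H w0 (t+1) =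
      if h' : (Sset r H w0 (walk r H w0 t) (t % r)).Nonempty
      then Function.update (walk r H w0 t) (t % r)
        ((Sset r H w0 (walk r H w0 t) (t % r)).min' h')
      else walk r H w0 t := rfl
  rw [hrfl, dif_pos h]

lemma v1_lt_iff {x y : Fin n} : v1 x < v1 y ↔ x < y := by
  simp only [v1, Fin.lt_def]; omega

lemma v1_le_iff {x y : Fin n} : v1 x ≤ v1 y ↔ x ≤ y := by
  simp only [v1, Fin.le_def]; omega

lemma v1_le_n {x : Fin n} : v1 x ≤ n := x.2

lemma McapA {p : ℕ} (hp : p + 1 < r) : Mcap r w0 p ≤ mth w0 p := by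
  unfold Mcap
  rcases Nat.eq_zero_or_pos p with h | h
  · subst h; simp
  · rw [if_neg (by omega), if_pos hp]
    exact min_le_left _ _

lemma McapB {p : ℕ} (hp0 : 0 < p) (hpr : p < r) :
    Mcap r w0 p ≤ mth w0 (p-1) + dth w0 (p-1) := by
  unfold Mcap
  rw [if_neg (by omega)]
  by_cases h : p + 1 < r
  · rw [if_pos h]; exact min_le_right _ _
  · rw [if_neg h]

lemma Mcap_init (hr : 2 ≤ r) (hsm : ∀ i j : ℕ, i < j → j < r → w0 i < w0 j) :
    ∀ p < r, v1 (w0 p) < Mcap r w0 p := by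
  intro p hp
  have hgap : ∀ j, j + 1 < r → v1 (w0 j) < v1 (w0 (j+1)) := fun j hj =>
    v1_lt_iff.mpr (hsm j (j+1) (by omega) hj)
  unfold Mcap
  rcases Nat.eq_zero_or_pos p with h | h
  · subst h
    simp only [if_pos rfl]
    exact thresh_gt (hgap 0 (by omega))
  · rw [if_neg (by omega)]
    have hB : v1 (w0 p) < mth w0 (p-1) + dth w0 (p-1) := by
      have h1 := lt_thresh_add (v1 (w0 (p-1))) (v1 (w0 (p-1+1)))
      have hpp : p - 1 + 1 = p := by omega
      rw [hpp] at h1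
      unfold mth dth
      rw [hpp]
      exact h1
    by_cases hA : p + 1 < r
    · rw [if_pos hA]
      refine lt_min ?_ hB
      exact thresh_gt (hgap p hA)
    · rw [if_neg hA]; exact hB

lemma mth_le_next {j : ℕ} : mth w0 j ≤ v1 (w0 (j+1)) := thresh_le _ _

lemma inv (hr : 2 ≤ r) (hsm : ∀ i j : ℕ, i < j → j < r → w0 i < w0 j)
    (hmem : Finset.image w0 (Finset.range r) ∈ H) :
    ∀ t, aliveP r H w0 t →
      (∀ i j, i < j → j < r → walk r H w0 t i < walk r H w0 t j) ∧
      (Finset.image (walk r H w0 t) (Finset.range r) ∈ H) ∧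
      (∀ p < r, v1 (walk r H w0 t p) < Mcap r w0 p) ∧
      (∀ p < r, w0 p ≤ walk r H w0 t p) := by
  intro t
  induction t with
  | zero =>
    intro _
    exact ⟨hsm, hmem, Mcap_init r w0 hr hsm, fun p _ => le_refl _⟩
  | succ t ih =>
    intro ha
    have hat : aliveP r H w0 t := fun t' ht' => ha t' (by omega)
    obtain ⟨SM, Hmem, Cap, Grow⟩ := ih hat
    have hS : (Sset r H w0 (walk r H w0 t) (t % r)).Nonempty := ha t (by omega)
    set p := t % r with hpdef
    have hp : p < r := Nat.mod_lt _ (by omega)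
    set x := (Sset r H w0 (walk r H w0 t) p).min' hS with hxdef
    have hok : okP r H w0 (walk r H w0 t) p x := by
      have := Finset.min'_mem (Sset r H w0 (walk r H w0 t) p) hS
      simp only [Sset, Finset.mem_filter] at this
      exact this.2
    obtain ⟨hgt, hcap, hH⟩ := hok
    have hw : walk r H w0 (t+1) = Function.update (walk r H w0 t) p x :=
      walk_succ r H w0 t hS
    rw [hw]
    -- preliminary: x < walk t j for all p < j < r
    have hxlt : ∀ j, p < j → j < r → x < walk r H w0 t j := by
      intro j hj hjr
      have h1 : v1 x < Mcap r w0 p := hcap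
      have h2 : Mcap r w0 p ≤ mth w0 p := McapA r w0 (by omega)
      have h3 : mth w0 p ≤ v1 (w0 (p+1)) := mth_le_next w0
      have h4 : v1 (w0 (p+1)) ≤ v1 (walk r H w0 t (p+1)) :=
        v1_le_iff.mpr (Grow (p+1) (by omega))
      have h5 : walk r H w0 t (p+1) ≤ walk r H w0 t j := by
        rcases Nat.lt_or_ge (p+1) j with h' | h'
        · exact le_of_lt (SM (p+1) j h' hjr)
        · have : p + 1 = j := by omega
          rw [this]
      refine lt_of_lt_of_le ?_ h5
      exact v1_lt_iff.mp (by omega)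
    refine ⟨?_, ?_, ?_, ?_⟩
    · intro i j hij hjr
      rcases eq_or_ne i p with hi | hi
      · subst hi
        rw [Function.update_self, Function.update_of_ne (by omega)]
        exact hxlt j hij hjr
      · rw [Function.update_of_ne hi]
        rcases eq_or_ne j p with hjp | hjp
        · subst hjp
          rw [Function.update_self]
          exact lt_trans (SM i p hij hp) hgt
        · rw [Function.update_of_ne hjp]
          exact SM i j hij hjr
    · exact hH
    · intro q hq
      rcases eq_or_ne q p with h | h
      · subst h; rw [Function.update_self]; exact hcap
      · rw [Function.update_of_ne h]; exact Cap q hq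
    · intro q hq
      rcases eq_or_ne q p with h | h
      · subst h; rw [Function.update_self]
        exact le_of_lt (lt_of_le_of_lt (Grow p hp) hgt)
      · rw [Function.update_of_ne h]; exact Grow q hq

noncomputable def vseq : ℕ → Fin n := fun i =>
  if i < r then w0 i else walk r H w0 (i - r + 1) ((i - r) % r)

def idx (t q : ℕ) : ℕ := t + (q + r - t % r) % r

lemma aliveP_mono {t t' : ℕ} (h : t ≤ t') (ha : aliveP r H w0 t') : aliveP r H w0 t :=
  fun s hs => ha s (by omega)

lemma idx_spec (hr0 : 0 < r) {q : ℕ} (hq : q < r) (t : ℕ) :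
    idx r t q % r = q ∧ t ≤ idx r t q ∧ idx r t q < t + r := by
  have ha : t % r < r := Nat.mod_lt _ hr0
  have h1 : (q + r - t % r) % r < r := Nat.mod_lt _ hr0
  refine ⟨?_, by simp [idx], by simp only [idx]; omega⟩
  unfold idx
  have key : t % r + (q + r - t % r) = q + r := by omega
  have hme : (t + (q + r - t % r) % r) % r = (t % r + (q + r - t % r)) % r :=
    Nat.ModEq.add (Nat.mod_modEq t r).symm (Nat.mod_modEq _ r)
  rw [hme, key, Nat.add_mod_right]
  exact Nat.mod_eq_of_lt hq

lemma idx_self (hr0 : 0 < r) (t : ℕ) : idx r t (t % r) = t := by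
  unfold idx
  have : t % r + r - t % r = r := by omega
  rw [this, Nat.mod_self]
  omega

lemma eq_of_mod_window {i j s : ℕ} (hr0 : 0 < r) (hi1 : s ≤ i) (hi2 : i < s + r)
    (hj1 : s ≤ j) (hj2 : j < s + r) (hm : i % r = j % r) : i = j := by
  rcases le_total i j with h | h
  · have h0 : (j - i) % r = 0 := Nat.sub_mod_eq_zero_of_mod_eq hm.symm
    have h2 : j - i < r := by omega
    rw [Nat.mod_eq_of_lt h2] at h0
    omega
  · have h0 : (i - j) % r = 0 := Nat.sub_mod_eq_zero_of_mod_eq hm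
    have h2 : i - j < r := by omega
    rw [Nat.mod_eq_of_lt h2] at h0
    omega

lemma walk_eq_vseq (hr : 2 ≤ r) :
    ∀ t, aliveP r H w0 t → ∀ q, q < r → walk r H w0 t q = vseq r H w0 (idx r t q) := by
  have hr0 : 0 < r := by omega
  intro t
  induction t with
  | zero =>
    intro _ q hq
    have hb := idx_spec r hr0 hq 0
    have hlt : idx r 0 q < r := by omega
    have heq : idx r 0 q = q := by
      have h := hb.1
      rw [Nat.mod_eq_of_lt hlt] at h
      exact h
    rw [heq]
    show w0 q = vseq r H w0 q
    unfold vseq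
    rw [if_pos hq]
  | succ t ih =>
    intro ha q hq
    have hat : aliveP r H w0 t := aliveP_mono r H w0 (by omega) ha
    have hS : (Sset r H w0 (walk r H w0 t) (t % r)).Nonempty := ha t (by omega)
    have hw : walk r H w0 (t+1) = Function.update (walk r H w0 t) (t % r)
        ((Sset r H w0 (walk r H w0 t) (t % r)).min' hS) := walk_succ r H w0 t hS
    rcases eq_or_ne q (t % r) with hqp | hqp
    · subst hqp
      rw [hw, Function.update_self]
      -- idx r (t+1) (t % r) = t + r
      have hb := idx_spec r hr0 (Nat.mod_lt t hr0 : t % r < r) (t+1)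
      have hmod : (t + r) % r = t % r := Nat.add_mod_right t r ▸ rfl
      have heq : idx r (t+1) (t % r) = t + r := by
        refine eq_of_mod_window r hr0 (s := t+1) hb.2.1 hb.2.2 (by omega) (by omega) ?_
        rw [hb.1, hmod]
      rw [heq]
      have hnlt : ¬ (t + r < r) := by omega
      show _ = vseq r H w0 (t + r)
      unfold vseq
      rw [if_neg hnlt]
      have h1 : t + r - r + 1 = t + 1 := by omega
      have h2 : (t + r - r) % r = t % r := by
        have : t + r - r = t := by omega
        rw [this]
      rw [h1, h2, hw, Function.update_self]
    · rw [hw, Function.update_of_ne hqp]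
      rw [ih hat q hq]
      congr 1
      -- idx r (t+1) q = idx r t q
      have hb1 := idx_spec r hr0 hq t
      have hb2 := idx_spec r hr0 hq (t+1)
      have hne1 : idx r t q ≠ t := by
        intro h
        apply hqp
        rw [← hb1.1, h]
      have hne2 : idx r (t+1) q ≠ t + r := by
        intro h
        apply hqp
        rw [← hb2.1, h, Nat.add_mod_right]
      exact eq_of_mod_window r hr0 (s := t+1) (by omega) (by omega) (by omega) (by omega)
        (by rw [hb1.1, hb2.1])

lemma image_idx (hr0 : 0 < r) (t : ℕ) :
    Finset.image (idx r t) (Finset.range r) = Finset.Ico t (t + r) := by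
  apply Finset.eq_of_subset_of_card_le
  · intro x hx
    simp only [Finset.mem_image, Finset.mem_range] at hx
    obtain ⟨q, hq, rfl⟩ := hx
    have hb := idx_spec r hr0 hq t
    simp only [Finset.mem_Ico]
    omega
  · rw [Nat.card_Ico]
    have : (t + r) - t = r := by omega
    rw [this]
    rw [Finset.card_image_of_injOn]
    · simp
    · intro a ha b hb hab
      simp only [Finset.coe_range, Set.mem_Iio] at ha hb
      have h1 := (idx_spec r hr0 ha t).1
      have h2 := (idx_spec r hr0 hb t).1
      rw [← Nat.mod_eq_of_lt ha, ← Nat.mod_eq_of_lt hb, ← h1, ← h2, hab]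

lemma image_vseq_window (hr : 2 ≤ r) {t : ℕ} (ha : aliveP r H w0 t) :
    Finset.image (vseq r H w0) (Finset.Ico t (t + r)) =
      Finset.image (walk r H w0 t) (Finset.range r) := by
  have hr0 : 0 < r := by omega
  rw [← image_idx r hr0 t, Finset.image_image]
  apply Finset.image_congr
  intro q hq
  simp only [Finset.coe_range, Set.mem_Iio] at hq
  exact (walk_eq_vseq r H w0 hr t ha q hq).symm

lemma vseq_step (hr : 2 ≤ r) {t : ℕ} (ha : aliveP r H w0 (t+1)) :
    vseq r H w0 t < vseq r H w0 (t + r) := by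
  have hr0 : 0 < r := by omega
  have hat : aliveP r H w0 t := aliveP_mono r H w0 (by omega) ha
  have hS : (Sset r H w0 (walk r H w0 t) (t % r)).Nonempty := ha t (by omega)
  have hw : walk r H w0 (t+1) = Function.update (walk r H w0 t) (t % r)
      ((Sset r H w0 (walk r H w0 t) (t % r)).min' hS) := walk_succ r H w0 t hS
  have hok : okP r H w0 (walk r H w0 t) (t % r)
      ((Sset r H w0 (walk r H w0 t) (t % r)).min' hS) := by
    have := Finset.min'_mem (Sset r H w0 (walk r H w0 t) (t % r)) hS
    simp only [Sset, Finset.mem_filter] at this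
    exact this.2
  have h1 : vseq r H w0 (t + r) = walk r H w0 (t+1) (t % r) := by
    unfold vseq
    rw [if_neg (by omega : ¬ (t + r < r))]
    have e1 : t + r - r + 1 = t + 1 := by omega
    have e2 : t + r - r = t := by omega
    rw [e1, e2]
  have h2 : vseq r H w0 t = walk r H w0 t (t % r) := by
    have := walk_eq_vseq r H w0 hr t hat (t % r) (Nat.mod_lt t hr0)
    rw [idx_self r hr0 t] at this
    exact this.symm
  rw [h1, h2, hw, Function.update_self]
  exact hok.1

lemma vseq_lt_add_mul (hr : 2 ≤ r) {i : ℕ} :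
    ∀ s : ℕ, 1 ≤ s → aliveP r H w0 (i + (s-1)*r + 1) →
      vseq r H w0 i < vseq r H w0 (i + s * r) := by
  intro s
  induction s with
  | zero => omega
  | succ s ih =>
    intro _ ha
    rcases Nat.eq_zero_or_pos s with h0 | h0
    · subst h0
      have : i + 1 * r = i + r := by ring_nf
      rw [this]
      exact vseq_step r H w0 hr (by simpa using ha)
    · have ha' : aliveP r H w0 (i + s * r + 1) := by
        have : s + 1 - 1 = s := by omega
        rwa [this] at ha
      have h1 : vseq r H w0 i < vseq r H w0 (i + s * r) :=
        ih h0 (aliveP_mono r H w0 (by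
          have h2 : (s-1) * r ≤ s * r := Nat.mul_le_mul_right r (by omega)
          omega) ha')
      have h2 : vseq r H w0 (i + s * r) < vseq r H w0 (i + s * r + r) :=
        vseq_step r H w0 hr ha'
      have h3 : i + (s+1) * r = i + s * r + r := by rw [Nat.succ_mul]; omega
      rw [h3]
      exact lt_trans h1 h2

lemma mod_sub_r {i : ℕ} (h : r ≤ i) : (i - r) % r = i % r := by
  conv_rhs => rw [show i = (i - r) + r by omega]
  rw [Nat.add_mod_right]

lemma vseq_cap (hr : 2 ≤ r) (hsm : ∀ i j : ℕ, i < j → j < r → w0 i < w0 j)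
    (hmem : Finset.image w0 (Finset.range r) ∈ H)
    {i : ℕ} (ha : aliveP r H w0 (i - r + 1)) :
    v1 (vseq r H w0 i) < Mcap r w0 (i % r) := by
  have hr0 : 0 < r := by omega
  by_cases hi : i < r
  · unfold vseq
    rw [if_pos hi, Nat.mod_eq_of_lt hi]
    exact Mcap_init r w0 hr hsm i hi
  · push_neg at hi
    unfold vseq
    rw [if_neg (by omega)]
    have hcap := (inv r H w0 hr hsm hmem (i - r + 1) ha).2.2.1
    rw [← mod_sub_r r hi]
    exact hcap ((i-r) % r) (Nat.mod_lt _ hr0)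

lemma vseq_grow (hr : 2 ≤ r) (hsm : ∀ i j : ℕ, i < j → j < r → w0 i < w0 j)
    (hmem : Finset.image w0 (Finset.range r) ∈ H)
    {i : ℕ} (ha : aliveP r H w0 (i - r + 1)) :
    w0 (i % r) ≤ vseq r H w0 i := by
  have hr0 : 0 < r := by omega
  by_cases hi : i < r
  · unfold vseq
    rw [if_pos hi, Nat.mod_eq_of_lt hi]
  · push_neg at hi
    unfold vseq
    rw [if_neg (by omega)]
    have hgrow := (inv r H w0 hr hsm hmem (i - r + 1) ha).2.2.2
    rw [← mod_sub_r r hi]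
    exact hgrow ((i-r) % r) (Nat.mod_lt _ hr0)

lemma w0_mono (hsm : ∀ i j : ℕ, i < j → j < r → w0 i < w0 j)
    {a b : ℕ} (hab : a ≤ b) (hb : b < r) : w0 a ≤ w0 b := by
  rcases Nat.lt_or_ge a b with h | h
  · exact le_of_lt (hsm a b h hb)
  · have : a = b := by omega
    rw [this]

lemma vseq_cross (hr : 2 ≤ r) (hsm : ∀ i j : ℕ, i < j → j < r → w0 i < w0 j)
    (hmem : Finset.image w0 (Finset.range r) ∈ H)
    {i j : ℕ} (hij : i % r < j % r)
    (hai : aliveP r H w0 (i - r + 1)) (haj : aliveP r H w0 (j - r + 1)) :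
    vseq r H w0 i < vseq r H w0 j := by
  have hr0 : 0 < r := by omega
  have hjr : j % r < r := Nat.mod_lt _ hr0
  have h1 : v1 (vseq r H w0 i) < Mcap r w0 (i % r) := vseq_cap r H w0 hr hsm hmem hai
  have h2 : Mcap r w0 (i % r) ≤ mth w0 (i % r) := McapA r w0 (by omega)
  have h3 : mth w0 (i % r) ≤ v1 (w0 (i % r + 1)) := mth_le_next w0
  have h4 : w0 (i % r + 1) ≤ w0 (j % r) := w0_mono r w0 hsm (by omega) hjr
  have h5 : w0 (j % r) ≤ vseq r H w0 j := vseq_grow r H w0 hr hsm hmem haj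
  apply v1_lt_iff.mp
  have h6 : v1 (w0 (i % r + 1)) ≤ v1 (vseq r H w0 j) :=
    v1_le_iff.mpr (le_trans h4 h5)
  omega

lemma path_of_alive {k : ℕ} (hr : 2 ≤ r) (hk : r + 2 ≤ k)
    (hsm : ∀ i j : ℕ, i < j → j < r → w0 i < w0 j)
    (hmem : Finset.image w0 (Finset.range r) ∈ H)
    (hal : aliveP r H w0 (k-1)) :
    IsOrdCrossPath r k H (vseq r H w0) := by
  have hr0 : 0 < r := by omega
  have halle : ∀ t, t ≤ k - 1 → aliveP r H w0 t := fun t ht => aliveP_mono r H w0 ht hal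
  -- same-class strict increase helper
  have hsame : ∀ i j : ℕ, i < j → i % r = j % r → j ≤ k + r - 2 →
      vseq r H w0 i < vseq r H w0 j := by
    intro i j hij hm hjk
    have hd : (j - i) % r = 0 := Nat.sub_mod_eq_zero_of_mod_eq hm.symm
    obtain ⟨s, hs⟩ : r ∣ (j - i) := Nat.dvd_of_mod_eq_zero hd
    have hs1 : 1 ≤ s := by
      rcases Nat.eq_zero_or_pos s with h0 | h0
      · subst h0; omega
      · exact h0
    have hj : j = i + s * r := by
      rw [mul_comm] at hs
      omega
    rw [hj]
    apply vseq_lt_add_mul r H w0 hr s hs1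
    apply halle
    have h2 : (s-1) * r + r = s * r := by
      rw [← Nat.succ_mul]
      congr 1
      omega
    omega
  -- cross-class helper
  have hcross : ∀ i j : ℕ, i % r < j % r → i ≤ k + r - 2 → j ≤ k + r - 2 →
      vseq r H w0 i < vseq r H w0 j := by
    intro i j hij hik hjk
    exact vseq_cross r H w0 hr hsm hmem hij
      (halle _ (by omega)) (halle _ (by omega))
  refine ⟨?_, ?_, ?_, ?_, ?_, ?_⟩
  · -- distinctness
    intro i j hi hj heq
    by_contra hne
    rcases Nat.lt_trichotomy (i % r) (j % r) with h | h | h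
    · exact absurd heq (ne_of_lt (hcross i j h (by omega) (by omega)))
    · rcases Nat.lt_or_ge i j with h' | h'
      · exact absurd heq (ne_of_lt (hsame i j h' h (by omega)))
      · have h'' : j < i := by omega
        exact absurd heq.symm (ne_of_lt (hsame j i h'' h.symm (by omega)))
    · exact absurd heq.symm (ne_of_lt (hcross j i h (by omega) (by omega)))
  · -- edges
    intro i hi
    rw [image_vseq_window r H w0 hr (halle i (by omega))]
    exact (inv r H w0 hr hsm hmem i (halle i (by omega))).2.1
  · -- initial sortedness
    intro i hi
    have e1 : vseq r H w0 i = w0 i := by unfold vseq; rw [if_pos (by omega)]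
    have e2 : vseq r H w0 (i+1) = w0 (i+1) := by unfold vseq; rw [if_pos hi]
    rw [e1, e2]
    exact hsm i (i+1) (by omega) hi
  · -- condition (iv)
    intro j i hj hi hji
    constructor
    · obtain ⟨i', rfl⟩ : ∃ i', i = i' + 1 := ⟨i - 1, by omega⟩
      have e1 : i' + 1 - 1 = i' := by omega
      rw [e1]
      apply hsame
      · have : i' * r < (i'+1) * r := by
          have h2 : (i'+1) * r = i' * r + r := Nat.succ_mul i' r
          omega
        omega
      · rw [Nat.add_mul_mod_self_right, Nat.add_mul_mod_self_right]
      · omega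
    · have e2 : vseq r H w0 (j+1) = w0 (j+1) := by unfold vseq; rw [if_pos hj]
      have h1 : v1 (vseq r H w0 (j + i * r)) < Mcap r w0 ((j + i * r) % r) :=
        vseq_cap r H w0 hr hsm hmem (halle _ (by omega))
      have hmod : (j + i * r) % r = j := by
        rw [Nat.add_mul_mod_self_right]
        exact Nat.mod_eq_of_lt (by omega)
      rw [hmod] at h1
      have h2 : Mcap r w0 j ≤ mth w0 j := McapA r w0 hj
      have h3 : mth w0 j ≤ v1 (w0 (j+1)) := mth_le_next w0
      rw [e2]
      exact v1_lt_iff.mp (by omega)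
  · -- v 0 < v (r-1)
    have e1 : vseq r H w0 0 = w0 0 := by unfold vseq; rw [if_pos (by omega)]
    have e2 : vseq r H w0 (r-1) = w0 (r-1) := by unfold vseq; rw [if_pos (by omega)]
    rw [e1, e2]
    exact hsm 0 (r-1) (by omega) (by omega)
  · -- top-class chain
    intro i hi hik
    have hir : 1 ≤ i * r := by
      have := Nat.mul_le_mul hi (show 1 ≤ r by omega)
      omega
    have hii : (i+1) * r = i * r + r := by rw [Nat.succ_mul]
    apply hsame
    · omega
    · have h1 : (i * r - 1) % r = r - 1 := by
        obtain ⟨i', rfl⟩ : ∃ i', i = i' + 1 := ⟨i - 1, by omega⟩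
        have : (i' + 1) * r - 1 = (r - 1) + i' * r := by
          rw [Nat.succ_mul]
          omega
        rw [this, Nat.add_mul_mod_self_right]
        exact Nat.mod_eq_of_lt (by omega)
      have h2 : ((i+1) * r - 1) % r = r - 1 := by
        have : (i + 1) * r - 1 = (r - 1) + i * r := by
          rw [Nat.succ_mul]
          omega
        rw [this, Nat.add_mul_mod_self_right]
        exact Nat.mod_eq_of_lt (by omega)
      rw [h1, h2]
    · omega

/-- the reconstruction formula for the cap at slot `p`, in terms of data visible at walk-time -/
def recoverM (p : ℕ) (g : ℕ → ℕ) (b : Bool) (ℓ : ℕ) : ℕ :=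
  if b then 2^ℓ * (g (p+1) / 2^ℓ) else 2^ℓ * (g (p-1) / 2^ℓ) + 2^ℓ + 2^ℓ

def condA (p : ℕ) : Prop := p = 0 ∨ (p + 1 < r ∧ mth w0 p ≤ mth w0 (p-1) + dth w0 (p-1))

noncomputable def levA (p : ℕ) : ℕ :=
  if condA r w0 p then levN (v1 (w0 p)) (v1 (w0 (p+1))) else levN (v1 (w0 (p-1))) (v1 (w0 p))

lemma Mcap_recover (hr : 2 ≤ r) (hsm : ∀ i j : ℕ, i < j → j < r → w0 i < w0 j)
    (hmem : Finset.image w0 (Finset.range r) ∈ H)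
    {T p : ℕ} (haT : aliveP r H w0 T) (hp : p < r) :
    Mcap r w0 p = recoverM p (fun j => v1 (walk r H w0 T j))
      (decide (condA r w0 p)) (levA r w0 p) := by
  obtain ⟨SM, Hmem, Cap, Grow⟩ := inv r H w0 hr hsm hmem T haT
  by_cases hc : condA r w0 p
  · -- case A
    have hb : decide (condA r w0 p) = true := decide_eq_true hc
    have hp1 : p + 1 < r := by
      rcases hc with h0 | ⟨h1, _⟩
      · omega
      · exact h1
    have hMc : Mcap r w0 p = mth w0 p := by
      unfold Mcap
      rcases hc with h0 | ⟨h1, h2⟩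
      · rw [if_pos h0, h0]
      · rcases Nat.eq_zero_or_pos p with h0 | h0
        · rw [if_pos h0, h0]
        · rw [if_neg (by omega), if_pos h1]
          exact min_eq_left h2
    have hℓ : levA r w0 p = levN (v1 (w0 p)) (v1 (w0 (p+1))) := if_pos hc
    have hdth : dth w0 p = 2 ^ levA r w0 p := by rw [hℓ]; rfl
    set ℓ := levA r w0 p with hℓdef
    have hY1 : mth w0 p ≤ v1 (walk r H w0 T (p+1)) := by
      refine le_trans (mth_le_next w0) ?_
      exact v1_le_iff.mpr (Grow (p+1) hp1)
    have hY2 : v1 (walk r H w0 T (p+1)) < mth w0 p + 2 ^ ℓ := by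
      have h1 := Cap (p+1) hp1
      have h2 : Mcap r w0 (p+1) ≤ mth w0 (p+1-1) + dth w0 (p+1-1) :=
        McapB r w0 (by omega) hp1
      have h3 : p + 1 - 1 = p := by omega
      rw [h3] at h2
      rw [← hdth]
      omega
    have hdvd : 2 ^ ℓ ∣ mth w0 p := by
      rw [hℓ]
      exact thresh_dvd _ _
    have := recA hY1 hY2 hdvd
    rw [hMc, recoverM, if_pos (by rw [hb])]
    exact this
  · -- case B
    have hb : decide (condA r w0 p) = false := decide_eq_false hc
    unfold condA at hc
    push_neg at hc
    obtain ⟨hp0, hcB⟩ := hc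
    have hp0' : 0 < p := by omega
    have hMc : Mcap r w0 p = mth w0 (p-1) + dth w0 (p-1) := by
      unfold Mcap
      rw [if_neg hp0]
      by_cases h1 : p + 1 < r
      · rw [if_pos h1]
        exact min_eq_right (le_of_lt (hcB h1))
      · rw [if_neg h1]
    have hℓ : levA r w0 p = levN (v1 (w0 (p-1))) (v1 (w0 p)) := by
      apply if_neg
      unfold condA
      push_neg
      exact ⟨hp0, hcB⟩
    set ℓ := levA r w0 p with hℓdef
    have hdth : dth w0 (p-1) = 2 ^ ℓ := by
      rw [hℓ]
      unfold dth
      congr 2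
      rw [show p - 1 + 1 = p by omega]
    have hmth : mth w0 (p-1) = threshN (v1 (w0 (p-1))) (v1 (w0 p)) := by
      unfold mth
      rw [show p - 1 + 1 = p by omega]
    have hY1 : v1 (walk r H w0 T (p-1)) < mth w0 (p-1) := by
      have h1 := Cap (p-1) (by omega)
      have h2 : Mcap r w0 (p-1) ≤ mth w0 (p-1) := McapA r w0 (by omega)
      omega
    have hY2 : mth w0 (p-1) ≤ v1 (walk r H w0 T (p-1)) + 2 ^ ℓ := by
      have hab : v1 (w0 (p-1)) < v1 (w0 p) :=
        v1_lt_iff.mpr (hsm (p-1) p (by omega) hp)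
      have h1 : threshN (v1 (w0 (p-1))) (v1 (w0 p)) ≤ v1 (w0 (p-1)) + 2 ^ ℓ := by
        rw [hℓ]
        exact thresh_le_add hab
      have h2 : v1 (w0 (p-1)) ≤ v1 (walk r H w0 T (p-1)) :=
        v1_le_iff.mpr (Grow (p-1) (by omega))
      rw [hmth]
      omega
    have hdvd : 2 ^ ℓ ∣ mth w0 (p-1) := by
      rw [hmth, hℓ]
      exact thresh_dvd _ _
    have := recB hY1 hY2 hdvd
    rw [hMc, recoverM, if_neg (by rw [hb]; exact Bool.false_ne_true), hdth]
    omega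

/-- the candidate set used to recover the terminal slot value -/
noncomputable def Qterm (w : ℕ → Fin n) (p : ℕ) (M : ℕ) : Finset (Fin n) :=
  Finset.univ.filter (fun x : Fin n =>
    v1 x < M ∧ Finset.image (Function.update w p x) (Finset.range r) ∈ H)

lemma Qterm_mem_self (hr : 2 ≤ r) (hsm : ∀ i j : ℕ, i < j → j < r → w0 i < w0 j)
    (hmem : Finset.image w0 (Finset.range r) ∈ H)
    {T : ℕ} (haT : aliveP r H w0 T) {p : ℕ} (hp : p < r) :
    walk r H w0 T p ∈ Qterm r H (walk r H w0 T) p (Mcap r w0 p) := by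
  obtain ⟨SM, Hmem, Cap, Grow⟩ := inv r H w0 hr hsm hmem T haT
  simp only [Qterm, Finset.mem_filter, Finset.mem_univ, true_and]
  refine ⟨Cap p hp, ?_⟩
  rw [Function.update_eq_self]
  exact Hmem

lemma Qterm_le (hterm : ¬ (Sset r H w0 (walk r H w0 T) (T % r)).Nonempty) :
    ∀ x ∈ Qterm r H (walk r H w0 T) (T % r) (Mcap r w0 (T % r)), x ≤ walk r H w0 T (T % r) := by
  intro x hx
  by_contra hgt
  push_neg at hgt
  simp only [Qterm, Finset.mem_filter, Finset.mem_univ, true_and] at hx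
  exact hterm ⟨x, by
    simp only [Sset, Finset.mem_filter, Finset.mem_univ, true_and]
    exact ⟨hgt, hx.1, hx.2⟩⟩

/-- the candidate set used to recover the pre-step slot value -/
noncomputable def Qback (w : ℕ → Fin n) (p : ℕ) : Finset (Fin n) :=
  Finset.univ.filter (fun x : Fin n =>
    x < w p ∧ Finset.image (Function.update w p x) (Finset.range r) ∈ H)

lemma Qback_mem (hr : 2 ≤ r) (hsm : ∀ i j : ℕ, i < j → j < r → w0 i < w0 j)
    (hmem : Finset.image w0 (Finset.range r) ∈ H)
    {t : ℕ} (hat1 : aliveP r H w0 (t+1)) :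
    walk r H w0 t (t % r) ∈ Qback r H (walk r H w0 (t+1)) (t % r) := by
  have hat : aliveP r H w0 t := aliveP_mono r H w0 (by omega) hat1
  obtain ⟨SM, Hmem, Cap, Grow⟩ := inv r H w0 hr hsm hmem t hat
  have hS := hat1 t (by omega)
  have hw := walk_succ r H w0 t hS
  have hok : okP r H w0 (walk r H w0 t) (t % r)
      ((Sset r H w0 (walk r H w0 t) (t % r)).min' hS) := by
    have := Finset.min'_mem (Sset r H w0 (walk r H w0 t) (t % r)) hS
    simp only [Sset, Finset.mem_filter] at this
    exact this.2
  simp only [Qback, Finset.mem_filter, Finset.mem_univ, true_and]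
  constructor
  · rw [hw, Function.update_self]
    exact hok.1
  · have heq : Finset.image (Function.update (walk r H w0 (t+1)) (t % r) (walk r H w0 t (t % r)))
        (Finset.range r) = Finset.image (walk r H w0 t) (Finset.range r) := by
      apply Finset.image_congr
      intro j _
      rcases eq_or_ne j (t % r) with h | h
      · subst h; rw [Function.update_self]
      · rw [Function.update_of_ne h, hw, Function.update_of_ne h]
    rw [heq]
    exact Hmem

lemma Qback_le (hr : 2 ≤ r) (hsm : ∀ i j : ℕ, i < j → j < r → w0 i < w0 j)
    (hmem : Finset.image w0 (Finset.range r) ∈ H)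
    {t : ℕ} (hat1 : aliveP r H w0 (t+1)) :
    ∀ x ∈ Qback r H (walk r H w0 (t+1)) (t % r), x ≤ walk r H w0 t (t % r) := by
  have hat : aliveP r H w0 t := aliveP_mono r H w0 (by omega) hat1
  have hS := hat1 t (by omega)
  have hw := walk_succ r H w0 t hS
  set xnew := (Sset r H w0 (walk r H w0 t) (t % r)).min' hS with hxdef
  have hok : okP r H w0 (walk r H w0 t) (t % r) xnew := by
    have := Finset.min'_mem (Sset r H w0 (walk r H w0 t) (t % r)) hS
    simp only [Sset, Finset.mem_filter] at this
    exact this.2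
  intro x hx
  by_contra hgt
  push_neg at hgt
  simp only [Qback, Finset.mem_filter, Finset.mem_univ, true_and] at hx
  have hxnew : walk r H w0 (t+1) (t % r) = xnew := by
    rw [hw, Function.update_self]
  have hxS : x ∈ Sset r H w0 (walk r H w0 t) (t % r) := by
    simp only [Sset, Finset.mem_filter, Finset.mem_univ, true_and]
    refine ⟨hgt, ?_, ?_⟩
    · have h1 : x < xnew := by rw [← hxnew]; exact hx.1
      have h2 : v1 xnew < Mcap r w0 (t % r) := hok.2.1
      have := v1_lt_iff.mpr h1
      omega
    · have heq : Finset.image (Function.update (walk r H w0 t) (t % r) x) (Finset.range r)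
          = Finset.image (Function.update (walk r H w0 (t+1)) (t % r) x) (Finset.range r) := by
        apply Finset.image_congr
        intro j _
        rcases eq_or_ne j (t % r) with h | h
        · subst h; rw [Function.update_self, Function.update_self]
        · rw [Function.update_of_ne h, Function.update_of_ne h, hw, Function.update_of_ne h]
      rw [heq]
      exact hx.2
  have := Finset.min'_le _ x hxS
  rw [← hxdef] at this
  have h1 : x < xnew := by rw [← hxnew]; exact hx.1
  omega

lemma walks_eq (hr : 2 ≤ r) {w0 w0' : ℕ → Fin n}
    (hsm : ∀ i j : ℕ, i < j → j < r → w0 i < w0 j)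
    (hsm' : ∀ i j : ℕ, i < j → j < r → w0' i < w0' j)
    (hmem : Finset.image w0 (Finset.range r) ∈ H)
    (hmem' : Finset.image w0' (Finset.range r) ∈ H)
    {T : ℕ} (haT : aliveP r H w0 T) (haT' : aliveP r H w0' T)
    (hslots : ∀ j, j < r → j ≠ T % r → walk r H w0 T j = walk r H w0' T j)
    (hM : Mcap r w0 (T % r) = Mcap r w0' (T % r))
    (hterm : ¬ (Sset r H w0 (walk r H w0 T) (T % r)).Nonempty)
    (hterm' : ¬ (Sset r H w0' (walk r H w0' T) (T % r)).Nonempty) :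
    ∀ j, j < r → w0 j = w0' j := by
  have hr0 : 0 < r := by omega
  set p := T % r with hpdef
  have hp : p < r := Nat.mod_lt _ hr0
  -- step a : the final windows agree
  have hstepa : ∀ j, j < r → walk r H w0 T j = walk r H w0' T j := by
    intro j hj
    rcases eq_or_ne j p with hjp | hjp
    · rw [hjp]
      have hQeq : Qterm r H (walk r H w0 T) p (Mcap r w0 p)
          = Qterm r H (walk r H w0' T) p (Mcap r w0' p) := by
        rw [← hM]
        unfold Qterm
        apply Finset.filter_congr
        intro x _
        have himg : Finset.image (Function.update (walk r H w0 T) p x) (Finset.range r)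
            = Finset.image (Function.update (walk r H w0' T) p x) (Finset.range r) := by
          apply Finset.image_congr
          intro q hq
          simp only [Finset.coe_range, Set.mem_Iio] at hq
          rcases eq_or_ne q p with h | h
          · subst h; rw [Function.update_self, Function.update_self]
          · rw [Function.update_of_ne h, Function.update_of_ne h]
            exact hslots q hq h
        rw [himg]
      have h1 := Qterm_mem_self r H w0 hr hsm hmem haT hp
      have h2 := Qterm_mem_self r H w0' hr hsm' hmem' haT' hp
      have h3 := Qterm_le r H w0 hterm
      have h4 := Qterm_le r H w0' hterm'
      apply le_antisymm
      · exact h4 _ (by rw [← hQeq]; exact h1)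
      · exact h3 _ (by rw [hQeq]; exact h2)
    · exact hslots j hj hjp
  -- step b : downward induction
  have hstepb : ∀ s, s ≤ T → ∀ j, j < r → walk r H w0 (T - s) j = walk r H w0' (T - s) j := by
    intro s
    induction s with
    | zero => intro _ j hj; simpa using hstepa j hj
    | succ s ih =>
      intro hs j hj
      have ihs := ih (by omega)
      set t' := T - (s+1) with ht'def
      have ht1 : t' + 1 = T - s := by omega
      have hat1 : aliveP r H w0 (t'+1) := aliveP_mono r H w0 (by omega) haT
      have hat1' : aliveP r H w0' (t'+1) := aliveP_mono r H w0' (by omega) haT'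
      have hS : (Sset r H w0 (walk r H w0 t') (t' % r)).Nonempty := hat1 t' (by omega)
      have hS' : (Sset r H w0' (walk r H w0' t') (t' % r)).Nonempty := hat1' t' (by omega)
      have hw := walk_succ r H w0 t' hS
      have hw' := walk_succ r H w0' t' hS'
      have hnext : ∀ q, q < r → walk r H w0 (t'+1) q = walk r H w0' (t'+1) q := by
        intro q hq
        have := ihs q hq
        rwa [← ht1] at this
      set p' := t' % r with hp'def
      have hp' : p' < r := Nat.mod_lt _ hr0
      rcases eq_or_ne j p' with hjp | hjp
      · rw [hjp]
        have hQeq : Qback r H (walk r H w0 (t'+1)) p' = Qback r H (walk r H w0' (t'+1)) p' := by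
          unfold Qback
          apply Finset.filter_congr
          intro x _
          have himg : Finset.image (Function.update (walk r H w0 (t'+1)) p' x) (Finset.range r)
              = Finset.image (Function.update (walk r H w0' (t'+1)) p' x) (Finset.range r) := by
            apply Finset.image_congr
            intro q hq
            simp only [Finset.coe_range, Set.mem_Iio] at hq
            rcases eq_or_ne q p' with h | h
            · subst h; rw [Function.update_self, Function.update_self]
            · rw [Function.update_of_ne h, Function.update_of_ne h]
              exact hnext q hq
          rw [himg, hnext p' hp']
        have h1 := Qback_mem r H w0 hr hsm hmem hat1
        have h2 := Qback_mem r H w0' hr hsm' hmem' hat1'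
        have h3 := Qback_le r H w0 hr hsm hmem hat1
        have h4 := Qback_le r H w0' hr hsm' hmem' hat1'
        apply le_antisymm
        · exact h4 _ (by rw [← hQeq]; exact h1)
        · exact h3 _ (by rw [hQeq]; exact h2)
      · have e1 : walk r H w0 t' j = walk r H w0 (t'+1) j := by
          rw [hw, Function.update_of_ne hjp]
        have e2 : walk r H w0' t' j = walk r H w0' (t'+1) j := by
          rw [hw', Function.update_of_ne hjp]
        rw [e1, e2]
        exact hnext j hj
  intro j hj
  have := hstepb T (le_refl T) j hj
  simpa [walk_zero] using this

open scoped Classical in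
noncomputable def PhiW (hex : ∃ t, ¬ (Sset r H w0 (walk r H w0 t) (t % r)).Nonempty) :
    ℕ × ((Fin (r-1) → Fin n) × (Bool × ℕ)) :=
  (Nat.find hex,
   (fun i => walk r H w0 (Nat.find hex)
      (if (i : ℕ) < (Nat.find hex) % r then (i : ℕ) else (i : ℕ)+1),
    (decide (condA r w0 ((Nat.find hex) % r)), levA r w0 ((Nat.find hex) % r))))

lemma levA_le (p : ℕ) : levA r w0 p ≤ Nat.log 2 n := by
  unfold levA
  split
  · exact le_trans (lev_le _ _) (Nat.log_mono_right v1_le_n)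
  · exact le_trans (lev_le _ _) (Nat.log_mono_right v1_le_n)

end Walk
section SortTuple
variable {n : ℕ}

noncomputable def sortW (hn : 0 < n) (r : ℕ) (e : Finset (Fin n)) (he : e.card = r) :
    ℕ → Fin n :=
  fun i => if h : i < r then e.orderEmbOfFin he ⟨i, h⟩ else ⟨0, hn⟩

lemma sortW_mono (hn : 0 < n) (r : ℕ) (e : Finset (Fin n)) (he : e.card = r) :
    ∀ i j : ℕ, i < j → j < r → sortW hn r e he i < sortW hn r e he j := by
  intro i j hij hj
  unfold sortW
  rw [dif_pos (by omega : i < r), dif_pos hj]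
  exact (e.orderEmbOfFin he).strictMono (by simp [Fin.lt_def]; omega)

lemma sortW_image (hn : 0 < n) (r : ℕ) (e : Finset (Fin n)) (he : e.card = r) :
    Finset.image (sortW hn r e he) (Finset.range r) = e := by
  apply Finset.eq_of_subset_of_card_le
  · intro x hx
    simp only [Finset.mem_image, Finset.mem_range] at hx
    obtain ⟨i, hi, rfl⟩ := hx
    unfold sortW
    rw [dif_pos hi]
    exact e.orderEmbOfFin_mem he ⟨i, hi⟩
  · rw [he]
    have : (Finset.image (sortW hn r e he) (Finset.range r)).card = r := by
      rw [Finset.card_image_of_injOn, Finset.card_range]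
      intro a ha b hb hab
      simp only [Finset.coe_range, Set.mem_Iio] at ha hb
      by_contra hne
      rcases Nat.lt_or_ge a b with h | h
      · exact absurd hab (ne_of_lt (sortW_mono hn r e he a b h hb))
      · have : b < a := by omega
        exact absurd hab.symm (ne_of_lt (sortW_mono hn r e he b a this ha))
    omega

end SortTuple

section Main
variable {n : ℕ}

open scoped Classical

lemma exists_stop (r k : ℕ) (H : Finset (Finset (Fin n))) (hr : 2 ≤ r) (hk : r + 2 ≤ k)
    (w0 : ℕ → Fin n)
    (hsm : ∀ i j : ℕ, i < j → j < r → w0 i < w0 j)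
    (hmem : Finset.image w0 (Finset.range r) ∈ H)
    (hfree : ¬ ∃ v : ℕ → Fin n, IsOrdCrossPath r k H v) :
    ∃ t, ¬ (Sset r H w0 (walk r H w0 t) (t % r)).Nonempty := by
  by_contra hc
  push_neg at hc
  exact hfree ⟨_, path_of_alive r H w0 hr hk hsm hmem (fun t' _ => hc t')⟩

lemma card_bound (r k : ℕ) (H : Finset (Finset (Fin n))) (hn : 0 < n) (hr : 2 ≤ r)
    (hk : r + 2 ≤ k) (hH : ∀ e ∈ H, e.card = r)
    (hfree : ¬ ∃ v : ℕ → Fin n, IsOrdCrossPath r k H v) :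
    H.card ≤ (k-1) * ((n^(r-1)) * (2 * (Nat.log 2 n + 1))) := by
  classical
  set Φ : Finset (Fin n) → ℕ × ((Fin (r-1) → Fin n) × (Bool × ℕ)) := fun e =>
    if he : e ∈ H then
      PhiW r H (sortW hn r e (hH e he))
        (exists_stop r k H hr hk _ (sortW_mono hn r e (hH e he))
          (by rw [sortW_image]; exact he) hfree)
    else (0, (fun _ => ⟨0, hn⟩, (true, 0))) with hΦ
  have key : ∀ (e : Finset (Fin n)) (he : e ∈ H),
      ∀ (w0 : ℕ → Fin n)
        (hsm : ∀ i j : ℕ, i < j → j < r → w0 i < w0 j)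
        (hmem : Finset.image w0 (Finset.range r) ∈ H)
        (hex : ∃ t, ¬ (Sset r H w0 (walk r H w0 t) (t % r)).Nonempty),
        Nat.find hex < k - 1 := by
    intro e he w0 hsm hmem hex
    by_contra hge
    push_neg at hge
    have hal : aliveP r H w0 (k-1) := fun t' ht' =>
      not_not.mp (Nat.find_min hex (lt_of_lt_of_le ht' (by convert hge; exact Finset.not_nonempty_iff_eq_empty)))
    exact hfree ⟨_, path_of_alive r H w0 hr hk hsm hmem hal⟩
  have hcodom : ∀ e ∈ H, Φ e ∈ (Finset.range (k-1)) ×ˢ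
      ((Finset.univ : Finset (Fin (r-1) → Fin n)) ×ˢ
        ((Finset.univ : Finset Bool) ×ˢ (Finset.range (Nat.log 2 n + 1)))) := by
    intro e he
    rw [hΦ]
    simp only [dif_pos he]
    simp only [Finset.mem_product, Finset.mem_range, Finset.mem_univ, true_and, PhiW]
    refine ⟨?_, ?_⟩
    · exact key e he _ (sortW_mono hn r e (hH e he)) (by rw [sortW_image]; exact he) _
    · have := levA_le r (sortW hn r e (hH e he))
        ((Nat.find (exists_stop r k H hr hk _ (sortW_mono hn r e (hH e he))
          (by rw [sortW_image]; exact he) hfree)) % r)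
      omega
  have hinj : Set.InjOn Φ ↑H := by
    intro e he e' he' heq
    simp only [Finset.mem_coe] at he he'
    rw [hΦ] at heq
    simp only [dif_pos he, dif_pos he'] at heq
    set w0 := sortW hn r e (hH e he) with hw0
    set w0' := sortW hn r e' (hH e' he') with hw0'
    have hsm : ∀ i j : ℕ, i < j → j < r → w0 i < w0 j := sortW_mono hn r e (hH e he)
    have hsm' : ∀ i j : ℕ, i < j → j < r → w0' i < w0' j := sortW_mono hn r e' (hH e' he')
    have hmem : Finset.image w0 (Finset.range r) ∈ H := by rw [hw0, sortW_image]; exact he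
    have hmem' : Finset.image w0' (Finset.range r) ∈ H := by rw [hw0', sortW_image]; exact he'
    set hex := exists_stop r k H hr hk w0 hsm hmem hfree with hhex
    set hex' := exists_stop r k H hr hk w0' hsm' hmem' hfree with hhex'
    have heq' : PhiW r H w0 hex = PhiW r H w0' hex' := by
      convert heq using 3
    clear heq
    simp only [PhiW, Prod.mk.injEq] at heq'
    obtain ⟨hT, hdel, hb, hℓ⟩ := heq'
    set T := Nat.find hex with hTdef
    have hTT : Nat.find hex' = T := hT.symm
    rw [hTT] at hdel hb hℓ
    set p := T % r with hpdef
    have hr0 : 0 < r := by omega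
    have hp : p < r := Nat.mod_lt _ hr0
    have haT : aliveP r H w0 T := fun t' ht' => not_not.mp (Nat.find_min hex ht')
    have haT' : aliveP r H w0' T := fun t' ht' =>
      not_not.mp (Nat.find_min hex' (by omega))
    have hterm : ¬ (Sset r H w0 (walk r H w0 T) (T % r)).Nonempty := Nat.find_spec hex
    have hterm' : ¬ (Sset r H w0' (walk r H w0' T) (T % r)).Nonempty := by
      have := Nat.find_spec hex'
      rwa [hTT] at this
    -- slots other than p agree
    have hslots : ∀ j, j < r → j ≠ p → walk r H w0 T j = walk r H w0' T j := by
      intro j hj hjp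
      rcases Nat.lt_or_ge j p with hlt | hge
      · have hjr1 : j < r - 1 := by omega
        have := congrFun hdel ⟨j, hjr1⟩
        simpa [if_pos hlt] using this
      · have hgt : p < j := by omega
        have hjr1 : j - 1 < r - 1 := by omega
        have := congrFun hdel ⟨j - 1, hjr1⟩
        have hcond : ¬ ((j - 1 : ℕ) < p) := by omega
        have hj1 : j - 1 + 1 = j := by omega
        simpa [if_neg hcond, hj1] using this
    -- the caps agree
    have hM : Mcap r w0 p = Mcap r w0' p := by
      rw [Mcap_recover r H w0 hr hsm hmem haT hp,
          Mcap_recover r H w0' hr hsm' hmem' haT' hp]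
      rw [← hb, ← hℓ]
      unfold recoverM
      by_cases hc : condA r w0 p
      · have hp1 : p + 1 < r := by
          rcases hc with h0 | ⟨h1, _⟩
          · omega
          · exact h1
        rw [if_pos (decide_eq_true hc), if_pos (decide_eq_true hc)]
        simp only [hslots (p+1) hp1 (by omega)]
      · rw [if_neg (by simpa using hc), if_neg (by simpa using hc)]
        have hp0 : p ≠ 0 := by
          intro h0
          exact hc (Or.inl h0)
        simp only [hslots (p-1) (by omega) (by omega)]
    have hfin := walks_eq r H hr hsm hsm' hmem hmem' haT haT' hslots hM hterm hterm'
    have himg : Finset.image w0 (Finset.range r) = Finset.image w0' (Finset.range r) := by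
      apply Finset.image_congr
      intro q hq
      simp only [Finset.coe_range, Set.mem_Iio] at hq
      exact hfin q hq
    have he1 : e = Finset.image w0 (Finset.range r) := by rw [hw0, sortW_image]
    have he2 : e' = Finset.image w0' (Finset.range r) := by rw [hw0', sortW_image]
    rw [he1, he2, himg]
  have hcard := Finset.card_le_card_of_injOn Φ hcodom hinj
  calc H.card ≤ _ := hcard
    _ = (k-1) * ((n^(r-1)) * (2 * (Nat.log 2 n + 1))) := by
      rw [Finset.card_product, Finset.card_product, Finset.card_product]
      simp [Finset.card_univ, Fintype.card_fun]

end Main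

end CPP

/-- For fixed `r ≥ 2` and `k ≥ r+2` there is a constant `C > 0` such that
`ex_→(n, P_k^r) ≤ C · n^(r−1) · log n` for all `n ≥ 2`. -/

theorem stmt1 (r k : ℕ) (hr : 2 ≤ r) (hk : r + 2 ≤ k) :
    ∃ C : ℝ, 0 < C ∧ ∀ n : ℕ, 2 ≤ n →
      (exOrdP n r k : ℝ) ≤ C * (n : ℝ) ^ (r - 1) * Real.log n := by
  have hlog2 : (0:ℝ) < Real.log 2 := Real.log_pos one_lt_two
  refine ⟨4 * (k+1) / Real.log 2, by positivity, ?_⟩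
  intro n hn
  have hn0 : 0 < n := by omega
  -- natural number bound
  have hnat : exOrdP n r k ≤ (k-1) * ((n^(r-1)) * (2 * (Nat.log 2 n + 1))) := by
    unfold exOrdP
    apply csSup_le
    · refine ⟨0, ⟨∅, ?_, ?_, rfl⟩⟩
      · intro e he
        simp at he
      · rintro ⟨v, hv⟩
        have := hv.2.1 0 (by omega)
        simp at this
    · rintro m ⟨H, h1, h2, h3⟩
      rw [← h3]
      exact CPP.card_bound r k H hn0 hr hk h1 h2
  set L := Nat.log 2 n with hL
  have hcast : ((2:ℝ))^L ≤ (n:ℝ) := by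
    have := Nat.pow_log_le_self 2 (by omega : n ≠ 0)
    exact_mod_cast this
  have hlogn2 : Real.log 2 ≤ Real.log n := by
    apply Real.log_le_log (by norm_num)
    exact_mod_cast hn
  have hlognn : (0:ℝ) ≤ Real.log n := le_trans (le_of_lt hlog2) hlogn2
  have hLlog : (L:ℝ) * Real.log 2 ≤ Real.log n := by
    have h1 : Real.log ((2:ℝ)^L) ≤ Real.log n := by
      apply Real.log_le_log (by positivity)
      exact hcast
    rwa [Real.log_pow] at h1
  have h2L : (2:ℝ) * ((L:ℝ) + 1) ≤ 4 * Real.log n / Real.log 2 := by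
    rw [le_div_iff₀ hlog2]
    nlinarith
  have hP : (0:ℝ) ≤ (n:ℝ)^(r-1) := by positivity
  calc (↑(exOrdP n r k) : ℝ)
      ≤ ↑((k-1) * ((n^(r-1)) * (2 * (L + 1)))) := by exact_mod_cast hnat
    _ = (↑(k-1) : ℝ) * ((n:ℝ)^(r-1) * (2 * ((L:ℝ) + 1))) := by push_cast; ring
    _ ≤ (k:ℝ) * ((n:ℝ)^(r-1) * (4 * Real.log n / Real.log 2)) := by
        apply mul_le_mul
        · exact_mod_cast Nat.cast_le.mpr (by omega : k - 1 ≤ k)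
        · apply mul_le_mul_of_nonneg_left h2L hP
        · positivity
        · positivity
    _ ≤ 4 * ((k:ℝ)+1) / Real.log 2 * (n:ℝ) ^ (r - 1) * Real.log n := by
        have hD : (0:ℝ) ≤ (n:ℝ)^(r-1) * Real.log n / Real.log 2 := by positivity
        have e1 : (k:ℝ) * ((n:ℝ)^(r-1) * (4 * Real.log n / Real.log 2))
            = 4 * (k:ℝ) * ((n:ℝ)^(r-1) * Real.log n / Real.log 2) := by ring
        have e2 : 4 * ((k:ℝ)+1) / Real.log 2 * (n:ℝ) ^ (r - 1) * Real.log n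
            = 4 * ((k:ℝ)+1) * ((n:ℝ)^(r-1) * Real.log n / Real.log 2) := by ring
        rw [e1, e2]
        nlinarith
end

section
/- Let r ≥ 3 and n > 20r. Let G(n, r, r+2) be the family of all r-element subsets {a_1 < a_2 < ... < a_r} of [n] such that a_2 − a_1 = 2^p for some nonnegative integer p with 2^p ≤ n/4. Then G(n, r, r+2), as an ordered r-graph on [n], contains no crossing (r+2)-path P_{r+2}^r, and |G(n, r, r+2)| ≥ n^{r−1} · log_2 n / ((r−2)! · 3^r). In particular, for every fixed k ≥ r + 2 there is a constant c > 0 with ex_→(n, P_k^r) ≥ c · n^{r−1} · log n for all large n. -/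
lemma aux_nopath (r n : ℕ) (hr : 3 ≤ r) (H : Finset (Finset (Fin n)))
    (hH : ∀ e : Finset (Fin n), e ∈ H ↔ (e.card = r ∧ ∃ a ∈ e, ∃ b ∈ e,
        (∀ c ∈ e, a ≤ c) ∧ (∀ c ∈ e, c ≠ a → b ≤ c) ∧
        ∃ p : ℕ, (b : ℕ) - (a : ℕ) = 2 ^ p ∧ 2 ^ p ≤ n / 4)) :
    ¬ ∃ v : ℕ → Fin n, IsOrdCrossPath r (r + 2) H v := by
  rintro ⟨v, hinj, hedge, h1, h2, h3⟩
  -- basic order facts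
  have hO1 := h2 0 1 (by omega) le_rfl (by omega)
  have hO2 := h2 0 2 (by omega) (by omega) (by omega)
  have hO3 := h2 1 1 (by omega) le_rfl (by omega)
  norm_num at hO1 hO2 hO3
  -- hO1 : v 0 < v r ∧ v r < v 1 ; hO2 : v r < v (2r) ∧ v (2r) < v 1
  -- hO3 : v 1 < v (1+r) ∧ v (1+r) < v 2
  have chain : ∀ t : ℕ, t < r → ∀ s : ℕ, s ≤ t → v s ≤ v t := by
    intro t
    induction t with
    | zero =>
      intro _ s hs
      obtain rfl : s = 0 := Nat.le_zero.mp hs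
      exact le_rfl
    | succ t ih =>
      intro ht s hs
      rcases Nat.eq_or_lt_of_le hs with rfl | hlt
      · exact le_rfl
      · exact le_of_lt (lt_of_le_of_lt (ih (by omega) s (by omega)) (h1 t (by omega)))
  have hO5 : v (r - 1) < v (2 * r - 1) := by
    have := h3.2 1 le_rfl (by omega)
    norm_num at this
    exact this
  -- v (r+1) is below everything with index in [2, r-1]
  have hlow : ∀ t : ℕ, 2 ≤ t → t ≤ r - 1 → v (1 + r) < v t :=
    fun t h2t htr => lt_of_lt_of_le hO3.2 (chain t (by omega) 2 h2t)
  -- v (r+1) is below everything with index in [r+2, 2r-1]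
  have hup : ∀ t : ℕ, r + 2 ≤ t → t ≤ 2 * r - 1 → v (1 + r) < v t := by
    intro t ht1 ht2
    obtain ⟨s, rfl⟩ : ∃ s, t = s + r := ⟨t - r, by omega⟩
    rcases Nat.lt_or_ge s (r - 1) with hs | hs
    · -- s ≤ r - 2 : v (1+r) < v s < v (s + r)
      have h2 := (h2 s 1 (by omega) le_rfl (by omega)).1
      norm_num at h2
      exact lt_trans (hlow s (by omega) (by omega)) h2
    · -- s = r - 1, t = 2r - 1
      obtain rfl : s = r - 1 := by omega
      have heq : r - 1 + r = 2 * r - 1 := by omega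
      rw [heq]
      exact lt_of_lt_of_le hO3.2 (le_of_lt (lt_of_le_of_lt (chain (r-1) (by omega) 2 (by omega)) hO5))
  -- extraction of the power-of-two gap between min and second-min of an edge of H
  have extract : ∀ E ∈ H, ∀ x y : Fin n, x ∈ E → y ∈ E → x < y →
      (∀ c ∈ E, c ≠ x → x < c) → (∀ c ∈ E, c ≠ x → c ≠ y → y < c) →
      ∃ p : ℕ, (y : ℕ) - (x : ℕ) = 2 ^ p ∧ 2 ^ p ≤ n / 4 := by
    intro E hE x y hx hy hxy hxm hym
    obtain ⟨-, a, ha, b, hb, ham, hbm, p, hgap, hple⟩ := (hH E).1 hE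
    have h2p : 1 ≤ 2 ^ p := Nat.one_le_two_pow
    have hab : a < b := by
      rw [Fin.lt_def]; omega
    have hax : a = x := by
      by_contra hne
      exact absurd (ham x hx) (not_le.2 (hxm a ha hne))
    subst hax
    have hby : b = y := by
      by_contra hne
      have hby1 : b ≤ y := hbm y hy (ne_of_gt hxy)
      have hby2 : y < b := hym b hb (ne_of_gt hab) hne
      exact absurd hby1 (not_le.2 hby2)
    subst hby
    exact ⟨p, hgap, hple⟩
  -- membership helper
  have hmem : ∀ i t : ℕ, i ≤ t → t < i + r → v t ∈ Finset.image v (Finset.Ico i (i + r)) :=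
    fun i t h1' h2' => Finset.mem_image.2 ⟨t, Finset.mem_Ico.2 ⟨h1', h2'⟩, rfl⟩
  -- Edge 1 : {v 1, ..., v r}, min = v r, second = v 1
  obtain ⟨p1, hp1, -⟩ := extract _ (hedge 1 (by omega)) (v r) (v 1)
    (hmem 1 r (by omega) (by omega)) (hmem 1 1 (by omega) (by omega)) hO1.2
    (by
      intro c hc hne
      obtain ⟨t, ht, rfl⟩ := Finset.mem_image.1 hc
      rw [Finset.mem_Ico] at ht
      have htne : t ≠ r := fun h => hne (by rw [h])
      exact lt_of_lt_of_le hO1.2 (chain t (by omega) 1 (by omega)))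
    (by
      intro c hc hne hne1
      obtain ⟨t, ht, rfl⟩ := Finset.mem_image.1 hc
      rw [Finset.mem_Ico] at ht
      have htne : t ≠ r := fun h => hne (by rw [h])
      have htne1 : t ≠ 1 := fun h => hne1 (by rw [h])
      exact lt_of_lt_of_le (h1 1 (by omega)) (chain t (by omega) 2 (by omega)))
  -- Edge 2 : {v 2, ..., v (r+1)}, min = v r, second = v (r+1)
  obtain ⟨p2, hp2, -⟩ := extract _ (hedge 2 (by omega)) (v r) (v (1 + r))
    (hmem 2 r (by omega) (by omega)) (hmem 2 (1 + r) (by omega) (by omega))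
    (lt_trans hO1.2 hO3.1)
    (by
      intro c hc hne
      obtain ⟨t, ht, rfl⟩ := Finset.mem_image.1 hc
      rw [Finset.mem_Ico] at ht
      have htne : t ≠ r := fun h => hne (by rw [h])
      rcases Nat.lt_or_ge t r with hlt | hge
      · exact lt_trans (lt_trans hO1.2 hO3.1) (hlow t (by omega) (by omega))
      · obtain rfl : t = 1 + r := by omega
        exact lt_trans hO1.2 hO3.1)
    (by
      intro c hc hne hne1
      obtain ⟨t, ht, rfl⟩ := Finset.mem_image.1 hc
      rw [Finset.mem_Ico] at ht
      have htne : t ≠ r := fun h => hne (by rw [h])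
      have htne1 : t ≠ 1 + r := fun h => hne1 (by rw [h])
      exact hlow t (by omega) (by omega))
  -- Edge r+1 : {v (r+1), ..., v 2r}, min = v (2r), second = v (r+1)
  obtain ⟨p3, hp3, -⟩ := extract _ (hedge (r + 1) (by omega)) (v (2 * r)) (v (1 + r))
    (hmem (r + 1) (2 * r) (by omega) (by omega)) (hmem (r + 1) (1 + r) (by omega) (by omega))
    (lt_trans hO2.2 hO3.1)
    (by
      intro c hc hne
      obtain ⟨t, ht, rfl⟩ := Finset.mem_image.1 hc
      rw [Finset.mem_Ico] at ht
      have htne : t ≠ 2 * r := fun h => hne (by rw [h])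
      rcases Nat.lt_or_ge (r + 1) t with hlt | hge
      · exact lt_trans (lt_trans hO2.2 hO3.1) (hup t (by omega) (by omega))
      · obtain rfl : t = 1 + r := by omega
        exact lt_trans hO2.2 hO3.1)
    (by
      intro c hc hne hne1
      obtain ⟨t, ht, rfl⟩ := Finset.mem_image.1 hc
      rw [Finset.mem_Ico] at ht
      have htne : t ≠ 2 * r := fun h => hne (by rw [h])
      have htne1 : t ≠ 1 + r := fun h => hne1 (by rw [h])
      exact hup t (by omega) (by omega))
  -- final arithmetic contradiction
  have ha : (v r : ℕ) < (v (2 * r) : ℕ) := hO2.1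
  have hb' : (v (2 * r) : ℕ) < (v 1 : ℕ) := hO2.2
  have hc' : (v 1 : ℕ) < (v (1 + r) : ℕ) := hO3.1
  have h12 : p1 < p2 := by
    have : (2 : ℕ) ^ p1 < 2 ^ p2 := by omega
    exact (Nat.pow_lt_pow_iff_right (by norm_num)).1 this
  have h32 : p3 < p2 := by
    have : (2 : ℕ) ^ p3 < 2 ^ p2 := by omega
    exact (Nat.pow_lt_pow_iff_right (by norm_num)).1 this
  have hd1 : 2 ^ p1 * 2 ≤ 2 ^ p2 := by
    calc 2 ^ p1 * 2 = 2 ^ (p1 + 1) := by ring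
    _ ≤ 2 ^ p2 := Nat.pow_le_pow_right (by norm_num) (by omega)
  have hd2 : 2 ^ p3 * 2 ≤ 2 ^ p2 := by
    calc 2 ^ p3 * 2 = 2 ^ (p3 + 1) := by ring
    _ ≤ 2 ^ p2 := Nat.pow_le_pow_right (by norm_num) (by omega)
  omega

lemma aux_count (j n : ℕ) (hj : 1 ≤ j) (hn : 20 * (j + 2) < n) (H : Finset (Finset (Fin n)))
    (hH : ∀ e : Finset (Fin n), e ∈ H ↔ (e.card = j + 2 ∧ ∃ a ∈ e, ∃ b ∈ e,
        (∀ c ∈ e, a ≤ c) ∧ (∀ c ∈ e, c ≠ a → b ≤ c) ∧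
        ∃ p : ℕ, (b : ℕ) - (a : ℕ) = 2 ^ p ∧ 2 ^ p ≤ n / 4)) :
    (n : ℝ) ^ (j + 1) * Real.logb 2 n / (j.factorial * 3 ^ (j + 2)) ≤ H.card := by
  have hn0 : 0 < n := by omega
  set L : ℕ := Nat.log 2 (n / 4) + 1 with hLdef
  set q : ℕ := n / 4 with hqdef
  set m : ℕ := n - n / 2 with hmdef
  -- parameter finsets
  set A : Finset (Fin n) := (Finset.range q).attachFin
    (fun x hx => by have := Finset.mem_range.1 hx; omega) with hAdef
  set T : Finset (Fin n) := (Finset.Ico (n / 2) n).attachFin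
    (fun x hx => (Finset.mem_Ico.1 hx).2) with hTdef
  set s : Finset (ℕ × Fin n × Finset (Fin n)) :=
    (Finset.range L) ×ˢ A ×ˢ (Finset.powersetCard j T) with hsdef
  set f : ℕ × Fin n × Finset (Fin n) → Finset (Fin n) :=
    fun z => insert z.2.1
      (insert (⟨(((z.2.1 : Fin n) : ℕ) + 2 ^ z.1) % n, Nat.mod_lt _ hn0⟩ : Fin n) z.2.2) with hfdef
  -- basic facts about members of s
  have hfacts : ∀ z ∈ s, (z.2.1 : ℕ) < q ∧ 2 ^ z.1 ≤ q ∧ z.2.2.card = j ∧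
      (∀ x ∈ z.2.2, n / 2 ≤ (x : ℕ)) := by
    rintro ⟨p, a, S⟩ hz
    simp only [hsdef, Finset.mem_product] at hz
    obtain ⟨hp, ha, hS⟩ := hz
    have hp' : 2 ^ p ≤ n / 4 := Nat.pow_le_of_le_log (by omega)
      (by have := Finset.mem_range.1 hp; omega)
    have ha' : (a : ℕ) < q := by
      have := (Finset.mem_attachFin _).1 ha
      exact Finset.mem_range.1 this
    obtain ⟨hS1, hS2⟩ := Finset.mem_powersetCard.1 hS
    refine ⟨ha', hp', hS2, fun x hx => ?_⟩
    have := (Finset.mem_attachFin _).1 (hS1 hx)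
    exact (Finset.mem_Ico.1 this).1
  set g : ℕ × Fin n × Finset (Fin n) → Fin n :=
    fun z => (⟨(((z.2.1 : Fin n) : ℕ) + 2 ^ z.1) % n, Nat.mod_lt _ hn0⟩ : Fin n) with hgdef
  have hstruct : ∀ z ∈ s, ((g z : ℕ) = (z.2.1 : ℕ) + 2 ^ z.1) ∧ z.2.1 < g z ∧
      (∀ x ∈ z.2.2, g z < x) ∧ f z = insert z.2.1 (insert (g z) z.2.2) ∧
      z.2.1 ∉ insert (g z) z.2.2 ∧ g z ∉ z.2.2 ∧
      ((g z : ℕ) - (z.2.1 : ℕ) = 2 ^ z.1) := by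
    rintro ⟨p, a, S⟩ hz
    obtain ⟨ha, hp, hScard, hSlow⟩ := hfacts _ hz
    dsimp only at ha hp hScard hSlow
    have h2p : 1 ≤ 2 ^ p := Nat.one_le_two_pow
    have hgval : (g (p, a, S) : ℕ) = (a : ℕ) + 2 ^ p := by
      show ((a : ℕ) + 2 ^ p) % n = (a : ℕ) + 2 ^ p
      exact Nat.mod_eq_of_lt (by omega)
    have hab : a < g (p, a, S) := by rw [Fin.lt_def, hgval]; omega
    have hbS : ∀ x ∈ S, g (p, a, S) < x := by
      intro x hx
      have := hSlow x hx
      rw [Fin.lt_def, hgval]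
      omega
    have hbnotS : g (p, a, S) ∉ S := fun h => absurd (hbS _ h) (lt_irrefl _)
    have hanot : a ∉ insert (g (p, a, S)) S := by
      simp only [Finset.mem_insert]
      rintro (h | h)
      · exact absurd h (ne_of_lt hab)
      · exact absurd (lt_trans hab (hbS a h)) (lt_irrefl _)
    refine ⟨hgval, hab, hbS, rfl, hanot, hbnotS, ?_⟩
    show (g (p, a, S) : ℕ) - (a : ℕ) = 2 ^ p
    rw [hgval]
    omega
  have hmin : ∀ z ∈ s, ∀ c ∈ f z, z.2.1 ≤ c := by
    intro z hz c hc
    obtain ⟨-, hab, hbS, hfz, -, -, -⟩ := hstruct z hz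
    rw [hfz] at hc
    simp only [Finset.mem_insert] at hc
    rcases hc with rfl | rfl | hc
    · exact le_rfl
    · exact le_of_lt hab
    · exact le_of_lt (lt_trans hab (hbS c hc))
  have hsec : ∀ z ∈ s, ∀ c ∈ f z, c ≠ z.2.1 → g z ≤ c := by
    intro z hz c hc hne
    obtain ⟨-, hab, hbS, hfz, -, -, -⟩ := hstruct z hz
    rw [hfz] at hc
    simp only [Finset.mem_insert] at hc
    rcases hc with rfl | rfl | hc
    · exact absurd rfl hne
    · exact le_rfl
    · exact le_of_lt (hbS c hc)
  -- maps into H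
  have hmaps : ∀ z ∈ s, f z ∈ H := by
    rintro ⟨p, a, S⟩ hz
    obtain ⟨ha, hp, hScard, hSlow⟩ := hfacts _ hz
    obtain ⟨hgval, hab, hbS, hfz, hanot, hbnotS, hgap⟩ := hstruct _ hz
    rw [hH]
    constructor
    · rw [hfz, Finset.card_insert_of_notMem hanot, Finset.card_insert_of_notMem hbnotS, hScard]
    · refine ⟨a, ?_, g (p, a, S), ?_, hmin _ hz, hsec _ hz, p, ?_, ?_⟩
      · rw [hfz]; exact Finset.mem_insert_self _ _
      · rw [hfz]; exact Finset.mem_insert.2 (Or.inr (Finset.mem_insert_self _ _))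
      · exact hgap
      · exact hp
  -- injectivity
  have hinjOn : Set.InjOn f ↑s := by
    rintro ⟨p, a, S⟩ hz ⟨p', a', S'⟩ hz' heq
    simp only [Finset.coe_mem, Finset.mem_coe] at hz hz'
    obtain ⟨hgval, hab, hbS, hfz, hanot, hbnotS, -⟩ := hstruct _ hz
    obtain ⟨hgval', hab', hbS', hfz', hanot', hbnotS', -⟩ := hstruct _ hz'
    have hmema : a ∈ f (p', a', S') := by
      rw [← heq, hfz]; exact Finset.mem_insert_self _ _
    have hmema' : a' ∈ f (p, a, S) := by
      rw [heq, hfz']; exact Finset.mem_insert_self _ _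
    have haa : a = a' := le_antisymm (hmin _ hz _ hmema') (hmin _ hz' _ hmema)
    have hmemb : g (p, a, S) ∈ f (p', a', S') := by
      rw [← heq, hfz]; exact Finset.mem_insert.2 (Or.inr (Finset.mem_insert_self _ _))
    have hmemb' : g (p', a', S') ∈ f (p, a, S) := by
      rw [heq, hfz']; exact Finset.mem_insert.2 (Or.inr (Finset.mem_insert_self _ _))
    have hbb : g (p, a, S) = g (p', a', S') := by
      refine le_antisymm (hsec _ hz _ hmemb' ?_) (hsec _ hz' _ hmemb ?_)
      · show g (p', a', S') ≠ a
        rw [haa]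
        exact ne_of_gt hab'
      · show g (p, a, S) ≠ a'
        rw [← haa]
        exact ne_of_gt hab
    have hpp : p = p' := by
      have : (2 : ℕ) ^ p = 2 ^ p' := by
        have h1 : (g (p, a, S) : ℕ) = (g (p', a', S') : ℕ) := by rw [hbb]
        rw [hgval, hgval'] at h1
        have h2 : (a : ℕ) = (a' : ℕ) := by rw [haa]
        dsimp only at h1 ⊢
        omega
      exact Nat.pow_right_injective le_rfl this
    have hSS : S = S' := by
      apply Finset.Subset.antisymm
      · intro x hx
        have hxf : x ∈ f (p', a', S') := by
          rw [← heq, hfz]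
          exact Finset.mem_insert.2 (Or.inr (Finset.mem_insert.2 (Or.inr hx)))
        rw [hfz'] at hxf
        simp only [Finset.mem_insert] at hxf
        have hgx : g (p, a, S) < x := hbS x hx
        rcases hxf with h | h | h
        · exact absurd (hab.trans hgx) (by rw [h, ← haa]; exact lt_irrefl _)
        · exact absurd hgx (by rw [h, ← hbb]; exact lt_irrefl _)
        · exact h
      · intro x hx
        have hxf : x ∈ f (p, a, S) := by
          rw [heq, hfz']
          exact Finset.mem_insert.2 (Or.inr (Finset.mem_insert.2 (Or.inr hx)))
        rw [hfz] at hxf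
        simp only [Finset.mem_insert] at hxf
        have hgx : g (p', a', S') < x := hbS' x hx
        rcases hxf with h | h | h
        · exact absurd (hab'.trans hgx) (by rw [h, haa]; exact lt_irrefl _)
        · exact absurd hgx (by rw [h, hbb]; exact lt_irrefl _)
        · exact h
    rw [haa, hpp, hSS]
  -- cardinality of the parameter set
  have hscard : s.card = L * (q * (m.choose j)) := by
    rw [hsdef, Finset.card_product, Finset.card_product, Finset.card_range,
      Finset.card_powersetCard, hAdef, Finset.card_attachFin, Finset.card_range,
      hTdef, Finset.card_attachFin, Nat.card_Ico]
  have hcardle : L * (q * (m.choose j)) ≤ H.card := by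
    rw [← hscard]
    exact Finset.card_le_card_of_injOn f hmaps hinjOn
  -- numeric facts
  have hn61 : 61 ≤ n := by omega
  have hq4 : n ≤ 4 * q + 3 := by omega
  have hlogpow : n < 2 ^ (L + 2) := by
    have h1 : n / 4 < 2 ^ L := by
      rw [hLdef]
      exact Nat.lt_pow_succ_log_self (by norm_num) _
    have h2 : (2 : ℕ) ^ (L + 2) = 4 * 2 ^ L := by ring
    omega
  set l : ℝ := Real.logb 2 n with hldef
  have hl5 : (5 : ℝ) ≤ l := by
    have h32 : Real.logb 2 32 = 5 := by
      rw [show (32 : ℝ) = 2 ^ (5 : ℕ) by norm_num, Real.logb_pow,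
        Real.logb_self_eq_one (by norm_num)]
      norm_num
    rw [hldef, ← h32]
    exact Real.logb_le_logb_of_le (by norm_num) (by norm_num)
      (by exact_mod_cast (show (32 : ℕ) ≤ n by omega))
  have hl0 : (0 : ℝ) ≤ l := by linarith
  have hlL : l ≤ (L : ℝ) + 2 := by
    have h1 : (n : ℝ) ≤ (2 : ℝ) ^ (L + 2) := by exact_mod_cast hlogpow.le
    have h2 : Real.logb 2 ((2 : ℝ) ^ (L + 2)) = ((L : ℝ) + 2) := by
      rw [Real.logb_pow, Real.logb_self_eq_one (by norm_num)]
      push_cast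
      ring
    calc l ≤ Real.logb 2 ((2 : ℝ) ^ (L + 2)) := by
          rw [hldef]
          exact Real.logb_le_logb_of_le (by norm_num) (by exact_mod_cast hn0) h1
    _ = (L : ℝ) + 2 := h2
  have hlL' : 3 / 5 * l ≤ (L : ℝ) := by linarith
  have hqR : ((n : ℝ) - 3) / 4 ≤ (q : ℝ) := by
    have : (n : ℝ) ≤ 4 * (q : ℝ) + 3 := by exact_mod_cast hq4
    linarith
  have hnR : (61 : ℝ) ≤ (n : ℝ) := by exact_mod_cast hn61
  have hq0 : (0 : ℝ) ≤ ((n : ℝ) - 3) / 4 := by linarith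
  have hMn : 9 * (n : ℝ) / 20 ≤ ((m + 1 - j : ℕ) : ℝ) := by
    have hN : 9 * n ≤ 20 * (m + 1 - j) := by omega
    have hc := (Nat.cast_le (α := ℝ)).2 hN
    push_cast at hc
    linarith
  have hF0 : (0 : ℝ) < (j.factorial : ℝ) := by
    exact_mod_cast Nat.factorial_pos j
  have hchoose : (9 * (n : ℝ) / 20) ^ j / (j.factorial : ℝ) ≤ ((m.choose j : ℕ) : ℝ) := by
    have h1 : (9 * (n : ℝ) / 20) ^ j ≤ (((m + 1 - j : ℕ) : ℝ)) ^ j :=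
      pow_le_pow_left₀ (by positivity) hMn j
    calc (9 * (n : ℝ) / 20) ^ j / (j.factorial : ℝ)
        ≤ (((m + 1 - j : ℕ) : ℝ)) ^ j / (j.factorial : ℝ) := by gcongr
      _ ≤ _ := Nat.pow_le_choose j m
  have hkey : (n : ℝ) ^ (j + 1) * l / ((j.factorial : ℝ) * 3 ^ (j + 2)) ≤
      (3 / 5 * l) * (((n : ℝ) - 3) / 4) * ((9 * (n : ℝ) / 20) ^ j / (j.factorial : ℝ)) := by
    have h3j : (0 : ℝ) < 3 ^ j := by positivity
    have hsub : (n : ℝ) / (9 * 3 ^ j) ≤ 3 / 20 * ((n : ℝ) - 3) * (9 / 20) ^ j := by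
      rw [div_le_iff₀ (by positivity)]
      have e1 : ((9 : ℝ) / 20) ^ j * 3 ^ j = (27 / 20) ^ j := by rw [← mul_pow]; norm_num
      have h27 : (1 : ℝ) ≤ ((27 : ℝ) / 20) ^ j := one_le_pow₀ (by norm_num)
      calc (n : ℝ) ≤ 27 / 20 * ((n : ℝ) - 3) := by linarith
        _ = 27 / 20 * ((n : ℝ) - 3) * 1 := by ring
        _ ≤ 27 / 20 * ((n : ℝ) - 3) * ((27 : ℝ) / 20) ^ j :=
            mul_le_mul_of_nonneg_left h27 (by linarith)
        _ = 3 / 20 * ((n : ℝ) - 3) * (9 / 20) ^ j * (9 * 3 ^ j) := by rw [← e1]; ring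
    have hmul0 : (0 : ℝ) ≤ l * (n : ℝ) ^ j / (j.factorial : ℝ) :=
      div_nonneg (mul_nonneg hl0 (by positivity)) hF0.le
    calc (n : ℝ) ^ (j + 1) * l / ((j.factorial : ℝ) * 3 ^ (j + 2))
        = (l * (n : ℝ) ^ j / (j.factorial : ℝ)) * ((n : ℝ) / (9 * 3 ^ j)) := by
          field_simp
          ring
      _ ≤ (l * (n : ℝ) ^ j / (j.factorial : ℝ)) * (3 / 20 * ((n : ℝ) - 3) * (9 / 20) ^ j) :=
          mul_le_mul_of_nonneg_left hsub hmul0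
      _ = (3 / 5 * l) * (((n : ℝ) - 3) / 4) * ((9 * (n : ℝ) / 20) ^ j / (j.factorial : ℝ)) := by
          rw [show (9 * (n : ℝ) / 20) = (9 / 20) * (n : ℝ) by ring, mul_pow]
          field_simp
          ring
  have hstep2 : (3 / 5 * l) * (((n : ℝ) - 3) / 4) * ((9 * (n : ℝ) / 20) ^ j / (j.factorial : ℝ)) ≤
      (L : ℝ) * ((q : ℝ) * ((m.choose j : ℕ) : ℝ)) := by
    have t1 : (3 / 5 * l) * (((n : ℝ) - 3) / 4) ≤ (L : ℝ) * (q : ℝ) :=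
      mul_le_mul hlL' hqR hq0 (Nat.cast_nonneg L)
    have t2 : (0 : ℝ) ≤ (9 * (n : ℝ) / 20) ^ j / (j.factorial : ℝ) := by positivity
    calc (3 / 5 * l) * (((n : ℝ) - 3) / 4) * ((9 * (n : ℝ) / 20) ^ j / (j.factorial : ℝ))
        ≤ ((L : ℝ) * (q : ℝ)) * ((m.choose j : ℕ) : ℝ) :=
          mul_le_mul t1 hchoose t2 (by positivity)
      _ = (L : ℝ) * ((q : ℝ) * ((m.choose j : ℕ) : ℝ)) := by ring
  have hfinal : ((L * (q * m.choose j) : ℕ) : ℝ) ≤ (H.card : ℝ) := by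
    exact_mod_cast hcardle
  calc (n : ℝ) ^ (j + 1) * l / ((j.factorial : ℝ) * 3 ^ (j + 2))
      ≤ (3 / 5 * l) * (((n : ℝ) - 3) / 4) * ((9 * (n : ℝ) / 20) ^ j / (j.factorial : ℝ)) := hkey
    _ ≤ (L : ℝ) * ((q : ℝ) * ((m.choose j : ℕ) : ℝ)) := hstep2
    _ = ((L * (q * m.choose j) : ℕ) : ℝ) := by push_cast; ring
    _ ≤ (H.card : ℝ) := hfinal


/-- Let `r ≥ 3` and `n > 20r`. The ordered `r`-graph `G(n,r,r+2)` of all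
`r`-sets `{a₁ < a₂ < ... < a_r}` with `a₂ − a₁ = 2^p` for some `p` with `2^p ≤ n/4` contains
no crossing `(r+2)`-path, and has at least `n^(r−1)·log₂ n / ((r−2)!·3^r)` edges. In
particular, for every fixed `k ≥ r+2` there is `c > 0` with
`ex_→(n, P_k^r) ≥ c·n^(r−1)·log n` for all large `n`. -/
theorem stmt2 (r : ℕ) (hr : 3 ≤ r) :
    (∀ n : ℕ, 20 * r < n → ∀ H : Finset (Finset (Fin n)),
      (∀ e : Finset (Fin n), e ∈ H ↔ (e.card = r ∧ ∃ a ∈ e, ∃ b ∈ e,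
          (∀ c ∈ e, a ≤ c) ∧ (∀ c ∈ e, c ≠ a → b ≤ c) ∧
          ∃ p : ℕ, (b : ℕ) - (a : ℕ) = 2 ^ p ∧ 2 ^ p ≤ n / 4)) →
      ((¬ ∃ v : ℕ → Fin n, IsOrdCrossPath r (r + 2) H v) ∧
        (n : ℝ) ^ (r - 1) * Real.logb 2 n / ((r - 2).factorial * 3 ^ r) ≤ H.card)) ∧
    (∀ k : ℕ, r + 2 ≤ k → ∃ c : ℝ, 0 < c ∧ ∃ N : ℕ, ∀ n : ℕ, N ≤ n →
      c * (n : ℝ) ^ (r - 1) * Real.log n ≤ exOrdP n r k) := by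
  have main : ∀ n : ℕ, 20 * r < n → ∀ H : Finset (Finset (Fin n)),
      (∀ e : Finset (Fin n), e ∈ H ↔ (e.card = r ∧ ∃ a ∈ e, ∃ b ∈ e,
          (∀ c ∈ e, a ≤ c) ∧ (∀ c ∈ e, c ≠ a → b ≤ c) ∧
          ∃ p : ℕ, (b : ℕ) - (a : ℕ) = 2 ^ p ∧ 2 ^ p ≤ n / 4)) →
      ((¬ ∃ v : ℕ → Fin n, IsOrdCrossPath r (r + 2) H v) ∧
        (n : ℝ) ^ (r - 1) * Real.logb 2 n / ((r - 2).factorial * 3 ^ r) ≤ H.card) := by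
    intro n hn H hH
    refine ⟨aux_nopath r n hr H hH, ?_⟩
    obtain ⟨j, rfl⟩ : ∃ j, r = j + 2 := ⟨r - 2, by omega⟩
    exact aux_count j n (by omega) (by omega) H hH
  refine ⟨main, ?_⟩
  intro k hk
  have hlog2 : (0 : ℝ) < Real.log 2 := Real.log_pos (by norm_num)
  have hF0 : (0 : ℝ) < ((r - 2).factorial : ℝ) := by exact_mod_cast Nat.factorial_pos _
  refine ⟨1 / (((r - 2).factorial : ℝ) * 3 ^ r * Real.log 2), by positivity, 20 * r + 1,
    fun n hn => ?_⟩
  classical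
  set H : Finset (Finset (Fin n)) := Finset.univ.filter (fun e => e.card = r ∧ ∃ a ∈ e, ∃ b ∈ e,
    (∀ c ∈ e, a ≤ c) ∧ (∀ c ∈ e, c ≠ a → b ≤ c) ∧
    ∃ p : ℕ, (b : ℕ) - (a : ℕ) = 2 ^ p ∧ 2 ^ p ≤ n / 4) with hHdef
  have hH : ∀ e : Finset (Fin n), e ∈ H ↔ (e.card = r ∧ ∃ a ∈ e, ∃ b ∈ e,
      (∀ c ∈ e, a ≤ c) ∧ (∀ c ∈ e, c ≠ a → b ≤ c) ∧
      ∃ p : ℕ, (b : ℕ) - (a : ℕ) = 2 ^ p ∧ 2 ^ p ≤ n / 4) := by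
    intro e
    rw [hHdef, Finset.mem_filter]
    simp only [Finset.mem_univ, true_and]
  obtain ⟨hno, hbound⟩ := main n (by omega) H hH
  have hnok : ¬ ∃ v : ℕ → Fin n, IsOrdCrossPath r k H v := by
    rintro ⟨v, h1, h2, h3, h4, h5⟩
    exact hno ⟨v, fun i j hi hj => h1 i j (by omega) (by omega),
      fun i hi => h2 i (by omega), h3,
      fun j i ha hb hc => h4 j i ha hb (by omega),
      h5.1, fun i hi hir => h5.2 i hi (by omega)⟩
  have hle : H.card ≤ exOrdP n r k := by
    apply le_csSup
    · refine ⟨Fintype.card (Finset (Fin n)), ?_⟩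
      rintro x ⟨G, -, -, hG⟩
      rw [← hG]
      exact Finset.card_le_univ G
    · exact ⟨H, fun e he => ((hH e).1 he).1, hnok, rfl⟩
  have heq : 1 / (((r - 2).factorial : ℝ) * 3 ^ r * Real.log 2) * (n : ℝ) ^ (r - 1) *
      Real.log n = (n : ℝ) ^ (r - 1) * Real.logb 2 n / (((r - 2).factorial : ℝ) * 3 ^ r) := by
    simp only [Real.logb]
    ring
  rw [heq]
  calc (n : ℝ) ^ (r - 1) * Real.logb 2 n / (((r - 2).factorial : ℝ) * 3 ^ r)
      ≤ (H.card : ℝ) := hbound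
    _ ≤ (exOrdP n r k : ℝ) := by exact_mod_cast hle
end

section
/- Let r ≥ 3, 2 ≤ k ≤ r + 1 and n ≥ r + k. Then ex_→(n, P_k^r) ≤ C(n−2, r−2) + ex_→(n−2, P_{k−1}^{r−1}) + ex_→(n−1, P_k^r). -/
namespace Stmt3Aux

lemma exOrdP_le {n r k M : ℕ} (hk : 0 < k)
    (h : ∀ H : Finset (Finset (Fin n)), (∀ e ∈ H, e.card = r) →
      (¬ ∃ v : ℕ → Fin n, IsOrdCrossPath r k H v) → H.card ≤ M) :
    exOrdP n r k ≤ M := by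
  apply csSup_le
  · refine ⟨0, ∅, by simp, ?_, rfl⟩
    rintro ⟨v, hv⟩
    exact (Finset.notMem_empty _) (hv.2.1 0 hk)
  · rintro m ⟨H, h1, h2, rfl⟩
    exact h H h1 h2

lemma exOrdP_ge {n r k : ℕ} (H : Finset (Finset (Fin n)))
    (h1 : ∀ e ∈ H, e.card = r) (h2 : ¬ ∃ v : ℕ → Fin n, IsOrdCrossPath r k H v) :
    H.card ≤ exOrdP n r k := by
  apply le_csSup
  · refine ⟨Fintype.card (Finset (Fin n)), ?_⟩
    rintro m ⟨H', _, _, rfl⟩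
    exact Finset.card_le_univ H'
  · exact ⟨H, h1, h2, rfl⟩

lemma path_map {M M' r k : ℕ} {φ : Fin M → Fin M'} (hφ : StrictMono φ)
    {G : Finset (Finset (Fin M))} {H : Finset (Finset (Fin M'))}
    (hGH : ∀ e ∈ G, e.image φ ∈ H) {v : ℕ → Fin M}
    (hv : IsOrdCrossPath r k G v) : IsOrdCrossPath r k H (φ ∘ v) := by
  obtain ⟨h1, h2, h3, h4, h5, h6⟩ := hv
  refine ⟨?_, ?_, ?_, ?_, ?_, ?_⟩
  · intro i j hi hj hij
    exact h1 i j hi hj (hφ.injective hij)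
  · intro i hi
    have hmem := hGH _ (h2 i hi)
    rwa [Finset.image_image] at hmem
  · intro i hi
    exact hφ (h3 i hi)
  · intro j i ha hb hc
    exact ⟨hφ ((h4 j i ha hb hc).1), hφ ((h4 j i ha hb hc).2)⟩
  · exact hφ h5
  · intro i hi h
    exact hφ (h6 i hi h)

lemma path_chain {n r : ℕ} {v : ℕ → Fin n}
    (h3 : ∀ i : ℕ, i + 1 < r → v i < v (i + 1)) :
    ∀ d a : ℕ, a + d ≤ r - 1 → 0 < d → v a < v (a + d) := by
  intro d
  induction d with
  | zero => intro a _ hd; omega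
  | succ d ih =>
    intro a ha hd
    rcases Nat.eq_zero_or_pos d with rfl | hd'
    · have := h3 a (by omega)
      simpa using this
    · have h1 := ih a (by omega) hd'
      have h2 := h3 (a + d) (by omega)
      have : a + (d + 1) = (a + d) + 1 := by omega
      rw [this]
      exact lt_trans h1 h2

lemma path_min {n r k : ℕ} {H : Finset (Finset (Fin n))} {v : ℕ → Fin n}
    (hr : 3 ≤ r) (hkr : k ≤ r + 1)
    (hv : IsOrdCrossPath r k H v) :
    ∀ j : ℕ, 0 < j → j < k + r - 1 → j ≠ 2 * r - 1 → v 0 < v j := by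
  obtain ⟨h1, h2, h3, h4, h5, h6⟩ := hv
  intro j hj0 hjlt hj2r
  rcases le_or_gt j (r - 1) with hle | hgt
  · have := path_chain h3 j 0 (by omega) hj0
    simpa using this
  · have hs : j - r + 1 < r := by omega
    have hs2 : (j - r) + 1 * r ≤ k + r - 2 := by omega
    have h := (h4 (j - r) 1 hs le_rfl hs2).1
    rw [show j - r + (1 - 1) * r = j - r by omega, show j - r + 1 * r = j by omega] at h
    rcases Nat.eq_zero_or_pos (j - r) with h0 | hpos
    · rwa [h0] at h
    · have := path_chain h3 (j - r) 0 (by omega) hpos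
      simp only [Nat.zero_add] at this
      exact lt_trans this h

lemma image_update_mem {β : Type*} [DecidableEq β] (f : ℕ → β) (S : Finset ℕ) {j₀ : ℕ}
    (hj : j₀ ∈ S) (b : β) :
    S.image (Function.update f j₀ b) = insert b ((S.erase j₀).image f) := by
  ext x
  simp only [Finset.mem_image, Finset.mem_insert, Finset.mem_erase]
  constructor
  · rintro ⟨j, hjS, rfl⟩
    by_cases h : j = j₀
    · subst h; left; simp
    · right; exact ⟨j, ⟨h, hjS⟩, by simp [Function.update_of_ne h]⟩
  · rintro (rfl | ⟨j, ⟨hne, hjS⟩, rfl⟩)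
    · exact ⟨j₀, hj, by simp⟩
    · exact ⟨j, hjS, by simp [Function.update_of_ne hne]⟩

lemma claim1 {N r k : ℕ} (hr : 3 ≤ r) (hk2 : 2 ≤ k) (hkr : k ≤ r + 1)
    {H U : Finset (Finset (Fin (N + 2)))}
    (hf : ¬ ∃ v, IsOrdCrossPath r k H v)
    (hU : ∀ e ∈ U, (0 : Fin (N + 2)) ∉ e ∧
        (e ∈ H ∨ ((1 : Fin (N + 2)) ∈ e ∧ insert (0 : Fin (N + 2)) (e.erase 1) ∈ H))) :
    ¬ ∃ v, IsOrdCrossPath r k U v := by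
  rintro ⟨v, hv⟩
  obtain ⟨h1, h2, h3, h4, h5, h6⟩ := hv
  have hwin : ∀ j, j < k + r - 1 → ∃ i, i < k ∧ j ∈ Finset.Ico i (i + r) := by
    intro j hj
    refine ⟨min j (k - 1), by omega, ?_⟩
    simp only [Finset.mem_Ico]
    omega
  have hP0 : ∀ j, j < k + r - 1 → v j ≠ 0 := by
    intro j hj h0
    obtain ⟨i, hik, hmem⟩ := hwin j hj
    have hW := h2 i hik
    have hin : v j ∈ Finset.image v (Finset.Ico i (i + r)) := Finset.mem_image_of_mem v hmem
    rw [h0] at hin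
    exact (hU _ hW).1 hin
  -- if no index has value 1, all windows are in H
  by_cases h1mem : ∃ j₀, j₀ < k + r - 1 ∧ v j₀ = 1
  · obtain ⟨j₀, hj₀lt, hvj₀⟩ := h1mem
    have hj₀cases : j₀ = 0 ∨ (j₀ = 2 * r - 1 ∧ k = r + 1) := by
      by_contra hcon
      push_neg at hcon
      have h0j : 0 < j₀ := by
        rcases Nat.eq_zero_or_pos j₀ with h | h
        · exact absurd h hcon.1
        · exact h
      have hne2r : j₀ ≠ 2 * r - 1 := by
        intro he
        rcases Nat.lt_or_ge k (r + 1) with hlt | hge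
        · omega
        · exact (hcon.2 he) (by omega)
      have hlt := path_min hr hkr ⟨h1, h2, h3, h4, h5, h6⟩ j₀ h0j hj₀lt hne2r
      rw [hvj₀, Fin.lt_def, Fin.val_one] at hlt
      have hv0 : v 0 ≠ 0 := hP0 0 (by omega)
      refine hv0 (Fin.ext ?_)
      rw [Fin.val_zero]
      omega
    -- i₀ : the unique window containing j₀
    set i₀ : ℕ := if j₀ = 0 then 0 else k - 1 with hi₀def
    have hi₀k : i₀ < k := by
      rcases hj₀cases with h | h
      · rw [hi₀def, if_pos h]; omega
      · rw [hi₀def, if_neg (by omega)]; omega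
    have hj₀mem : j₀ ∈ Finset.Ico i₀ (i₀ + r) := by
      simp only [Finset.mem_Ico]
      rcases hj₀cases with h | h
      · rw [hi₀def, if_pos h]; omega
      · rw [hi₀def, if_neg (by omega)]; omega
    have huniq : ∀ i, i < k → i ≠ i₀ → j₀ ∉ Finset.Ico i (i + r) := by
      intro i hik hne
      simp only [Finset.mem_Ico]
      rcases hj₀cases with h | h
      · rw [hi₀def, if_pos h] at hne; omega
      · rw [hi₀def, if_neg (by omega)] at hne; omega
    have hnot1 : ∀ j, j < k + r - 1 → j ≠ j₀ → v j ≠ 1 := by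
      intro j hj hne hva
      exact hne (h1 j j₀ hj hj₀lt (by rw [hva, hvj₀]))
    have hothers : ∀ i, i < k → i ≠ i₀ → Finset.image v (Finset.Ico i (i + r)) ∈ H := by
      intro i hik hne
      have hWU := h2 i hik
      rcases (hU _ hWU).2 with h | h
      · exact h
      · exfalso
        obtain ⟨j, hjmem, hvj⟩ := Finset.mem_image.mp h.1
        simp only [Finset.mem_Ico] at hjmem
        have hjlt : j < k + r - 1 := by omega
        have hjne : j ≠ j₀ := by
          intro he
          exact (huniq i hik hne) (by rw [← he]; simp only [Finset.mem_Ico]; omega)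
        exact hnot1 j hjlt hjne hvj
    -- main case analysis on window i₀
    have hWU := h2 i₀ hi₀k
    rcases (hU _ hWU).2 with hWH | hWψ
    · -- all windows in H : v is a path in H
      apply hf
      refine ⟨v, h1, ?_, h3, h4, h5, h6⟩
      intro i hik
      by_cases he : i = i₀
      · rw [he]; exact hWH
      · exact hothers i hik he
    · -- swap: replace v j₀ by 0
      set v' := Function.update v j₀ (0 : Fin (N + 2)) with hv'def
      have hv'at : v' j₀ = 0 := by simp [hv'def]
      have hv'ne : ∀ j, j ≠ j₀ → v' j = v j := by
        intro j hj; simp [hv'def, Function.update_of_ne hj]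
      apply hf
      refine ⟨v', ?_, ?_, ?_, ?_, ?_, ?_⟩
      · -- distinct
        intro a b ha hb heq
        by_cases ha0 : a = j₀ <;> by_cases hb0 : b = j₀
        · omega
        · exfalso
          rw [ha0, hv'at, hv'ne b hb0] at heq
          exact hP0 b hb (heq.symm)
        · exfalso
          rw [hb0, hv'at, hv'ne a ha0] at heq
          exact hP0 a ha heq
        · rw [hv'ne a ha0, hv'ne b hb0] at heq
          exact h1 a b ha hb heq
      · -- windows
        intro i hik
        by_cases he : i = i₀
        · subst he
          have himg : Finset.image v' (Finset.Ico i₀ (i₀ + r)) =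
              insert 0 (((Finset.Ico i₀ (i₀ + r)).erase j₀).image v) :=
            image_update_mem v _ hj₀mem 0
          have herase : ((Finset.Ico i₀ (i₀ + r)).erase j₀).image v =
              (Finset.image v (Finset.Ico i₀ (i₀ + r))).erase 1 := by
            ext x
            simp only [Finset.mem_image, Finset.mem_erase, Finset.mem_Ico]
            constructor
            · rintro ⟨j, ⟨hne, hmem⟩, rfl⟩
              refine ⟨?_, ⟨j, hmem, rfl⟩⟩
              exact hnot1 j (by omega) hne
            · rintro ⟨hne, j, hmem, rfl⟩
              refine ⟨j, ⟨?_, hmem⟩, rfl⟩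
              intro he; rw [he, hvj₀] at hne; exact hne rfl
          rw [himg, herase]
          exact hWψ.2
        · have himg : Finset.image v' (Finset.Ico i (i + r)) =
              Finset.image v (Finset.Ico i (i + r)) := by
            apply Finset.image_congr
            intro j hj
            apply hv'ne
            intro hje
            exact (huniq i hik he) (hje ▸ hj)
          rw [himg]
          exact hothers i hik he
      · -- (iii)
        intro i hi
        rcases hj₀cases with hc | hc
        · subst hc
          by_cases hi0 : i = 0
          · subst hi0
            rw [hv'at, hv'ne 1 (by omega)]
            exact Fin.pos_of_ne_zero (hP0 1 (by omega))
          · rw [hv'ne i hi0, hv'ne (i + 1) (by omega)]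
            exact h3 i hi
        · rw [hv'ne i (by omega), hv'ne (i + 1) (by omega)]
          exact h3 i hi
      · -- (iv)
        intro j i hj1 hi1 hle
        have hieq : i = 1 := by
          by_contra hne
          have h2i : 2 ≤ i := by omega
          have : 2 * r ≤ i * r := Nat.mul_le_mul_right r h2i
          omega
        subst hieq
        rw [show j + (1 - 1) * r = j by omega, show j + 1 * r = j + r by omega]
        have hconc := h4 j 1 hj1 le_rfl hle
        rw [show j + (1 - 1) * r = j by omega, show j + 1 * r = j + r by omega] at hconc
        rcases hj₀cases with hc | hc
        · subst hc
          by_cases hj0 : j = 0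
          · subst hj0
            simp only [Nat.zero_add] at hconc ⊢
            constructor
            · rw [hv'at, hv'ne r (by omega)]
              exact Fin.pos_of_ne_zero (hP0 r (by omega))
            · rw [hv'ne r (by omega), hv'ne 1 (by omega)]
              exact hconc.2
          · rw [hv'ne j hj0, hv'ne (j + r) (by omega), hv'ne (j + 1) (by omega)]
            exact hconc
        · have hk' : k = r + 1 := hc.2
          rw [hv'ne j (by omega), hv'ne (j + r) (by omega), hv'ne (j + 1) (by omega)]
          exact hconc
      · -- (v) left
        rcases hj₀cases with hc | hc
        · subst hc
          rw [hv'at, hv'ne (r - 1) (by omega)]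
          exact Fin.pos_of_ne_zero (hP0 (r - 1) (by omega))
        · rw [hv'ne 0 (by omega), hv'ne (r - 1) (by omega)]
          exact h5
      · -- (v) right : vacuous
        intro i hi hle
        exfalso
        have : 2 * r ≤ (i + 1) * r := Nat.mul_le_mul_right r (by omega)
        omega
  · -- no vertex is 1 : all windows in H
    push_neg at h1mem
    apply hf
    refine ⟨v, h1, ?_, h3, h4, h5, h6⟩
    intro i hik
    have hWU := h2 i hik
    rcases (hU _ hWU).2 with h | h
    · exact h
    · exfalso
      obtain ⟨j, hjmem, hvj⟩ := Finset.mem_image.mp h.1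
      simp only [Finset.mem_Ico] at hjmem
      exact h1mem j (by omega) hvj


lemma claim2lift {N r k : ℕ} (hr : 3 ≤ r) (hk2 : 2 ≤ k) (hkr : k ≤ r + 1)
    {H : Finset (Finset (Fin (N + 2)))}
    (w : ℕ → Fin (N + 2))
    (hwval : ∀ j : ℕ, 2 ≤ (w j).val)
    (hdist : ∀ i j, i < (k - 1) + (r - 1) - 1 → j < (k - 1) + (r - 1) - 1 → w i = w j → i = j)
    (hwin : ∀ i, i < k - 1 →
        insert (0 : Fin (N + 2)) (Finset.image w (Finset.Ico i (i + (r - 1)))) ∈ H ∧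
        insert (1 : Fin (N + 2)) (Finset.image w (Finset.Ico i (i + (r - 1)))) ∈ H)
    (h3 : ∀ i, i + 1 < r - 1 → w i < w (i + 1))
    (h4 : ∀ j i, j + 1 < r - 1 → 1 ≤ i → j + i * (r - 1) ≤ (k - 1) + (r - 1) - 2 →
        w (j + (i - 1) * (r - 1)) < w (j + i * (r - 1)) ∧ w (j + i * (r - 1)) < w (j + 1)) :
    ∃ v, IsOrdCrossPath r k H v := by
  classical
  set v : ℕ → Fin (N + 2) := fun j =>
    if j = 0 then 0 else if j ≤ r - 1 then w (j - 1) else if j = r then 1 else w (j - 2)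
    with hvdef
  have hv0 : v 0 = 0 := by simp [hvdef]
  have hvr : v r = 1 := by
    have e1 : ¬ (r = 0) := by omega
    have e2 : ¬ (r ≤ r - 1) := by omega
    simp [hvdef, e1, e2]
  have hvlow : ∀ j, 1 ≤ j → j ≤ r - 1 → v j = w (j - 1) := by
    intro j hj1 hj2
    have e1 : ¬ (j = 0) := by omega
    simp [hvdef, e1, hj2]
  have hvhigh : ∀ j, r + 1 ≤ j → v j = w (j - 2) := by
    intro j hj
    have e1 : ¬ (j = 0) := by omega
    have e2 : ¬ (j ≤ r - 1) := by omega
    have e3 : ¬ (j = r) := by omega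
    simp [hvdef, e1, e2, e3]
  have hone : ((1 : Fin (N + 2))).val = 1 := Fin.val_one N
  have hzero : ((0 : Fin (N + 2))).val = 0 := rfl
  -- window equalities
  have hW0 : Finset.image v (Finset.Ico 0 (0 + r)) =
      insert (0 : Fin (N + 2)) (Finset.image w (Finset.Ico 0 (0 + (r - 1)))) := by
    ext x
    simp only [Finset.mem_image, Finset.mem_insert, Finset.mem_Ico]
    constructor
    · rintro ⟨j, ⟨_, hjr⟩, rfl⟩
      by_cases hj0 : j = 0
      · left; rw [hj0, hv0]
      · right
        refine ⟨j - 1, by omega, ?_⟩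
        rw [hvlow j (by omega) (by omega)]
    · rintro (rfl | ⟨t, ht, rfl⟩)
      · exact ⟨0, by omega, hv0⟩
      · refine ⟨t + 1, by omega, ?_⟩
        rw [hvlow (t + 1) (by omega) (by omega)]
        congr 1 <;> omega
  have hWi : ∀ i, 1 ≤ i → i < k → Finset.image v (Finset.Ico i (i + r)) =
      insert (1 : Fin (N + 2)) (Finset.image w (Finset.Ico (i - 1) ((i - 1) + (r - 1)))) := by
    intro i hi1 hik
    ext x
    simp only [Finset.mem_image, Finset.mem_insert, Finset.mem_Ico]
    constructor
    · rintro ⟨j, ⟨hji, hjlt⟩, rfl⟩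
      rcases show j = r ∨ (1 ≤ j ∧ j ≤ r - 1) ∨ r + 1 ≤ j by omega with h | h | h
      · left; rw [h, hvr]
      · right
        refine ⟨j - 1, by omega, ?_⟩
        rw [hvlow j h.1 h.2]
      · right
        refine ⟨j - 2, by omega, ?_⟩
        rw [hvhigh j h]
    · rintro (rfl | ⟨t, ht, rfl⟩)
      · exact ⟨r, by omega, hvr⟩
      · rcases show t + 1 ≤ r - 1 ∨ r ≤ t + 1 by omega with h | h
        · refine ⟨t + 1, by omega, ?_⟩
          rw [hvlow (t + 1) (by omega) h]
          congr 1 <;> omega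
        · refine ⟨t + 2, by omega, ?_⟩
          rw [hvhigh (t + 2) (by omega)]
          congr 1 <;> omega
  -- value classification
  have hvmid : ∀ j, j < k + r - 1 → j ≠ 0 → j ≠ r → 2 ≤ (v j).val := by
    intro j hj hj0 hjr
    rcases show (1 ≤ j ∧ j ≤ r - 1) ∨ r + 1 ≤ j by omega with h | h
    · rw [hvlow j h.1 h.2]; exact hwval _
    · rw [hvhigh j h]; exact hwval _
  refine ⟨v, ?_, ?_, ?_, ?_, ?_, ?_⟩
  · -- distinct
    intro a b ha hb heq
    by_cases ha0 : a = 0 <;> by_cases hb0 : b = 0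
    · omega
    · exfalso
      by_cases hbr : b = r
      · rw [ha0, hv0, hbr, hvr] at heq
        have := congrArg Fin.val heq
        rw [hzero, hone] at this
        omega
      · have := hvmid b hb hb0 hbr
        rw [ha0, hv0] at heq
        rw [← heq, hzero] at this
        omega
    · exfalso
      by_cases har : a = r
      · rw [hb0, hv0, har, hvr] at heq
        have := congrArg Fin.val heq
        rw [hzero, hone] at this
        omega
      · have := hvmid a ha ha0 har
        rw [hb0, hv0] at heq
        rw [heq, hzero] at this
        omega
    · by_cases har : a = r <;> by_cases hbr : b = r
      · omega
      · exfalso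
        have := hvmid b hb hb0 hbr
        rw [har, hvr] at heq
        rw [← heq, hone] at this
        omega
      · exfalso
        have := hvmid a ha ha0 har
        rw [hbr, hvr] at heq
        rw [heq, hone] at this
        omega
      · rcases show (1 ≤ a ∧ a ≤ r - 1) ∨ r + 1 ≤ a by omega with hA | hA <;>
          rcases show (1 ≤ b ∧ b ≤ r - 1) ∨ r + 1 ≤ b by omega with hB | hB
        · rw [hvlow a hA.1 hA.2, hvlow b hB.1 hB.2] at heq
          have := hdist (a - 1) (b - 1) (by omega) (by omega) heq
          omega
        · rw [hvlow a hA.1 hA.2, hvhigh b hB] at heq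
          have := hdist (a - 1) (b - 2) (by omega) (by omega) heq
          omega
        · rw [hvhigh a hA, hvlow b hB.1 hB.2] at heq
          have := hdist (a - 2) (b - 1) (by omega) (by omega) heq
          omega
        · rw [hvhigh a hA, hvhigh b hB] at heq
          have := hdist (a - 2) (b - 2) (by omega) (by omega) heq
          omega
  · -- windows
    intro i hik
    by_cases hi0 : i = 0
    · subst hi0
      rw [hW0]
      exact (hwin 0 (by omega)).1
    · rw [hWi i (by omega) hik]
      exact (hwin (i - 1) (by omega)).2
  · -- (iii)
    intro i hi
    by_cases hi0 : i = 0
    · subst hi0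
      rw [hv0, hvlow 1 le_rfl (by omega)]
      rw [Fin.lt_def, hzero]
      have := hwval (1 - 1)
      omega
    · rw [hvlow i (by omega) (by omega), hvlow (i + 1) (by omega) (by omega)]
      have := h3 (i - 1) (by omega)
      rw [show i - 1 + 1 = i by omega] at this
      have he : i + 1 - 1 = i := by omega
      rw [he]
      exact this
  · -- (iv)
    intro j i hj1 hi1 hle
    have hieq : i = 1 := by
      by_contra hne
      have h2i : 2 ≤ i := by omega
      have : 2 * r ≤ i * r := Nat.mul_le_mul_right r h2i
      omega
    subst hieq
    rw [show j + (1 - 1) * r = j by omega, show j + 1 * r = j + r by omega]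
    by_cases hj0 : j = 0
    · subst hj0
      simp only [Nat.zero_add]
      constructor
      · rw [hv0, hvr, Fin.lt_def, hzero, hone]
        omega
      · rw [hvr, hvlow 1 le_rfl (by omega), Fin.lt_def, hone]
        have := hwval (1 - 1)
        omega
    · have h := h4 (j - 1) 1 (by omega) le_rfl (by omega)
      rw [show j - 1 + (1 - 1) * (r - 1) = j - 1 by omega,
        show j - 1 + 1 * (r - 1) = j + r - 2 by omega,
        show j - 1 + 1 = j by omega] at h
      rw [hvlow j (by omega) (by omega), hvhigh (j + r) (by omega),
        hvlow (j + 1) (by omega) (by omega)]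
      rw [show j + r - 2 = j + r - 2 from rfl]
      constructor
      · have := h.1
        rwa [show j + r - 2 = j + r - 2 from rfl] at this
      · have := h.2
        rw [show j + 1 - 1 = j by omega]
        exact this
  · -- (v) left
    rw [hv0, hvlow (r - 1) (by omega) le_rfl, Fin.lt_def, hzero]
    have := hwval (r - 1 - 1)
    omega
  · -- (v) right : vacuous
    intro i hi hle
    exfalso
    have : 2 * r ≤ (i + 1) * r := Nat.mul_le_mul_right r (by omega)
    omega


lemma main {N r k : ℕ} (hr : 3 ≤ r) (hk2 : 2 ≤ k) (hkr : k ≤ r + 1) (hN : 1 ≤ N)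
    (H : Finset (Finset (Fin (N + 2)))) (hu : ∀ e ∈ H, e.card = r)
    (hf : ¬ ∃ v, IsOrdCrossPath r k H v) :
    H.card ≤ N.choose (r - 2) + exOrdP N (r - 1) (k - 1) + exOrdP (N + 1) r k := by
  classical
  have h01 : (0 : Fin (N + 2)) ≠ 1 := by
    intro h
    have := congrArg Fin.val h
    rw [Fin.val_zero, Fin.val_one] at this
    omega
  set A := H.filter (fun e => (0 : Fin (N + 2)) ∉ e) with hA
  set D0 := H.filter (fun e => (0 : Fin (N + 2)) ∈ e) with hD0
  set B := D0.filter (fun e => (1 : Fin (N + 2)) ∈ e) with hB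
  set C := D0.filter (fun e => (1 : Fin (N + 2)) ∉ e) with hC
  have hsplit1 : D0.card + A.card = H.card := by
    rw [hD0, hA]
    exact Finset.card_filter_add_card_filter_not _
  have hsplit2 : B.card + C.card = D0.card := by
    rw [hB, hC]
    exact Finset.card_filter_add_card_filter_not _
  have hAmem : ∀ e ∈ A, e ∈ H ∧ (0 : Fin (N + 2)) ∉ e := by
    intro e he
    rw [hA] at he
    exact Finset.mem_filter.mp he
  have hCmem : ∀ e ∈ C, e ∈ H ∧ (0 : Fin (N + 2)) ∈ e ∧ (1 : Fin (N + 2)) ∉ e := by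
    intro e he
    rw [hC] at he
    have h1 := Finset.mem_filter.mp he
    rw [hD0] at h1
    have h2 := Finset.mem_filter.mp h1.1
    exact ⟨h2.1, h2.2, h1.2⟩
  have hBmem : ∀ e ∈ B, e ∈ H ∧ (0 : Fin (N + 2)) ∈ e ∧ (1 : Fin (N + 2)) ∈ e := by
    intro e he
    rw [hB] at he
    have h1 := Finset.mem_filter.mp he
    rw [hD0] at h1
    have h2 := Finset.mem_filter.mp h1.1
    exact ⟨h2.1, h2.2, h1.2⟩
  set ψ : Finset (Fin (N + 2)) → Finset (Fin (N + 2)) :=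
    fun e => insert (1 : Fin (N + 2)) (e.erase 0) with hψ
  set ψC := C.image ψ with hψC
  have hψC_card : ψC.card = C.card := by
    rw [hψC]
    apply Finset.card_image_of_injOn
    intro e1 h1 e2 h2 he
    obtain ⟨_, h0e1, h1e1⟩ := hCmem e1 (Finset.mem_coe.mp h1)
    obtain ⟨_, h0e2, h1e2⟩ := hCmem e2 (Finset.mem_coe.mp h2)
    have n1 : (1 : Fin (N + 2)) ∉ e1.erase 0 := fun hx => h1e1 (Finset.mem_of_mem_erase hx)
    have n2 : (1 : Fin (N + 2)) ∉ e2.erase 0 := fun hx => h1e2 (Finset.mem_of_mem_erase hx)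
    have he' : e1.erase 0 = e2.erase 0 := by
      have h := congrArg (fun s : Finset (Fin (N + 2)) => s.erase 1) he
      simp only [hψ] at h
      rwa [Finset.erase_insert n1, Finset.erase_insert n2] at h
    have h := congrArg (fun s : Finset (Fin (N + 2)) => insert (0 : Fin (N + 2)) s) he'
    rwa [Finset.insert_erase h0e1, Finset.insert_erase h0e2] at h
  have hψCprop : ∀ e ∈ ψC, (0 : Fin (N + 2)) ∉ e ∧ (1 : Fin (N + 2)) ∈ e ∧
      insert (0 : Fin (N + 2)) (e.erase 1) ∈ H ∧ e.card = r := by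
    intro e he
    rw [hψC] at he
    obtain ⟨e₀, he₀, rfl⟩ := Finset.mem_image.mp he
    obtain ⟨heH, h0e, h1e⟩ := hCmem e₀ he₀
    have n1 : (1 : Fin (N + 2)) ∉ e₀.erase 0 := fun hx => h1e (Finset.mem_of_mem_erase hx)
    rw [hψ]
    simp only
    refine ⟨?_, Finset.mem_insert_self _ _, ?_, ?_⟩
    · intro h0
      rcases Finset.mem_insert.mp h0 with h | h
      · exact h01 h
      · exact (Finset.notMem_erase _ _) h
    · rw [Finset.erase_insert n1, Finset.insert_erase h0e]
      exact heH
    · rw [Finset.card_insert_of_notMem n1, Finset.card_erase_of_mem h0e, hu e₀ heH]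
      omega
  set U := A ∪ ψC with hUdef
  set O := A ∩ ψC with hOdef
  have hUprop : ∀ e ∈ U, (0 : Fin (N + 2)) ∉ e ∧
      (e ∈ H ∨ ((1 : Fin (N + 2)) ∈ e ∧ insert (0 : Fin (N + 2)) (e.erase 1) ∈ H)) := by
    intro e he
    rw [hUdef] at he
    rcases Finset.mem_union.mp he with h | h
    · obtain ⟨h1, h2⟩ := hAmem e h
      exact ⟨h2, Or.inl h1⟩
    · obtain ⟨h0, h1, hins, _⟩ := hψCprop e h
      exact ⟨h0, Or.inr ⟨h1, hins⟩⟩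
  have hUcard : ∀ e ∈ U, e.card = r := by
    intro e he
    rw [hUdef] at he
    rcases Finset.mem_union.mp he with h | h
    · exact hu e (hAmem e h).1
    · exact (hψCprop e h).2.2.2
  have hUfree : ¬ ∃ v, IsOrdCrossPath r k U v := claim1 hr hk2 hkr hf hUprop
  -- transfer down to Fin (N+1)
  set g₁ : Fin (N + 2) → Fin (N + 1) := fun x => ⟨x.val - 1, by omega⟩ with hg₁
  set f₁ : Fin (N + 1) → Fin (N + 2) := fun y => ⟨y.val + 1, by omega⟩ with hf₁
  have hf₁mono : StrictMono f₁ := by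
    intro a b hab
    rw [hf₁, Fin.lt_def]
    simp only
    rw [Fin.lt_def] at hab
    omega
  have hcomp : ∀ x : Fin (N + 2), x ≠ 0 → f₁ (g₁ x) = x := by
    intro x hx
    have hxv : x.val ≠ 0 := by
      intro h
      exact hx (Fin.ext (by rw [h, Fin.val_zero]))
    rw [hg₁, hf₁]
    apply Fin.ext
    simp only
    omega
  have hdown : ∀ e : Finset (Fin (N + 2)), (0 : Fin (N + 2)) ∉ e →
      (e.image g₁).image f₁ = e := by
    intro e h0
    rw [Finset.image_image]
    have h : Finset.image (f₁ ∘ g₁) e = Finset.image id e := by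
      apply Finset.image_congr
      intro x hx
      have hx' : x ∈ e := Finset.mem_coe.mp hx
      exact hcomp x (fun h => h0 (h ▸ hx'))
    rw [h, Finset.image_id]
  set G := U.image (fun e => e.image g₁) with hG
  have hGcard : G.card = U.card := by
    rw [hG]
    apply Finset.card_image_of_injOn
    intro e1 h1 e2 h2 he
    have d1 := hdown e1 ((hUprop e1 (Finset.mem_coe.mp h1)).1)
    have d2 := hdown e2 ((hUprop e2 (Finset.mem_coe.mp h2)).1)
    rw [← d1, ← d2]
    exact congrArg _ he
  have hGunif : ∀ e ∈ G, e.card = r := by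
    intro e he
    rw [hG] at he
    obtain ⟨e₀, he₀, rfl⟩ := Finset.mem_image.mp he
    have h0 : (0 : Fin (N + 2)) ∉ e₀ := (hUprop e₀ he₀).1
    have hinj : Set.InjOn g₁ ↑e₀ := by
      intro x hx y hy hxy
      have hx0 : x ≠ 0 := fun h => h0 (h ▸ Finset.mem_coe.mp hx)
      have hy0 : y ≠ 0 := fun h => h0 (h ▸ Finset.mem_coe.mp hy)
      have h := congrArg f₁ hxy
      rwa [hcomp x hx0, hcomp y hy0] at h
    rw [Finset.card_image_of_injOn hinj]
    exact hUcard e₀ he₀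
  have hGfree : ¬ ∃ v : ℕ → Fin (N + 1), IsOrdCrossPath r k G v := by
    rintro ⟨v, hv⟩
    apply hUfree
    refine ⟨f₁ ∘ v, path_map hf₁mono ?_ hv⟩
    intro e he
    rw [hG] at he
    obtain ⟨e₀, he₀, rfl⟩ := Finset.mem_image.mp he
    rw [hdown e₀ ((hUprop e₀ he₀).1)]
    exact he₀
  have hUle : U.card ≤ exOrdP (N + 1) r k := by
    rw [← hGcard]
    exact exOrdP_ge G hGunif hGfree
  -- properties of O
  have hOmem : ∀ e ∈ O, e ∈ H ∧ (0 : Fin (N + 2)) ∉ e ∧ (1 : Fin (N + 2)) ∈ e ∧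
      insert (0 : Fin (N + 2)) (e.erase 1) ∈ H ∧ e.card = r := by
    intro e he
    rw [hOdef] at he
    have hA' := hAmem e (Finset.mem_inter.mp he).1
    have hψ' := hψCprop e (Finset.mem_inter.mp he).2
    exact ⟨hA'.1, hA'.2, hψ'.2.1, hψ'.2.2.1, hψ'.2.2.2⟩
  have hOval : ∀ e ∈ O, ∀ x ∈ e.erase (1 : Fin (N + 2)), 2 ≤ x.val := by
    intro e he x hx
    obtain ⟨_, h0e, h1e, _, _⟩ := hOmem e he
    have hx1 : x ≠ 1 := (Finset.mem_erase.mp hx).1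
    have hxe : x ∈ e := (Finset.mem_erase.mp hx).2
    have hx0 : x ≠ 0 := fun h => h0e (h ▸ hxe)
    have hv0 : x.val ≠ 0 := fun h => hx0 (Fin.ext (by rw [h, Fin.val_zero]))
    have hv1 : x.val ≠ 1 := fun h => hx1 (Fin.ext (by rw [h, Fin.val_one]))
    omega
  -- transfer down to Fin N
  set g₂ : Fin (N + 2) → Fin N := fun x => ⟨x.val - 2, by omega⟩ with hg₂
  set f₂ : Fin N → Fin (N + 2) := fun y => ⟨y.val + 2, by omega⟩ with hf₂
  have hf₂mono : StrictMono f₂ := by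
    intro a b hab
    rw [hf₂, Fin.lt_def]
    simp only
    rw [Fin.lt_def] at hab
    omega
  have hcomp2 : ∀ x : Fin (N + 2), 2 ≤ x.val → f₂ (g₂ x) = x := by
    intro x hx
    rw [hg₂, hf₂]
    apply Fin.ext
    simp only
    omega
  have hf₂val : ∀ y : Fin N, 2 ≤ (f₂ y).val := by
    intro y
    rw [hf₂]
    simp only
    omega
  have hup : ∀ e ∈ O, ((e.erase (1 : Fin (N + 2))).image g₂).image f₂ = e.erase 1 := by
    intro e he
    rw [Finset.image_image]
    have h : Finset.image (f₂ ∘ g₂) (e.erase 1) = Finset.image id (e.erase 1) := by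
      apply Finset.image_congr
      intro x hx
      exact hcomp2 x (hOval e he x (Finset.mem_coe.mp hx))
    rw [h, Finset.image_id]
  set Dfam := O.image (fun e => (e.erase (1 : Fin (N + 2))).image g₂) with hDfam
  have hDcard : Dfam.card = O.card := by
    rw [hDfam]
    apply Finset.card_image_of_injOn
    intro e1 h1 e2 h2 he
    have h1' := Finset.mem_coe.mp h1
    have h2' := Finset.mem_coe.mp h2
    have d1 := hup e1 h1'
    have d2 := hup e2 h2'
    have he' : e1.erase (1 : Fin (N + 2)) = e2.erase 1 := by
      rw [← d1, ← d2]
      exact congrArg _ he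
    have h := congrArg (fun s : Finset (Fin (N + 2)) => insert (1 : Fin (N + 2)) s) he'
    rwa [Finset.insert_erase (hOmem e1 h1').2.2.1, Finset.insert_erase (hOmem e2 h2').2.2.1] at h
  have hDunif : ∀ S ∈ Dfam, S.card = r - 1 := by
    intro S hS
    rw [hDfam] at hS
    obtain ⟨e, he, rfl⟩ := Finset.mem_image.mp hS
    have hinj : Set.InjOn g₂ ↑(e.erase (1 : Fin (N + 2))) := by
      intro x hx y hy hxy
      have h := congrArg f₂ hxy
      rwa [hcomp2 x (hOval e he x (Finset.mem_coe.mp hx)),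
        hcomp2 y (hOval e he y (Finset.mem_coe.mp hy))] at h
    rw [Finset.card_image_of_injOn hinj, Finset.card_erase_of_mem (hOmem e he).2.2.1,
      (hOmem e he).2.2.2.2]
  have hDfree : ¬ ∃ ww : ℕ → Fin N, IsOrdCrossPath (r - 1) (k - 1) Dfam ww := by
    rintro ⟨ww, hww⟩
    obtain ⟨p1, p2, p3, p4, p5, p6⟩ := hww
    apply hf
    apply claim2lift hr hk2 hkr (f₂ ∘ ww)
    · intro j
      exact hf₂val (ww j)
    · intro i j hi hj he
      exact p1 i j hi hj (hf₂mono.injective he)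
    · intro i hi
      have hS := p2 i hi
      rw [hDfam] at hS
      obtain ⟨e, heO, hSe⟩ := Finset.mem_image.mp hS
      have himg : Finset.image (f₂ ∘ ww) (Finset.Ico i (i + (r - 1))) = e.erase 1 := by
        rw [← Finset.image_image, ← hSe]
        exact hup e heO
      rw [himg]
      constructor
      · exact (hOmem e heO).2.2.2.1
      · rw [Finset.insert_erase (hOmem e heO).2.2.1]
        exact (hOmem e heO).1
    · intro i hi
      exact hf₂mono (p3 i hi)
    · intro j i h1 h2 h3
      exact ⟨hf₂mono ((p4 j i h1 h2 h3).1), hf₂mono ((p4 j i h1 h2 h3).2)⟩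
  have hOle : O.card ≤ exOrdP N (r - 1) (k - 1) := by
    rw [← hDcard]
    exact exOrdP_ge Dfam hDunif hDfree
  -- bound on B
  have hBle : B.card ≤ N.choose (r - 2) := by
    have h1univ : (1 : Fin (N + 2)) ∈ Finset.univ.erase (0 : Fin (N + 2)) := by
      rw [Finset.mem_erase]
      exact ⟨fun h => h01 h.symm, Finset.mem_univ _⟩
    have hs₀card : ((Finset.univ.erase (0 : Fin (N + 2))).erase 1).card = N := by
      rw [Finset.card_erase_of_mem h1univ, Finset.card_erase_of_mem (Finset.mem_univ _),
        Finset.card_univ, Fintype.card_fin]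
      omega
    calc B.card ≤ (((Finset.univ.erase (0 : Fin (N + 2))).erase 1).powersetCard (r - 2)).card := by
          apply Finset.card_le_card_of_injOn (fun e => (e.erase 0).erase 1)
          · intro e he
            obtain ⟨heH, h0e, h1e⟩ := hBmem e he
            simp only [Finset.mem_coe]
            rw [Finset.mem_powersetCard]
            constructor
            · intro x hx
              rw [Finset.mem_erase] at hx ⊢
              rw [Finset.mem_erase] at hx
              exact ⟨hx.1, by rw [Finset.mem_erase]; exact ⟨hx.2.1, Finset.mem_univ _⟩⟩
            · rw [Finset.card_erase_of_mem (by rw [Finset.mem_erase]; exact ⟨fun h => h01 h.symm, h1e⟩),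
                Finset.card_erase_of_mem h0e, hu e heH]
              omega
          · intro e1 h1 e2 h2 he
            have hb1 := hBmem e1 (Finset.mem_coe.mp h1)
            have hb2 := hBmem e2 (Finset.mem_coe.mp h2)
            have m1 : (1 : Fin (N + 2)) ∈ e1.erase 0 := by
              rw [Finset.mem_erase]; exact ⟨fun h => h01 h.symm, hb1.2.2⟩
            have m2 : (1 : Fin (N + 2)) ∈ e2.erase 0 := by
              rw [Finset.mem_erase]; exact ⟨fun h => h01 h.symm, hb2.2.2⟩
            have h' : e1.erase 0 = e2.erase 0 := by
              have h := congrArg (fun s : Finset (Fin (N + 2)) => insert (1 : Fin (N + 2)) s) he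
              simp only at h
              rwa [Finset.insert_erase m1, Finset.insert_erase m2] at h
            have h'' := congrArg (fun s : Finset (Fin (N + 2)) => insert (0 : Fin (N + 2)) s) h'
            rwa [Finset.insert_erase hb1.2.1, Finset.insert_erase hb2.2.1] at h''
      _ = N.choose (r - 2) := by rw [Finset.card_powersetCard, hs₀card]
  -- final accounting
  have hACO : U.card + O.card = A.card + ψC.card := Finset.card_union_add_card_inter A ψC
  omega

end Stmt3Aux

/-- For `r ≥ 3`, `2 ≤ k ≤ r+1` and `n ≥ r+k`,
`ex_→(n, P_k^r) ≤ C(n−2, r−2) + ex_→(n−2, P_{k−1}^{r−1}) + ex_→(n−1, P_k^r)`. -/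
theorem stmt3 (r k n : ℕ) (hr : 3 ≤ r) (hk2 : 2 ≤ k) (hkr : k ≤ r + 1) (hn : r + k ≤ n) :
    exOrdP n r k ≤
      (n - 2).choose (r - 2) + exOrdP (n - 2) (r - 1) (k - 1) + exOrdP (n - 1) r k := by
  obtain ⟨N, rfl⟩ : ∃ N, n = N + 2 := ⟨n - 2, by omega⟩
  rw [show N + 2 - 2 = N by omega, show N + 2 - 1 = N + 1 by omega]
  exact Stmt3Aux.exOrdP_le (by omega)
    (fun H hu hfree => Stmt3Aux.main hr hk2 hkr (by omega) H hu hfree)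
end

section
/- Let r ≥ 2 and k ≥ 1, and let H be an ordered r-graph whose vertex set is partitioned into consecutive intervals X_1 < X_2 < ... < X_r of sizes n_1, n_2, ..., n_r (all positive) such that every edge of H has exactly one vertex in each X_i. If H contains no crossing k-path P_k^r, then the number of edges of H satisfies e(H) ≤ k · Σ_{i=1}^r Π_{j≠i} n_j. -/
/-- A "partite bump path" of length `t`: `C s` gives the coordinates of the `s`-th edge. -/
def QP (r n : ℕ) (ns : ℕ → ℕ) (H : Finset (Finset (Fin n))) (t : ℕ) (C : ℕ → ℕ → Fin n) : Prop :=
  (∀ s, s < t → ∀ i, i < r →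
      (∑ j ∈ Finset.range i, ns j) ≤ (C s i : ℕ) ∧ (C s i : ℕ) < ∑ j ∈ Finset.range (i+1), ns j) ∧
  (∀ s, s < t → Finset.image (C s) (Finset.range r) ∈ H) ∧
  (∀ s, s + 1 < t →
      (∀ j, j < r → j ≠ s % r → C (s+1) j = C s j) ∧ (C s (s % r) : ℕ) < C (s+1) (s % r))

lemma QP_mono {r n : ℕ} {ns : ℕ → ℕ} {H : Finset (Finset (Fin n))} {C : ℕ → ℕ → Fin n}
    {t t' : ℕ} (h : t' ≤ t) (hQ : QP r n ns H t C) : QP r n ns H t' C :=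
  ⟨fun s hs => hQ.1 s (lt_of_lt_of_le hs h), fun s hs => hQ.2.1 s (lt_of_lt_of_le hs h),
   fun s hs => hQ.2.2 s (lt_of_lt_of_le hs h)⟩

lemma qp_cross (r k n : ℕ) (ns : ℕ → ℕ) (H : Finset (Finset (Fin n)))
    (hr : 2 ≤ r) (hk : 1 ≤ k) (C : ℕ → ℕ → Fin n)
    (hQ : QP r n ns H k C) :
    ∃ v : ℕ → Fin n, IsOrdCrossPath r k H v := by
  obtain ⟨htr, hed, hbp⟩ := hQ
  have hr0 : 0 < r := by omega
  have hoffmono : ∀ i j : ℕ, i ≤ j →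
      (∑ l ∈ Finset.range i, ns l) ≤ ∑ l ∈ Finset.range j, ns l := fun i j h =>
    Finset.sum_le_sum_of_subset (Finset.range_subset_range.2 h)
  have hcross : ∀ s s' p q : ℕ, s ≤ k-1 → s' ≤ k-1 → p < q → q < r →
      (C s p : ℕ) < (C s' q : ℕ) := by
    intro s s' p q hs hs' hpq hq
    have h1 := (htr s (by omega) p (by omega)).2
    have h2 := (htr s' (by omega) q hq).1
    have h3 := hoffmono (p+1) q (by omega)
    omega
  have hmono : ∀ p s s', p < r → s ≤ s' → s' ≤ k - 1 → (C s p : ℕ) ≤ C s' p := by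
    intro p s s' hp hss
    induction s', hss using Nat.le_induction with
    | base => intro _; exact le_rfl
    | succ m hm ih =>
      intro hm1
      have h1 := ih (by omega)
      have hb := hbp m (by omega)
      by_cases hpm : p = m % r
      · subst hpm; omega
      · rw [hb.1 p hp hpm]; omega
  have hconst : ∀ p s s', p < r → s ≤ s' → s' ≤ k - 1 →
      (∀ u, s ≤ u → u < s' → u % r ≠ p) → C s p = C s' p := by
    intro p s s' hp hss
    induction s', hss using Nat.le_induction with
    | base => intro _ _; rfl
    | succ m hm ih =>
      intro hm1 hgap
      have h1 := ih (by omega) (fun u hu1 hu2 => hgap u hu1 (by omega))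
      have hb := hbp m (by omega)
      rw [h1, ← hb.1 p hp (fun hc => hgap m hm (by omega) (hc ▸ rfl))]
  have hstrict : ∀ s s', s < s' → s' ≤ k - 1 → (C s (s % r) : ℕ) < C s' (s % r) := by
    intro s s' h1 h2
    have hb := hbp s (by omega)
    have hm := hmono (s % r) (s+1) s' (Nat.mod_lt _ hr0) h1 h2
    omega
  set v : ℕ → Fin n := fun m => C (min m (k-1)) (m % r) with hv
  have hvdef : ∀ m, v m = C (min m (k-1)) (m % r) := fun m => rfl
  have L1 : ∀ i j, i < j → j < k + r - 1 → i % r = j % r → (v i : ℕ) < v j := by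
    intro i j hij hj hmod
    have hir : i + r ≤ j := by
      have hd : r ∣ j - i := (Nat.modEq_iff_dvd' (le_of_lt hij)).1 hmod
      have := Nat.le_of_dvd (by omega) hd
      omega
    have h1 : min i (k-1) = i := by omega
    have h2 : min j (k-1) ≤ k - 1 := Nat.min_le_right _ _
    have h3 : i < min j (k-1) := by omega
    have := hstrict i (min j (k-1)) h3 h2
    rw [hvdef, hvdef, h1, ← hmod]
    exact this
  have hvlt : ∀ i j, i % r < j % r → j % r < r → (v i : ℕ) < v j := by
    intro i j h1 h2
    exact hcross _ _ _ _ (Nat.min_le_right _ _) (Nat.min_le_right _ _) h1 h2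
  refine ⟨v, ?_, ?_, ?_, ?_, ?_, ?_⟩
  · -- injectivity
    intro i j hi hj hvij
    by_contra hne
    have hval : (v i : ℕ) = v j := congrArg Fin.val hvij
    rcases Nat.lt_trichotomy (i % r) (j % r) with h | h | h
    · have := hvlt i j h (Nat.mod_lt _ hr0); omega
    · rcases Nat.lt_trichotomy i j with h' | h' | h'
      · have := L1 i j h' hj h; omega
      · exact hne h'
      · have := L1 j i h' hi h.symm; omega
    · have := hvlt j i h (Nat.mod_lt _ hr0); omega
  · -- edges
    intro i hik
    have hkey : ∀ m, i ≤ m → m < i + r → v m = C i (m % r) := by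
      intro m hm1 hm2
      have hmin : i ≤ min m (k-1) := by omega
      have heq : C i (m % r) = C (min m (k-1)) (m % r) := by
        apply hconst (m % r) i (min m (k-1)) (Nat.mod_lt _ hr0) hmin (Nat.min_le_right _ _)
        intro u hu1 hu2 hequ
        have hum : u < m := by omega
        have hd : r ∣ m - u := (Nat.modEq_iff_dvd' (le_of_lt hum)).1 hequ
        have := Nat.le_of_dvd (by omega) hd
        omega
      rw [hvdef, heq]
    have himg : Finset.image v (Finset.Ico i (i+r)) = Finset.image (C i) (Finset.range r) := by
      apply Finset.Subset.antisymm
      · intro x hx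
        simp only [Finset.mem_image, Finset.mem_Ico, Finset.mem_range] at hx ⊢
        obtain ⟨m, ⟨hm1, hm2⟩, hmx⟩ := hx
        exact ⟨m % r, Nat.mod_lt _ hr0, by rw [← hkey m hm1 hm2]; exact hmx⟩
      · intro x hx
        simp only [Finset.mem_image, Finset.mem_Ico, Finset.mem_range] at hx ⊢
        obtain ⟨p, hp, hpx⟩ := hx
        set d := (p + r - i % r) % r with hd
        have hdr : d < r := Nat.mod_lt _ hr0
        have himr : i % r < r := Nat.mod_lt _ hr0
        have hmod : (i + d) % r = p := by
          rw [Nat.add_mod i d r, Nat.mod_eq_of_lt hdr, hd, Nat.add_mod_mod]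
          have he : i % r + (p + r - i % r) = p + r := by omega
          rw [he, Nat.add_mod_right, Nat.mod_eq_of_lt hp]
        refine ⟨i + d, ⟨by omega, by omega⟩, ?_⟩
        rw [hkey (i+d) (by omega) (by omega), hmod]
        exact hpx
    rw [himg]
    exact hed i hik
  · -- consecutive
    intro i hi1
    rw [Fin.lt_def]
    exact hvlt i (i+1) (by rw [Nat.mod_eq_of_lt (by omega : i < r), Nat.mod_eq_of_lt hi1]; omega)
      (by rw [Nat.mod_eq_of_lt hi1]; exact hi1)
  · -- chains
    intro j i hj1 hi1 hle
    have hm2 : (j + i*r) % r = j := by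
      rw [Nat.add_mul_mod_self_right]; exact Nat.mod_eq_of_lt (by omega)
    constructor
    · rw [Fin.lt_def]
      have hmul : (i-1) * r < i * r := (Nat.mul_lt_mul_right hr0).2 (by omega)
      have hm1 : (j + (i-1)*r) % r = j := by
        rw [Nat.add_mul_mod_self_right]; exact Nat.mod_eq_of_lt (by omega)
      exact L1 _ _ (by omega) (by omega) (hm1.trans hm2.symm)
    · rw [Fin.lt_def]
      exact hvlt (j + i*r) (j+1)
        (by rw [hm2, Nat.mod_eq_of_lt hj1]; omega)
        (by rw [Nat.mod_eq_of_lt hj1]; exact hj1)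
  · -- v 0 < v (r-1)
    rw [Fin.lt_def]
    exact hvlt 0 (r-1)
      (by rw [Nat.zero_mod, Nat.mod_eq_of_lt (by omega : r - 1 < r)]; omega)
      (by rw [Nat.mod_eq_of_lt (by omega : r - 1 < r)]; omega)
  · -- last chain
    intro i hi hle
    obtain ⟨i', rfl⟩ : ∃ i', i = i' + 1 := ⟨i - 1, by omega⟩
    have hra : (i'+1) * r - 1 = r - 1 + i' * r := by
      rw [add_mul, one_mul]; omega
    have hrb : (i'+1+1) * r - 1 = r - 1 + (i'+1) * r := by
      rw [add_mul _ _ r, one_mul]; omega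
    have hma : (r - 1 + i' * r) % r = r - 1 := by
      rw [Nat.add_mul_mod_self_right]; exact Nat.mod_eq_of_lt (by omega)
    have hmb : (r - 1 + (i'+1) * r) % r = r - 1 := by
      rw [Nat.add_mul_mod_self_right]; exact Nat.mod_eq_of_lt (by omega)
    have hmul : i' * r < (i'+1) * r := (Nat.mul_lt_mul_right hr0).2 (by omega)
    have hub : (i'+1+1) * r ≤ k + r - 2 := hle
    rw [Fin.lt_def, hra, hrb]
    exact L1 _ _ (by omega) (by omega) (hma.trans hmb.symm)


/-- Let `r ≥ 2`, `k ≥ 1`, and let `H` be an ordered `r`-graph on a vertex set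
partitioned into consecutive intervals `X_1 < X_2 < ... < X_r` of positive sizes
`ns 0, ns 1, ..., ns (r-1)`, every edge having exactly one vertex in each interval. If `H` has
no crossing `k`-path then `e(H) ≤ k · Σ_{i<r} Π_{j≠i} ns j`. -/
theorem stmt5 (r k n : ℕ) (hr : 2 ≤ r) (hk : 1 ≤ k) (ns : ℕ → ℕ)
    (hpos : ∀ i : ℕ, i < r → 0 < ns i) (hsum : n = ∑ i ∈ Finset.range r, ns i)
    (H : Finset (Finset (Fin n)))
    (hedge : ∀ e ∈ H, e.card = r ∧ ∀ i : ℕ, i < r → ∃ x ∈ e,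
      (∑ j ∈ Finset.range i, ns j) ≤ (x : ℕ) ∧ (x : ℕ) < ∑ j ∈ Finset.range (i + 1), ns j)
    (hfree : ¬ ∃ v : ℕ → Fin n, IsOrdCrossPath r k H v) :
    H.card ≤ k * ∑ i ∈ Finset.range r, ∏ j ∈ (Finset.range r).erase i, ns j := by
  classical
  have hr0 : 0 < r := by omega
  have hn0 : 0 < n := by
    have h1 := hpos 0 hr0
    have h2 : ns 0 ≤ ∑ i ∈ Finset.range r, ns i :=
      Finset.single_le_sum (fun _ _ => Nat.zero_le _) (Finset.mem_range.2 hr0)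
    omega
  haveI : Nonempty (Fin n) := ⟨⟨0, hn0⟩⟩
  have hco : ∀ e ∈ H, ∀ i, i < r → ∃ x, x ∈ e ∧
      (∑ j ∈ Finset.range i, ns j) ≤ (x : ℕ) ∧ (x : ℕ) < ∑ j ∈ Finset.range (i+1), ns j := by
    intro e he i hi
    obtain ⟨x, hx1, hx2⟩ := (hedge e he).2 i hi
    exact ⟨x, hx1, hx2⟩
  choose! c h1 h2 h3 using hco
  have himage : ∀ e ∈ H, Finset.image (c e) (Finset.range r) = e := by
    intro e he
    apply Finset.eq_of_subset_of_card_le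
    · intro x hx
      obtain ⟨i, hi, rfl⟩ := Finset.mem_image.1 hx
      exact h1 e he i (Finset.mem_range.1 hi)
    · rw [(hedge e he).1, Finset.card_image_of_injOn, Finset.card_range]
      intro p hp q hq hpq
      have hpr : p < r := Finset.mem_range.1 (Finset.mem_coe.1 hp)
      have hqr : q < r := Finset.mem_range.1 (Finset.mem_coe.1 hq)
      have hval : (c e p : ℕ) = c e q := congrArg Fin.val hpq
      by_contra hne
      have hoffmono : ∀ i j : ℕ, i ≤ j →
          (∑ l ∈ Finset.range i, ns l) ≤ ∑ l ∈ Finset.range j, ns l := fun i j h =>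
        Finset.sum_le_sum_of_subset (Finset.range_subset_range.2 h)
      rcases Nat.lt_trichotomy p q with h | h | h
      · have ha := h3 e he p hpr
        have hb := h2 e he q hqr
        have hc := hoffmono (p+1) q (by omega)
        omega
      · exact hne h
      · have ha := h3 e he q hqr
        have hb := h2 e he p hpr
        have hc := hoffmono (q+1) p (by omega)
        omega
  have hQbound : ∀ t (C : ℕ → ℕ → Fin n), QP r n ns H t C → t ≤ k - 1 := by
    intro t C hQt
    by_contra hlt
    exact hfree (qp_cross r k n ns H hr hk C (QP_mono (by omega) hQt))
  set S : Finset (Fin n) → Set ℕ := fun e =>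
    {t | 0 < t ∧ ∃ C : ℕ → ℕ → Fin n, QP r n ns H t C ∧ ∀ i, i < r → C (t-1) i = c e i}
    with hSdef
  have hSb : ∀ e, ∀ t ∈ S e, t ≤ k - 1 := by
    intro e t ht
    obtain ⟨_, C, hQ, _⟩ := ht
    exact hQbound t C hQ
  have hSbdd : ∀ e, BddAbove (S e) := fun e => ⟨k-1, fun t ht => hSb e t ht⟩
  have hS1 : ∀ e ∈ H, 1 ∈ S e := by
    intro e he
    refine ⟨one_pos, fun _ => c e, ⟨?_, ?_, ?_⟩, ?_⟩
    · intro s _ i hi; exact ⟨h2 e he i hi, h3 e he i hi⟩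
    · intro s _; rw [himage e he]; exact he
    · intro s hs; omega
    · intro i _; rfl
  set f : Finset (Fin n) → ℕ := fun e => sSup (S e) with hfdef
  have hfmem : ∀ e ∈ H, f e ∈ S e := fun e he =>
    Nat.sSup_mem ⟨1, hS1 e he⟩ (hSbdd e)
  have hfub : ∀ e ∈ H, 1 ≤ f e ∧ f e ≤ k - 1 := fun e he =>
    ⟨le_csSup (hSbdd e) (hS1 e he), hSb e _ (hfmem e he)⟩
  -- extension lemma
  have hext : ∀ e ∈ H, ∀ e' ∈ H, ∀ t, t ∈ S e →
      (∀ j, j < r → j ≠ (t-1) % r → c e' j = c e j) →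
      ((c e ((t-1) % r) : ℕ) < c e' ((t-1) % r)) → (t+1) ∈ S e' := by
    intro e he e' he' t ht hsame hlt
    obtain ⟨ht0, C, ⟨htr, hed, hbp⟩, hend⟩ := ht
    refine ⟨by omega, fun s => if s < t then C s else c e', ⟨?_, ?_, ?_⟩, ?_⟩
    · intro s hs i hi
      by_cases h : s < t
      · simpa [h] using htr s h i hi
      · simp only [if_neg h]
        exact ⟨h2 e' he' i hi, h3 e' he' i hi⟩
    · intro s hs
      by_cases h : s < t
      · simpa [h] using hed s h
      · simp only [if_neg h]
        rw [himage e' he']; exact he'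
    · intro s hs
      have hst : s < t := by omega
      by_cases h : s + 1 < t
      · simp only [if_pos hst, if_pos h]
        exact hbp s h
      · have hseq : s = t - 1 := by omega
        simp only [if_pos hst, if_neg h]
        constructor
        · intro j hj hne
          rw [hsame j hj (by rw [← hseq]; exact hne)]
          rw [← hend j hj, hseq]
        · rw [hseq, hend ((t-1) % r) (Nat.mod_lt _ hr0)]
          exact hlt
    · intro i hi
      simp only [Nat.add_sub_cancel, if_neg (lt_irrefl t)]
  -- fiber cardinality bound
  have hcard : ∀ t, 1 ≤ t →
      (H.filter (fun e => f e = t)).card ≤ ∏ j ∈ (Finset.range r).erase ((t-1) % r), ns j := by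
    intro t ht1
    set i := (t-1) % r with hidef
    have hle : (H.filter (fun e => f e = t)).card ≤
        (((Finset.range r).erase i).pi (fun j => Finset.range (ns j))).card := by
      apply Finset.card_le_card_of_injOn
        (fun e => fun j _ => (c e j : ℕ) - ∑ l ∈ Finset.range j, ns l)
      · intro e heT
        rw [Finset.mem_coe, Finset.mem_filter] at heT
        obtain ⟨he, hfe⟩ := heT
        rw [Finset.mem_coe, Finset.mem_pi]
        intro j hj
        have hjr : j < r := Finset.mem_range.1 (Finset.mem_of_mem_erase hj)
        have hlo := h2 e he j hjr
        have hhi := h3 e he j hjr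
        rw [Finset.mem_range]
        have hss : ∑ l ∈ Finset.range (j+1), ns l = (∑ l ∈ Finset.range j, ns l) + ns j :=
          Finset.sum_range_succ _ _
        dsimp only
        omega
      · intro e heM e' he'M heq
        rw [Finset.mem_coe, Finset.mem_filter] at heM he'M
        obtain ⟨he, hfe⟩ := heM
        obtain ⟨he', hfe'⟩ := he'M
        have hcoords : ∀ j, j < r → j ≠ i → c e j = c e' j := by
          intro j hjr hji
          have hjm : j ∈ (Finset.range r).erase i :=
            Finset.mem_erase.2 ⟨hji, Finset.mem_range.2 hjr⟩
          have hq := congrFun (congrFun heq j) hjm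
          dsimp only at hq
          have hlo := h2 e he j hjr
          have hlo' := h2 e' he' j hjr
          have : (c e j : ℕ) = c e' j := by omega
          exact Fin.val_injective this
        by_cases hci : (c e i : ℕ) = c e' i
        · rw [← himage e he, ← himage e' he']
          apply Finset.image_congr
          intro j hj
          have hjr : j < r := Finset.mem_range.1 hj
          by_cases h : j = i
          · subst h; exact Fin.val_injective hci
          · exact hcoords j hjr h
        · exfalso
          rcases Nat.lt_or_ge (c e i : ℕ) (c e' i : ℕ) with hlt | hge
          · have hmem := hext e he e' he' t (hfe ▸ hfmem e he)
              (fun j hj hji => (hcoords j hj (by rw [hidef]; exact hji)).symm)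
              (by rw [← hidef]; exact hlt)
            have hle2 : t + 1 ≤ f e' := le_csSup (hSbdd e') hmem
            omega
          · have hlt' : (c e' i : ℕ) < c e i := by omega
            have hmem := hext e' he' e he t (hfe' ▸ hfmem e' he')
              (fun j hj hji => hcoords j hj (by rw [hidef]; exact hji))
              (by rw [← hidef]; exact hlt')
            have hle2 : t + 1 ≤ f e := le_csSup (hSbdd e) hmem
            omega
    calc (H.filter (fun e => f e = t)).card
        ≤ (((Finset.range r).erase i).pi (fun j => Finset.range (ns j))).card := hle
      _ = ∏ j ∈ (Finset.range r).erase i, ns j := by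
          rw [Finset.card_pi]
          exact Finset.prod_congr rfl (fun j _ => Finset.card_range _)
  have hmap : ∀ e ∈ H, f e ∈ Finset.Icc 1 (k-1) := fun e he =>
    Finset.mem_Icc.2 ⟨(hfub e he).1, (hfub e he).2⟩
  rw [Finset.card_eq_sum_card_fiberwise hmap]
  calc ∑ t ∈ Finset.Icc 1 (k-1), (H.filter (fun e => f e = t)).card
      ≤ ∑ t ∈ Finset.Icc 1 (k-1), ∑ i ∈ Finset.range r, ∏ j ∈ (Finset.range r).erase i, ns j := by
        apply Finset.sum_le_sum
        intro t htm
        refine (hcard t (Finset.mem_Icc.1 htm).1).trans ?_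
        exact Finset.single_le_sum (f := fun i => ∏ j ∈ (Finset.range r).erase i, ns j)
          (fun _ _ => Nat.zero_le _) (Finset.mem_range.2 (Nat.mod_lt _ hr0))
    _ = (k-1) * ∑ i ∈ Finset.range r, ∏ j ∈ (Finset.range r).erase i, ns j := by
        rw [Finset.sum_const, Nat.card_Icc, smul_eq_mul]
        congr 1
    _ ≤ k * ∑ i ∈ Finset.range r, ∏ j ∈ (Finset.range r).erase i, ns j :=
        Nat.mul_le_mul_right _ (by omega)
end

section
/- For all integers 2 ≤ k ≤ r and n > r, ex_↻(n, P_k^r) ≤ ((k−1)(r−1)/r) · C(n, r−1). -/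
/-- `CycChain ℓ w` says that starting at `w 0` and moving clockwise around the cyclically
ordered set `Fin n` (clockwise = increasing residues), one encounters
`w 1, w 2, ..., w (ℓ-1)` in this order, i.e. `w 0 < w 1 < ... < w (ℓ-1) (< w 0)`
in the cyclic order. -/
def CycChain {n : ℕ} (ℓ : ℕ) (w : ℕ → Fin n) : Prop :=
  ∀ i j : ℕ, i < j → j < ℓ → w i - w 0 < w j - w 0

/-- `IsCycCrossPath r k H v` says that `v 0, v 1, ..., v (k+r-2)` are distinct vertices forming
an `r`-uniform crossing `k`-path in the convex geometric `r`-graph `H` on the cyclically ordered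
vertex set `Fin n`: the edges are `{v i, ..., v (i+r-1)}` for `0 ≤ i ≤ k-1`, and in the cyclic
order:
(i) `v 0 < v 1 < ... < v (r-1)`;
(ii) for each `j < r-1`, `v j < v (j+r) < v (j+2r) < ... < v (j+1)`, the chain running over all
indices `j + i*r ≤ k+r-2`;
(iii) `v 0 < v (r-1) < v (2r-1) < ... < v (⌊(r+k-2)/r⌋*r - 1)`. -/
def IsCycCrossPath (r k : ℕ) {n : ℕ} (H : Finset (Finset (Fin n))) (v : ℕ → Fin n) : Prop :=
  (∀ i j : ℕ, i < k + r - 1 → j < k + r - 1 → v i = v j → i = j) ∧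
  (∀ i : ℕ, i < k → Finset.image v (Finset.Ico i (i + r)) ∈ H) ∧
  CycChain r v ∧
  (∀ j : ℕ, j + 1 < r →
    CycChain ((k + r - 2 - j) / r + 2)
      (fun i => if i = 0 then v j
                else if i ≤ (k + r - 2 - j) / r then v (j + i * r) else v (j + 1))) ∧
  CycChain ((k + r - 2) / r + 1) (fun i => if i = 0 then v 0 else v (i * r - 1))

/-- `exCycP n r k` is the maximum number of edges in an `n`-vertex convex geometric `r`-graph
containing no crossing `k`-path `P_k^r`. -/
noncomputable def exCycP (n r k : ℕ) : ℕ :=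
  sSup {m | ∃ H : Finset (Finset (Fin n)),
    (∀ e ∈ H, e.card = r) ∧ (¬ ∃ v : ℕ → Fin n, IsCycCrossPath r k H v) ∧ H.card = m}

set_option linter.unusedSectionVars false


namespace CGP
variable {n : ℕ} [NeZero n]

/-- position of `x` relative to base `a`, going clockwise. -/
def cpos (a x : Fin n) : ℕ := (x - a).val

lemma cpos_lt (a x : Fin n) : cpos a x < n := (x - a).isLt

lemma cpos_self (a : Fin n) : cpos a a = 0 := by simp [cpos]

lemma cpos_inj {a x y : Fin n} (h : cpos a x = cpos a y) : x = y := by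
  have : x - a = y - a := Fin.val_injective h
  exact sub_left_injective this

lemma cpos_eq_zero_iff {a x : Fin n} : cpos a x = 0 ↔ x = a := by
  constructor
  · intro h
    have h2 : cpos a x = cpos a a := by rw [cpos_self]; exact h
    exact cpos_inj h2
  · rintro rfl; simp [cpos_self]

lemma cpos_key (o x y : Fin n) : (cpos o x + cpos x y) % n = cpos o y := by
  have h : (x - o) + (y - x) = y - o := by abel
  have := Fin.val_add (x - o) (y - x)
  rw [h] at this
  simpa [cpos] using this.symm

lemma cpos_add {o x y : Fin n} (h : cpos o x + cpos x y < n) :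
    cpos o y = cpos o x + cpos x y := by
  rw [← cpos_key o x y, Nat.mod_eq_of_lt h]

private lemma mod_big {s : ℕ} (h1 : n ≤ s) (h2 : s < 2 * n) : s % n = s - n := by
  rw [Nat.mod_eq_sub_mod h1, Nat.mod_eq_of_lt (by omega)]

lemma cpos_sub {o x y : Fin n} (h : cpos o x ≤ cpos o y) :
    cpos x y = cpos o y - cpos o x := by
  have key := cpos_key o x y
  rcases Nat.lt_or_ge (cpos o x + cpos x y) n with hlt | hge
  · rw [Nat.mod_eq_of_lt hlt] at key; omega
  · rw [mod_big hge (by have := cpos_lt o x; have := cpos_lt x y; omega)] at key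
    have := cpos_lt x y; have := cpos_lt o y; omega

lemma cpos_wrap {o x y : Fin n} (h : cpos o y < cpos o x) :
    cpos x y = cpos o y + n - cpos o x := by
  have key := cpos_key o x y
  rcases Nat.lt_or_ge (cpos o x + cpos x y) n with hlt | hge
  · rw [Nat.mod_eq_of_lt hlt] at key; omega
  · rw [mod_big hge (by have := cpos_lt o x; have := cpos_lt x y; omega)] at key
    have := cpos_lt o x; omega

/-- the element of `s` closest to `a` going clockwise (weakly; `a` itself if `a ∈ s`). -/
def mina (a : Fin n) (s : Finset (Fin n)) : Fin n := a + ((s.image (· - a)).min.getD 0)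

lemma mina_spec {a : Fin n} {s : Finset (Fin n)} (h : s.Nonempty) :
    mina a s ∈ s ∧ ∀ x ∈ s, cpos a (mina a s) ≤ cpos a x := by
  obtain ⟨m, hm⟩ := Finset.min_of_nonempty (h.image (· - a))
  have hg : mina a s = a + m := by
    simp only [mina, hm]; rfl
  obtain ⟨x, hx, hxa⟩ := Finset.mem_image.mp (Finset.mem_of_min hm)
  have hmem : mina a s = x := by rw [hg, ← hxa, add_comm, sub_add_cancel]
  constructor
  · rwa [hmem]
  · intro y hy
    have h2 : m ≤ y - a := Finset.min_le_of_eq (Finset.mem_image_of_mem (· - a) hy) hm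
    have h3 : cpos a (mina a s) = m.val := by rw [hg, cpos, add_sub_cancel_left]
    rw [h3]; exact h2

lemma mina_mem {a : Fin n} {s : Finset (Fin n)} (h : s.Nonempty) : mina a s ∈ s :=
  (mina_spec h).1

lemma mina_min {a : Fin n} {s : Finset (Fin n)} (h : s.Nonempty) :
    ∀ x ∈ s, cpos a (mina a s) ≤ cpos a x := (mina_spec h).2

/-- characterization of `mina` as the unique argmin. -/
lemma mina_eq {a m : Fin n} {s : Finset (Fin n)} (hm : m ∈ s)
    (hmin : ∀ x ∈ s, cpos a m ≤ cpos a x) : mina a s = m := by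
  have hne : s.Nonempty := ⟨m, hm⟩
  exact cpos_inj (le_antisymm (mina_min hne m hm) (hmin _ (mina_mem hne)))

end CGP

namespace CGP
variable {n : ℕ} [NeZero n]

/-- the next element of `s` strictly clockwise after `a`. -/
def nxt (s : Finset (Fin n)) (a : Fin n) : Fin n := mina a (s.erase a)

variable {s : Finset (Fin n)} {a : Fin n}

lemma nxt_mem (h : (s.erase a).Nonempty) : nxt s a ∈ s.erase a := mina_mem h

lemma nxt_min (h : (s.erase a).Nonempty) : ∀ x ∈ s.erase a, cpos a (nxt s a) ≤ cpos a x :=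
  mina_min h

lemma nxt_pos (h : (s.erase a).Nonempty) : 0 < cpos a (nxt s a) := by
  have := Finset.ne_of_mem_erase (nxt_mem h)
  have h0 := cpos_eq_zero_iff (a := a) (x := nxt s a)
  omega

lemma nxt_eq {m : Fin n} (hm : m ∈ s.erase a)
    (hmin : ∀ x ∈ s.erase a, cpos a m ≤ cpos a x) : nxt s a = m := mina_eq hm hmin

variable (H : Finset (Finset (Fin n)))

/-- the set of available "insertions" at a pair `(e, a)`: vertices `b` strictly between
`a` and the next vertex of `e`, with `(e \ a) + b` an edge. -/
def ins (p : Finset (Fin n) × Fin n) : Finset (Fin n) :=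
  Finset.univ.filter (fun b => 0 < cpos p.2 b ∧ cpos p.2 b < cpos p.2 (nxt p.1 p.2) ∧
    insert b (p.1.erase p.2) ∈ H)

/-- one step of the crossing-path builder. -/
def step (p : Finset (Fin n) × Fin n) : Finset (Fin n) × Fin n :=
  (insert (mina p.2 (ins H p)) (p.1.erase p.2), nxt p.1 p.2)

def Good (p : Finset (Fin n) × Fin n) : Prop := p.1 ∈ H ∧ p.2 ∈ p.1

variable {H} {r : ℕ} (huni : ∀ e ∈ H, e.card = r) (hr : 2 ≤ r)

include huni hr in
lemma erase_ne {p : Finset (Fin n) × Fin n} (hp : Good H p) : (p.1.erase p.2).Nonempty := by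
  rw [← Finset.card_pos, Finset.card_erase_of_mem hp.2, huni _ hp.1]
  omega

include huni hr in
lemma good_step {p : Finset (Fin n) × Fin n} (hp : Good H p) (hne : (ins H p).Nonempty) :
    Good H (step H p) := by
  obtain ⟨h1, h2, h3⟩ := (Finset.mem_filter.mp (mina_mem hne)).2
  exact ⟨h3, Finset.mem_insert_of_mem (nxt_mem (erase_ne huni hr hp))⟩

end CGP

namespace CGP
variable {n : ℕ} [NeZero n] {H : Finset (Finset (Fin n))} {r : ℕ}

lemma tri {a b u : Fin n} (hua : u ≠ a) (hub : u ≠ b) (hab : a ≠ b)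
    (h : cpos a u ≤ cpos a b) : 0 < cpos b a ∧ cpos b a < cpos b u := by
  have h0 : 0 < cpos a b := by
    have := cpos_eq_zero_iff (a := a) (x := b); omega
  have h1 : 0 < cpos a u := by
    have := cpos_eq_zero_iff (a := a) (x := u); omega
  have hstrict : cpos a u < cpos a b := by
    rcases lt_or_eq_of_le h with h' | h'
    · exact h'
    · exact absurd (cpos_inj h') hub
  have e1 : cpos b a = 0 + n - cpos a b := by
    have := cpos_wrap (o := a) (x := b) (y := a); rw [cpos_self] at this
    exact this h0
  have e2 : cpos b u = cpos a u + n - cpos a b := cpos_wrap hstrict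
  have := cpos_lt a b
  omega

/-- if two good pairs have the same erased set and same next-vertex, then (unless equal)
one of the two tips is an available insertion for the other. -/
lemma ins_or {e e' : Finset (Fin n)} {a a' : Fin n} (he : e ∈ H) (he' : e' ∈ H)
    (ha : a ∈ e) (ha' : a' ∈ e') (hff : e.erase a = e'.erase a')
    (hee : (e.erase a).Nonempty) (hnz : nxt e a = nxt e' a') (hane : a ≠ a') :
    a' ∈ ins H (e, a) ∨ a ∈ ins H (e', a') := by
  set u := nxt e a with hu
  have hue : u ∈ e.erase a := nxt_mem hee
  have hua : u ≠ a := Finset.ne_of_mem_erase hue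
  have hua' : u ≠ a' := by
    have : u ∈ e'.erase a' := hff ▸ hue
    exact Finset.ne_of_mem_erase this
  have hins : insert a' (e.erase a) = e' := by
    rw [hff]; exact Finset.insert_erase ha'
  have hins' : insert a (e'.erase a') = e := by
    rw [← hff]; exact Finset.insert_erase ha
  rcases Nat.lt_or_ge (cpos a a') (cpos a u) with hc | hc
  · left
    refine Finset.mem_filter.mpr ⟨Finset.mem_univ _, ?_, ?_, ?_⟩
    · have := cpos_eq_zero_iff (a := a) (x := a')
      rcases Nat.eq_zero_or_pos (cpos a a') with h0 | h0
      · exact absurd (this.mp h0) (Ne.symm hane)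
      · exact h0
    · exact hc
    · rw [hins]; exact he'
  · right
    obtain ⟨t1, t2⟩ := tri hua hua' (by exact hane) hc
    refine Finset.mem_filter.mpr ⟨Finset.mem_univ _, t1, ?_, ?_⟩
    · rwa [← hnz]
    · rw [hins']; exact he

/-- injectivity of the slot map on settled pairs. -/
lemma settled_inj {e e' : Finset (Fin n)} {a a' : Fin n} (he : e ∈ H) (he' : e' ∈ H)
    (ha : a ∈ e) (ha' : a' ∈ e') (hee : (e.erase a).Nonempty)
    (hsp : ins H (e, a) = ∅) (hsq : ins H (e', a') = ∅)
    (hff : e.erase a = e'.erase a') (hnz : nxt e a = nxt e' a') : e = e' ∧ a = a' := by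
  by_cases hane : a = a'
  · subst hane
    constructor
    · rw [← Finset.insert_erase ha, ← Finset.insert_erase ha', hff]
    · rfl
  · rcases ins_or he he' ha ha' hff hee hnz hane with h | h
    · rw [hsp] at h; exact absurd h (Finset.notMem_empty _)
    · rw [hsq] at h; exact absurd h (Finset.notMem_empty _)
end CGP

namespace CGP
variable {n : ℕ} [NeZero n] {H : Finset (Finset (Fin n))}

lemma ins_mem {p : Finset (Fin n) × Fin n} {b : Fin n} (hb : b ∈ ins H p) :
    0 < cpos p.2 b ∧ cpos p.2 b < cpos p.2 (nxt p.1 p.2) ∧ insert b (p.1.erase p.2) ∈ H :=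
  (Finset.mem_filter.mp hb).2

/-- the inserted vertex is the strict predecessor of the new tip in the new edge. -/
lemma pred_min {e : Finset (Fin n)} {a : Fin n} (hee : (e.erase a).Nonempty)
    (hne : (ins H (e, a)).Nonempty) :
    ∀ x ∈ (insert (mina a (ins H (e, a))) (e.erase a)).erase (nxt e a),
      x ≠ mina a (ins H (e, a)) →
      cpos (mina a (ins H (e, a))) (nxt e a) < cpos x (nxt e a) := by
  set u := nxt e a with hu
  set b := mina a (ins H (e, a)) with hbdef
  obtain ⟨hb0, hbu, hbH⟩ := ins_mem (mina_mem hne)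
  intro x hx hxb
  have hxu : x ≠ u := Finset.ne_of_mem_erase hx
  have hxE : x ∈ e.erase a := by
    rcases Finset.mem_insert.mp (Finset.mem_of_mem_erase hx) with h | h
    · exact absurd h hxb
    · exact h
  have hux : cpos a u < cpos a x := by
    have h1 : cpos a u ≤ cpos a x := nxt_min hee x hxE
    rcases lt_or_eq_of_le h1 with h' | h'
    · exact h'
    · exact absurd (cpos_inj h').symm hxu
  have e1 : cpos x u = cpos a u + n - cpos a x := cpos_wrap hux
  have e2 : cpos b u = cpos a u - cpos a b := cpos_sub (le_of_lt hbu)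
  have := cpos_lt a x
  omega

/-- helper for injectivity: both chosen insertions equal and `a'` between `a` and `u` is
impossible. -/
lemma no_both {e e' : Finset (Fin n)} {a a' : Fin n} (he' : e' ∈ H)
    (hff : e.erase a = e'.erase a') (hnz : nxt e a = nxt e' a')
    (hnep : (ins H (e, a)).Nonempty) (hneq : (ins H (e', a')).Nonempty)
    (hbb : mina a (ins H (e, a)) = mina a' (ins H (e', a')))
    (hins : insert a' (e.erase a) = e')
    (hc : 0 < cpos a a' ∧ cpos a a' < cpos a (nxt e a)) : False := by
  set u := nxt e a with hu
  set b := mina a (ins H (e, a)) with hbdef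
  obtain ⟨hb0, hbu, hbH⟩ := ins_mem (mina_mem (a := a) hnep)
  obtain ⟨hb0', hbu', hbH'⟩ := ins_mem (mina_mem (a := a') hneq)
  rw [← hbb] at hb0' hbu'
  simp only at hb0' hbu' hbH'
  -- a' ∈ ins H (e,a)
  have ha'ins : a' ∈ ins H (e, a) := by
    refine Finset.mem_filter.mpr ⟨Finset.mem_univ _, hc.1, hc.2, ?_⟩
    rw [hins]; exact he'
  have hle : cpos a b ≤ cpos a a' := mina_min hnep a' ha'ins
  have hba' : b ≠ a' := by
    intro hcon
    rw [hcon] at hb0'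
    rw [cpos_self] at hb0'
    exact Nat.lt_irrefl 0 hb0'
  have hlt : cpos a b < cpos a a' := by
    rcases lt_or_eq_of_le hle with h' | h'
    · exact h'
    · exact absurd (cpos_inj h') hba'
  have e1 : cpos a' b = cpos a b + n - cpos a a' := cpos_wrap hlt
  have e2 : cpos a' u = cpos a u - cpos a a' := cpos_sub (le_of_lt hc.2)
  rw [← hnz] at hbu'
  have := cpos_lt a u
  omega
end CGP

namespace CGP
variable {n : ℕ} [NeZero n] {H : Finset (Finset (Fin n))}

lemma step_inj {e e' : Finset (Fin n)} {a a' : Fin n} (he : e ∈ H) (he' : e' ∈ H)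
    (ha : a ∈ e) (ha' : a' ∈ e') (hee : (e.erase a).Nonempty) (hee' : (e'.erase a').Nonempty)
    (hnep : (ins H (e, a)).Nonempty) (hneq : (ins H (e', a')).Nonempty)
    (hstep : step H (e, a) = step H (e', a')) : e = e' ∧ a = a' := by
  set b := mina a (ins H (e, a)) with hbdef
  set b' := mina a' (ins H (e', a')) with hbdef'
  have hfst : insert b (e.erase a) = insert b' (e'.erase a') := congrArg Prod.fst hstep
  have hnz : nxt e a = nxt e' a' := congrArg Prod.snd hstep
  set u := nxt e a with hudef
  obtain ⟨hb0, hbu, hbH⟩ := ins_mem (mina_mem (a := a) hnep)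
  obtain ⟨hb0', hbu', hbH'⟩ := ins_mem (mina_mem (a := a') hneq)
  simp only at hb0 hbu hbH hb0' hbu' hbH'
  rw [← hbdef] at hb0 hbH
  rw [← hbdef, ← hudef] at hbu
  rw [← hbdef'] at hb0' hbH'
  rw [← hbdef', ← hnz] at hbu'
  have hbne_u : b ≠ u := fun hcon => by rw [hcon] at hbu; exact Nat.lt_irrefl _ hbu
  have hbne_u' : b' ≠ u := fun hcon => by rw [hcon] at hbu'; exact Nat.lt_irrefl _ hbu'
  -- step 1 : b = b'
  have hbb : b = b' := by
    by_contra hne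
    have hbmem : b ∈ (insert b (e.erase a)).erase u :=
      Finset.mem_erase.mpr ⟨hbne_u, Finset.mem_insert_self _ _⟩
    have hbmem' : b' ∈ (insert b (e.erase a)).erase u := by
      rw [hfst]; exact Finset.mem_erase.mpr ⟨hbne_u', Finset.mem_insert_self _ _⟩
    have h1 := pred_min hee hnep b' hbmem' (Ne.symm hne)
    have h2 := pred_min hee' hneq b (by rw [← hbdef', ← hnz, ← hfst]; exact hbmem) hne
    rw [← hbdef, ← hudef] at h1
    rw [← hbdef', ← hnz] at h2
    exact Nat.lt_irrefl _ (h1.trans h2)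
  -- step 2 : erased sets are equal
  have hbnot : b ∉ e.erase a := fun hcon =>
    Nat.lt_irrefl _ (Nat.lt_of_lt_of_le hbu (nxt_min hee b hcon))
  have hbnot' : b' ∉ e'.erase a' := by
    intro hcon
    have := nxt_min hee' b' hcon
    rw [← hnz] at this
    exact Nat.lt_irrefl _ (Nat.lt_of_lt_of_le hbu' this)
  have hff : e.erase a = e'.erase a' := by
    have h1 : (insert b (e.erase a)).erase b = e.erase a := Finset.erase_insert hbnot
    have h2 : (insert b' (e'.erase a')).erase b' = e'.erase a' := Finset.erase_insert hbnot'
    rw [← h1, ← h2, hfst, hbb]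
  -- step 3 : a = a'
  have haa : a = a' := by
    by_contra hane
    rcases ins_or he he' ha ha' hff hee hnz hane with h | h
    · obtain ⟨-, hc1, hc2, -⟩ := Finset.mem_filter.mp h
      exact no_both (H := H) he' hff hnz hnep hneq hbb
        (by rw [hff]; exact Finset.insert_erase ha') ⟨hc1, hc2⟩
    · obtain ⟨-, hc1, hc2, -⟩ := Finset.mem_filter.mp h
      exact no_both (H := H) he hff.symm hnz.symm hneq hnep hbb.symm
        (by rw [← hff]; exact Finset.insert_erase ha) ⟨hc1, hc2⟩
  refine ⟨?_, haa⟩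
  rw [← Finset.insert_erase ha, ← Finset.insert_erase ha', hff, haa]
end CGP

namespace CGP
variable {n : ℕ} [NeZero n]

lemma cpos_o_add (o : Fin n) (c : Fin n) : cpos o (o + c) = c.val := by
  rw [cpos, add_sub_cancel_left]

lemma sorted_enum (o : Fin n) (e : Finset (Fin n)) {r : ℕ} (ho : o ∈ e) (hcard : e.card = r) :
    ∃ w : ℕ → Fin n, w 0 = o ∧ (∀ i, i < r → w i ∈ e) ∧ (∀ x ∈ e, ∃ i, i < r ∧ w i = x) ∧
      (∀ i j, i < j → j < r → cpos o (w i) < cpos o (w j)) := by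
  have npos : 0 < n := Nat.pos_of_ne_zero (NeZero.ne n)
  classical
  set s : Finset ℕ := e.image (cpos o) with hs
  set L : List ℕ := s.sort (· ≤ ·) with hL
  have hlen : L.length = r := by
    rw [hL, Finset.length_sort, hs,
      Finset.card_image_of_injective _ (fun x y h => cpos_inj h), hcard]
  set w : ℕ → Fin n := fun i => o + (⟨L.getD i 0 % n, Nat.mod_lt _ npos⟩ : Fin n) with hw
  have hsmem : ∀ c ∈ s, c < n := by
    intro c hc
    obtain ⟨x, -, rfl⟩ := Finset.mem_image.mp hc
    exact cpos_lt o x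
  have hgetmem : ∀ i, i < r → L.getD i 0 ∈ s := by
    intro i hi
    rw [List.getD_eq_get L 0 ⟨i, by omega⟩]
    exact (Finset.mem_sort _).mp (List.get_mem _ _)
  have hwof : ∀ i, i < r → cpos o (w i) = L.getD i 0 := by
    intro i hi
    rw [hw]
    simp only
    rw [cpos_o_add]
    exact Nat.mod_eq_of_lt (hsmem _ (hgetmem i hi))
  have hmono : ∀ i j, i < j → j < r → cpos o (w i) < cpos o (w j) := by
    intro i j hij hj
    rw [hwof i (hij.trans hj), hwof j hj]
    rw [List.getD_eq_get L 0 ⟨i, by omega⟩,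
      List.getD_eq_get L 0 ⟨j, by omega⟩]
    exact (Finset.sortedLT_sort s).strictMono_get (by simpa using hij)
  have hwemem : ∀ i, i < r → w i ∈ e := by
    intro i hi
    obtain ⟨x, hx, hxc⟩ := Finset.mem_image.mp (hgetmem i hi)
    have : w i = x := cpos_inj (by rw [hwof i hi, hxc])
    rwa [this]
  have hsurj : ∀ x ∈ e, ∃ i, i < r ∧ w i = x := by
    intro x hx
    have hcs : cpos o x ∈ s := Finset.mem_image_of_mem _ hx
    obtain ⟨idx, hidx⟩ := List.mem_iff_get.mp ((Finset.mem_sort (α := ℕ) (· ≤ ·)).mpr hcs)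
    have hidxlt := idx.isLt
    have hq := hlen; rw [hL] at hq
    refine ⟨idx.1, by omega, ?_⟩
    apply cpos_inj
    rw [hwof idx.1 (by omega), List.getD_eq_get L 0 idx]
    exact hidx
  have hw0 : w 0 = o := by
    have h0r : 0 < r := by rw [← hcard]; exact Finset.card_pos.mpr ⟨o, ho⟩
    have : cpos o (w 0) = 0 := by
      have hle : L.getD 0 0 ≤ cpos o o := by
        obtain ⟨idx, hidx⟩ := List.mem_iff_get.mp
          ((Finset.mem_sort (α := ℕ) (· ≤ ·)).mpr (Finset.mem_image_of_mem (cpos o) ho))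
        have hidxlt := idx.isLt
        have hq := hlen; rw [hL] at hq
        rw [List.getD_eq_get L 0 ⟨0, by omega⟩, ← hidx]
        rcases Nat.eq_zero_or_pos idx.1 with h | h
        · have : (⟨0, by omega⟩ : Fin L.length) = idx := by
            apply Fin.ext; simp [h]
          rw [this]
        · exact le_of_lt ((Finset.sortedLT_sort s).strictMono_get
            (show (⟨0, by omega⟩ : Fin L.length) < idx from h))
      rw [cpos_self] at hle
      rw [hwof 0 h0r]
      omega
    exact cpos_eq_zero_iff.mp this
  exact ⟨w, hw0, hwemem, hsurj, hmono⟩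
end CGP

namespace CGP
variable {n : ℕ} [NeZero n]

lemma build_path (r k : ℕ) (hk : 2 ≤ k) (hkr : k ≤ r) {H : Finset (Finset (Fin n))}
    (o : Fin n) (v : ℕ → Fin n) (hv0 : v 0 = o)
    (hmono : ∀ i j, i < j → j < r → cpos o (v i) < cpos o (v j))
    (hb : ∀ j, j < k - 1 →
      cpos o (v j) < cpos o (v (j + r)) ∧ cpos o (v (j + r)) < cpos o (v (j + 1)))
    (hedges : ∀ i, i < k → Finset.image v (Finset.Ico i (i + r)) ∈ H) :
    IsCycCrossPath r k H v := by
  have hrpos : 0 < r := by omega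
  -- distinctness of positions
  have hdist : ∀ m m', m < m' → m' < k + r - 1 → cpos o (v m) < cpos o (v m') ∨
      cpos o (v m') < cpos o (v m) := by
    intro m m' hmm hm'
    rcases Nat.lt_or_ge m' r with h1 | h1
    · exact Or.inl (hmono m m' hmm h1)
    · rcases Nat.lt_or_ge m r with h2 | h2
      · -- m < r ≤ m'
        have hj' : m' - r < k - 1 := by omega
        obtain ⟨hb1, hb2⟩ := hb (m' - r) hj'
        have hm'r : m' - r + r = m' := by omega
        rw [hm'r] at hb1 hb2
        rcases Nat.lt_or_ge m (m' - r + 1) with h3 | h3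
        · left
          rcases Nat.lt_or_ge m (m' - r) with h4 | h4
          · exact lt_trans (hmono m (m' - r) h4 (by omega)) hb1
          · have : m = m' - r := by omega
            rw [this]; exact hb1
        · right
          rcases Nat.lt_or_ge (m' - r + 1) m with h4 | h4
          · exact lt_trans hb2 (hmono (m' - r + 1) m h4 h2)
          · have : m' - r + 1 = m := by omega
            rw [← this]; exact hb2
      · -- r ≤ m < m'
        left
        have hj : m - r < k - 1 := by omega
        have hj' : m' - r < k - 1 := by omega
        obtain ⟨-, hb2⟩ := hb (m - r) hj
        obtain ⟨hb1', -⟩ := hb (m' - r) hj'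
        have hmr : m - r + r = m := by omega
        have hm'r : m' - r + r = m' := by omega
        rw [hmr] at hb2; rw [hm'r] at hb1'
        have hle : cpos o (v (m - r + 1)) ≤ cpos o (v (m' - r)) := by
          rcases Nat.lt_or_ge (m - r + 1) (m' - r) with h4 | h4
          · exact le_of_lt (hmono _ _ h4 (by omega))
          · have : m - r + 1 = m' - r := by omega
            rw [this]
        exact lt_trans hb2 (lt_of_le_of_lt hle hb1')
  have hposle : ∀ m m', m ≤ m' → m' < r → cpos o (v m) ≤ cpos o (v m') := by
    intro m m' h hm'
    rcases Nat.lt_or_ge m m' with h' | h'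
    · exact le_of_lt (hmono m m' h' hm')
    · have : m = m' := by omega
      rw [this]
  refine ⟨?_, hedges, ?_, ?_, ?_⟩
  · intro i j hi hj hvij
    by_contra hne
    rcases Nat.lt_or_ge i j with h | h
    · rcases hdist i j h hj with hc | hc <;> rw [hvij] at hc <;> exact Nat.lt_irrefl _ hc
    · have h' : j < i := by omega
      rcases hdist j i h' hi with hc | hc <;> rw [hvij] at hc <;> exact Nat.lt_irrefl _ hc
  · intro i j hij hj
    rw [Fin.lt_def]
    show cpos (v 0) (v i) < cpos (v 0) (v j)
    rw [hv0]
    exact hmono i j hij hj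
  · intro j hj1
    intro i i' hii' hi'
    rw [Fin.lt_def]
    simp only [if_pos rfl]
    rcases Nat.lt_or_ge j (k - 1) with hcase | hcase
    · have hqv : (k + r - 2 - j) / r = 1 := by
        apply Nat.div_eq_of_lt_le <;> omega
      rw [hqv] at hi' ⊢
      obtain ⟨hbj1, hbj2⟩ := hb j hcase
      have hjr : cpos (v j) (v (j + r)) = cpos o (v (j + r)) - cpos o (v j) :=
        cpos_sub (le_of_lt hbj1)
      have hj1' : cpos (v j) (v (j + 1)) = cpos o (v (j + 1)) - cpos o (v j) :=
        cpos_sub (le_of_lt (lt_trans hbj1 hbj2))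
      have hi0 : i = 0 ∨ i = 1 := by omega
      have hi'12 : i' = 1 ∨ i' = 2 := by omega
      rcases hi0 with rfl | rfl <;> rcases hi'12 with rfl | rfl
      · norm_num
        show 0 < cpos (v j) (v (j + r))
        rw [hjr]; omega
      · norm_num
        show 0 < cpos (v j) (v (j + 1))
        rw [hj1']; omega
      · omega
      · norm_num
        rw [Fin.lt_def]
        show cpos (v j) (v (j + r)) < cpos (v j) (v (j + 1))
        rw [hjr, hj1']; omega
    · have hqv : (k + r - 2 - j) / r = 0 := by
        apply Nat.div_eq_of_lt; omega
      rw [hqv] at hi' ⊢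
      have hi0 : i = 0 := by omega
      have hi'1 : i' = 1 := by omega
      subst hi0; subst hi'1
      norm_num
      show 0 < cpos (v j) (v (j + 1))
      have h1 : cpos (v j) (v (j + 1)) = cpos o (v (j + 1)) - cpos o (v j) :=
        cpos_sub (le_of_lt (hmono j (j + 1) (by omega) (by omega)))
      have h2 := hmono j (j + 1) (by omega) (by omega)
      rw [h1]; omega
  · have hqv : (k + r - 2) / r = 1 := by
      apply Nat.div_eq_of_lt_le <;> omega
    rw [hqv]
    intro i i' hii' hi'
    have hi0 : i = 0 := by omega
    have hi'1 : i' = 1 := by omega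
    subst hi0; subst hi'1
    rw [Fin.lt_def]
    norm_num
    show 0 < cpos (v 0) (v (r - 1))
    rw [hv0]
    have h2 := hmono 0 (r - 1) (by omega) (by omega)
    have h0 : cpos o (v 0) = 0 := by rw [hv0, cpos_self]
    omega
end CGP

namespace CGP
variable {n : ℕ} [NeZero n]

lemma vdistinct {o : Fin n} {v : ℕ → Fin n} {r τ : ℕ} (hr : 2 ≤ r) (hτ : τ ≤ r - 1)
    (hmono : ∀ i j, i < j → j < r → cpos o (v i) < cpos o (v j))
    (hb : ∀ j, j < τ →
      cpos o (v j) < cpos o (v (j + r)) ∧ cpos o (v (j + r)) < cpos o (v (j + 1))) :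
    ∀ m m', m < m' → m' < r + τ → cpos o (v m) ≠ cpos o (v m') := by
  intro m m' hmm hm'
  have : cpos o (v m) < cpos o (v m') ∨ cpos o (v m') < cpos o (v m) := by
    rcases Nat.lt_or_ge m' r with h1 | h1
    · exact Or.inl (hmono m m' hmm h1)
    · rcases Nat.lt_or_ge m r with h2 | h2
      · have hj' : m' - r < τ := by omega
        obtain ⟨hb1, hb2⟩ := hb (m' - r) hj'
        have hm'r : m' - r + r = m' := by omega
        rw [hm'r] at hb1 hb2
        rcases Nat.lt_or_ge m (m' - r + 1) with h3 | h3
        · left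
          rcases Nat.lt_or_ge m (m' - r) with h4 | h4
          · exact lt_trans (hmono m (m' - r) h4 (by omega)) hb1
          · have : m = m' - r := by omega
            rw [this]; exact hb1
        · right
          rcases Nat.lt_or_ge (m' - r + 1) m with h4 | h4
          · exact lt_trans hb2 (hmono (m' - r + 1) m h4 h2)
          · have : m' - r + 1 = m := by omega
            rw [← this]; exact hb2
      · left
        have hj : m - r < τ := by omega
        have hj' : m' - r < τ := by omega
        obtain ⟨-, hb2⟩ := hb (m - r) hj
        obtain ⟨hb1', -⟩ := hb (m' - r) hj'
        have hmr : m - r + r = m := by omega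
        have hm'r : m' - r + r = m' := by omega
        rw [hmr] at hb2; rw [hm'r] at hb1'
        have hle : cpos o (v (m - r + 1)) ≤ cpos o (v (m' - r)) := by
          rcases Nat.lt_or_ge (m - r + 1) (m' - r) with h4 | h4
          · exact le_of_lt (hmono _ _ h4 (by omega))
          · have : m - r + 1 = m' - r := by omega
            rw [this]
        exact lt_trans hb2 (lt_of_le_of_lt hle hb1')
  omega

lemma terminate {H : Finset (Finset (Fin n))} {r k : ℕ}
    (huni : ∀ e ∈ H, e.card = r) (hk : 2 ≤ k) (hkr : k ≤ r)
    (hfree : ¬ ∃ v : ℕ → Fin n, IsCycCrossPath r k H v)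
    {p : Finset (Fin n) × Fin n} (hp : Good H p) :
    ∃ t, t < k - 1 ∧ ins H ((step H)^[t] p) = ∅ := by
  by_contra hcon
  push_neg at hcon
  have hr : 2 ≤ r := le_trans hk hkr
  have hins : ∀ t, t < k - 1 → (ins H ((step H)^[t] p)).Nonempty :=
    fun t ht => hcon t ht
  have hGood : ∀ t, t ≤ k - 1 → Good H ((step H)^[t] p) := by
    intro t
    induction t with
    | zero => intro _; exact hp
    | succ t ih =>
      intro ht
      rw [Function.iterate_succ_apply']
      exact good_step huni hr (ih (by omega)) (hins t (by omega))
  set o := p.2 with ho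
  obtain ⟨w, hw0, hwmem, hwsurj, hwmono⟩ := sorted_enum o p.1 hp.2 (huni _ hp.1)
  set b : ℕ → Fin n := fun t => mina ((step H)^[t] p).2 (ins H ((step H)^[t] p)) with hbdef
  set v : ℕ → Fin n := fun i => if i < r then w i else b (i - r) with hvdef
  have hvw : ∀ i, i < r → v i = w i := fun i hi => by rw [hvdef]; simp [hi]
  have hvb : ∀ t, v (t + r) = b t := fun t => by
    rw [hvdef]; simp only
    rw [if_neg (by omega)]
    congr 1
    omega
  have hwle : ∀ i j, i ≤ j → j < r → cpos o (w i) ≤ cpos o (w j) := by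
    intro i j hij hj
    rcases Nat.lt_or_ge i j with h | h
    · exact le_of_lt (hwmono i j h hj)
    · have : i = j := by omega
      rw [this]
  have main : ∀ t, t ≤ k - 1 →
      ((step H)^[t] p).2 = w t ∧
      ((step H)^[t] p).1 = Finset.image v (Finset.Ico t (t + r)) ∧
      (∀ j, j < t → cpos o (w j) < cpos o (b j) ∧ cpos o (b j) < cpos o (w (j + 1))) := by
    intro t
    induction t with
    | zero =>
      intro _
      refine ⟨hw0.symm, ?_, fun j hj => absurd hj (Nat.not_lt_zero j)⟩
      ext x
      simp only [Finset.mem_image, Finset.mem_Ico]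
      constructor
      · intro hx
        obtain ⟨i, hi, rfl⟩ := hwsurj x hx
        exact ⟨i, ⟨by omega, by omega⟩, hvw i hi⟩
      · rintro ⟨i, ⟨-, hi⟩, rfl⟩
        rw [hvw i (by omega)]
        exact hwmem i (by omega)
    | succ t ih =>
      intro ht
      obtain ⟨iha, ihE, ihPB⟩ := ih (by omega)
      have htk : t < k - 1 := by omega
      have htr : t + 1 < r := by omega
      -- the next vertex is w (t+1)
      have hnxt : nxt ((step H)^[t] p).1 ((step H)^[t] p).2 = w (t + 1) := by
        rw [iha]
        apply nxt_eq
        · rw [ihE]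
          apply Finset.mem_erase.mpr
          constructor
          · intro hcon'
            have := hwmono t (t + 1) (by omega) htr
            rw [hcon'] at this
            exact Nat.lt_irrefl _ this
          · rw [← hvw (t + 1) htr]
            exact Finset.mem_image_of_mem v (Finset.mem_Ico.mpr ⟨by omega, by omega⟩)
        · intro x hx
          obtain ⟨hxne, hxmem⟩ := Finset.mem_erase.mp hx
          rw [ihE] at hxmem
          obtain ⟨m, hm, rfl⟩ := Finset.mem_image.mp hxmem
          rw [Finset.mem_Ico] at hm
          rcases Nat.lt_or_ge m r with hmr | hmr
          · -- v m = w m with t < m < r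
            rw [hvw m hmr] at hxne ⊢
            have hmt : t < m := by
              rcases Nat.lt_or_ge t m with h | h
              · exact h
              · rcases Nat.lt_or_ge m t with h' | h'
                · omega
                · have : m = t := by omega
                  rw [this] at hxne
                  exact absurd rfl hxne
            have e1 : cpos (w t) (w (t + 1)) = cpos o (w (t + 1)) - cpos o (w t) :=
              cpos_sub (le_of_lt (hwmono t (t + 1) (by omega) htr))
            have e2 : cpos (w t) (w m) = cpos o (w m) - cpos o (w t) :=
              cpos_sub (le_of_lt (hwmono t m hmt hmr))
            have e3 : cpos o (w (t + 1)) ≤ cpos o (w m) := hwle (t + 1) m (by omega) hmr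
            have e4 := hwmono t (t+1) (by omega) htr
            omega
          · -- v m = b (m - r) with m - r < t
            obtain ⟨j, rfl⟩ : ∃ j, m = j + r := ⟨m - r, by omega⟩
            have hj : j < t := by omega
            rw [hvb j] at hxne ⊢
            obtain ⟨f1, f2⟩ := ihPB j hj
            have e3 : cpos o (w (j + 1)) ≤ cpos o (w t) := hwle _ t (by omega) (by omega)
            have e5 : cpos o (b j) < cpos o (w t) := by omega
            have e1 : cpos (w t) (w (t + 1)) = cpos o (w (t + 1)) - cpos o (w t) :=
              cpos_sub (le_of_lt (hwmono t (t + 1) (by omega) htr))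
            have e2 : cpos (w t) (b j) = cpos o (b j) + n - cpos o (w t) :=
              cpos_wrap e5
            have e6 := cpos_lt o (w (t + 1))
            have e7 := cpos_lt o (w t)
            omega
      -- properties of the inserted vertex b t
      have hbt := ins_mem (mina_mem (a := ((step H)^[t] p).2) (hins t htk))
      obtain ⟨g1, g2, g3⟩ := hbt
      have hbfold : mina ((step H)^[t] p).2 (ins H ((step H)^[t] p)) = b t := rfl
      rw [hbfold] at g1 g2 g3
      rw [hnxt] at g2
      rw [iha] at g1 g2
      have e1 : cpos (w t) (w (t + 1)) = cpos o (w (t + 1)) - cpos o (w t) :=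
        cpos_sub (le_of_lt (hwmono t (t + 1) (by omega) htr))
      have e4 := hwmono t (t+1) (by omega) htr
      have e6 := cpos_lt o (w (t + 1))
      have hbpos : cpos o (b t) = cpos o (w t) + cpos (w t) (b t) :=
        cpos_add (by omega)
      have hPB : ∀ j, j < t + 1 →
          cpos o (w j) < cpos o (b j) ∧ cpos o (b j) < cpos o (w (j + 1)) := by
        intro j hj
        rcases Nat.lt_or_ge j t with h | h
        · exact ihPB j h
        · have : j = t := by omega
          subst this
          constructor
          · have := cpos_eq_zero_iff (a := w j) (x := b j)
            omega
          · omega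
      -- the new pair
      have hsucc : (step H)^[t+1] p = step H ((step H)^[t] p) := Function.iterate_succ_apply' _ _ _
      refine ⟨?_, ?_, hPB⟩
      · rw [hsucc]
        show nxt ((step H)^[t] p).1 ((step H)^[t] p).2 = w (t + 1)
        exact hnxt
      · rw [hsucc]
        show insert (mina ((step H)^[t] p).2 (ins H ((step H)^[t] p)))
            (((step H)^[t] p).1.erase ((step H)^[t] p).2) = _
        rw [hbfold, iha, ihE]
        -- distinctness of positions up to r + t + 1
        have hdst := vdistinct (o := o) (v := v) hr (show t + 1 ≤ r - 1 by omega)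
          (fun i j hij hj => by rw [hvw i (by omega), hvw j hj]; exact hwmono i j hij hj)
          (fun j hj => by
            rw [hvb j, hvw j (by omega), hvw (j + 1) (by omega)]
            exact hPB j hj)
        ext x
        simp only [Finset.mem_insert, Finset.mem_erase, Finset.mem_image, Finset.mem_Ico]
        constructor
        · rintro (rfl | ⟨hne, m, hm, rfl⟩)
          · exact ⟨t + r, ⟨by omega, by omega⟩, (hvb t).symm ▸ rfl⟩
          · refine ⟨m, ⟨?_, by omega⟩, rfl⟩
            rcases Nat.lt_or_ge t m with h | h
            · omega
            · rcases Nat.eq_or_lt_of_le h with h' | h'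
              · exact absurd (by rw [h']; exact hvw t (by omega) : v m = w t) hne
              · omega
        · rintro ⟨m, ⟨hm1, hm2⟩, rfl⟩
          rcases Nat.eq_or_lt_of_le (show m ≤ t + r by omega) with h' | h'
          · left; rw [h', hvb t]
          · right
            refine ⟨?_, m, ⟨by omega, by omega⟩, rfl⟩
            rw [← hvw t (by omega)]
            intro hcon'
            exact hdst t m (by omega) (by omega) (congrArg (cpos o) hcon'.symm)
  -- now build the crossing path
  obtain ⟨-, -, hPBfin⟩ := main (k - 1) (le_refl _)
  have hv0 : v 0 = o := by rw [hvw 0 (by omega)]; exact hw0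
  have hmono' : ∀ i j, i < j → j < r → cpos o (v i) < cpos o (v j) := by
    intro i j hij hj
    rw [hvw i (by omega), hvw j hj]
    exact hwmono i j hij hj
  have hb' : ∀ j, j < k - 1 →
      cpos o (v j) < cpos o (v (j + r)) ∧ cpos o (v (j + r)) < cpos o (v (j + 1)) := by
    intro j hj
    rw [hvb j, hvw j (by omega), hvw (j + 1) (by omega)]
    exact hPBfin j hj
  have hedges : ∀ i, i < k → Finset.image v (Finset.Ico i (i + r)) ∈ H := by
    intro i hi
    obtain ⟨-, hE, -⟩ := main i (by omega)
    rw [← hE]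
    exact (hGood i (by omega)).1
  exact hfree ⟨v, build_path r k hk hkr o v hv0 hmono' hb' hedges⟩
end CGP

namespace CGP
variable {n : ℕ} [NeZero n]

lemma count {H : Finset (Finset (Fin n))} {r k : ℕ}
    (huni : ∀ e ∈ H, e.card = r) (hk : 2 ≤ k) (hkr : k ≤ r)
    (hfree : ¬ ∃ v : ℕ → Fin n, IsCycCrossPath r k H v) :
    H.card * r ≤ (k - 1) * ((r - 1) * n.choose (r - 1)) := by
  classical
  have hr : 2 ≤ r := le_trans hk hkr
  set P : Finset ((_ : Finset (Fin n)) × Fin n) := H.sigma (fun e => e) with hP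
  have hPcard : P.card = H.card * r := by
    rw [hP, Finset.card_sigma]
    rw [Finset.sum_congr rfl (fun e he => huni e he)]
    rw [Finset.sum_const, smul_eq_mul]
  set T : Finset (ℕ × (_ : Finset (Fin n)) × Fin n) :=
    (Finset.range (k - 1)) ×ˢ ((Finset.univ.powersetCard (r - 1)).sigma (fun f => f)) with hT
  have hTcard : T.card = (k - 1) * ((r - 1) * n.choose (r - 1)) := by
    rw [hT, Finset.card_product, Finset.card_range, Finset.card_sigma]
    congr 1
    rw [Finset.sum_congr rfl
      (fun f hf => Finset.mem_powersetCard_univ.mp hf), Finset.sum_const, smul_eq_mul,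
      Finset.card_powersetCard, Finset.card_univ, Fintype.card_fin, mul_comm]
  set tstop : ((_ : Finset (Fin n)) × Fin n) → ℕ := fun q =>
    if h : ∃ t, ins H ((step H)^[t] (q.1, q.2)) = ∅ then Nat.find h else 0 with htstop
  have key : ∀ q ∈ P, (ins H ((step H)^[tstop q] (q.1, q.2)) = ∅) ∧ tstop q < k - 1 ∧
      (∀ s, s < tstop q → (ins H ((step H)^[s] (q.1, q.2))).Nonempty) ∧
      (∀ s, s ≤ tstop q → Good H ((step H)^[s] (q.1, q.2))) := by
    intro q hq
    have hg : Good H (q.1, q.2) := by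
      obtain ⟨h1, h2⟩ := Finset.mem_sigma.mp hq
      exact ⟨h1, h2⟩
    obtain ⟨t0, ht0k, ht0⟩ := terminate huni hk hkr hfree hg
    have hx : ∃ t, ins H ((step H)^[t] (q.1, q.2)) = ∅ := ⟨t0, ht0⟩
    have htq : tstop q = Nat.find hx := by rw [htstop]; simp only [dif_pos hx]
    have h1 : ins H ((step H)^[tstop q] (q.1, q.2)) = ∅ := by
      rw [htq]; exact Nat.find_spec hx
    have h2 : tstop q < k - 1 := by
      have := Nat.find_min' hx ht0
      omega
    have h3 : ∀ s, s < tstop q → (ins H ((step H)^[s] (q.1, q.2))).Nonempty := by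
      intro s hs
      rw [htq] at hs
      exact Finset.nonempty_iff_ne_empty.mpr (Nat.find_min hx hs)
    refine ⟨h1, h2, h3, ?_⟩
    intro s hs
    induction s with
    | zero => exact hg
    | succ s ih =>
      rw [Function.iterate_succ_apply']
      exact good_step huni hr (ih (by omega)) (h3 s (by omega))
  set Φ : ((_ : Finset (Fin n)) × Fin n) → ℕ × (_ : Finset (Fin n)) × Fin n := fun q =>
    (tstop q, ⟨((step H)^[tstop q] (q.1, q.2)).1.erase ((step H)^[tstop q] (q.1, q.2)).2,
      nxt ((step H)^[tstop q] (q.1, q.2)).1 ((step H)^[tstop q] (q.1, q.2)).2⟩) with hΦ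
  have hmaps : ∀ q ∈ P, Φ q ∈ T := by
    intro q hq
    obtain ⟨h1, h2, h3, h4⟩ := key q hq
    have hgfin := h4 (tstop q) (le_refl _)
    have hcard : ((step H)^[tstop q] (q.1, q.2)).1.card = r := huni _ hgfin.1
    have hee : (((step H)^[tstop q] (q.1, q.2)).1.erase
        ((step H)^[tstop q] (q.1, q.2)).2).Nonempty := erase_ne huni hr hgfin
    rw [hΦ, hT]
    simp only [Finset.mem_product, Finset.mem_range, Finset.mem_sigma]
    refine ⟨h2, ?_, nxt_mem hee⟩
    rw [Finset.mem_powersetCard_univ, Finset.card_erase_of_mem hgfin.2, hcard]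
  have hinj : Set.InjOn Φ P := by
    intro q hq q' hq' heq
    obtain ⟨p1, p2, p3, p4⟩ := key q hq
    obtain ⟨p1', p2', p3', p4'⟩ := key q' hq'
    rw [hΦ] at heq
    have ht : tstop q = tstop q' := congrArg Prod.fst heq
    have hslot := congrArg Prod.snd heq
    simp only at hslot
    rw [← ht] at hslot p1' p3' p4'
    set t := tstop q with htdef
    have hff := (Sigma.mk.inj_iff.mp hslot).1
    have hnz := heq_iff_eq.mp (Sigma.mk.inj_iff.mp hslot).2
    have hfinhalt : (step H)^[t] (q.1, q.2) = (step H)^[t] (q'.1, q'.2) := by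
      have hg := p4 t (le_refl _)
      have hg' := p4' t (le_refl _)
      obtain ⟨he, ha⟩ := settled_inj hg.1 hg'.1 hg.2 hg'.2
        (erase_ne huni hr hg) p1 p1' hff hnz
      exact Prod.ext he ha
    have hdown : ∀ d, d ≤ t → (step H)^[t - d] (q.1, q.2) = (step H)^[t - d] (q'.1, q'.2) := by
      intro d
      induction d with
      | zero => intro _; simpa using hfinhalt
      | succ d ih =>
        intro hd
        have hih := ih (by omega)
        set s := t - (d + 1) with hsdef
        have hs : t - d = s + 1 := by omega
        have hslt : s < t := by omega
        rw [hs] at hih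
        rw [Function.iterate_succ_apply', Function.iterate_succ_apply'] at hih
        have hg := p4 s (by omega)
        have hg' := p4' s (by omega)
        obtain ⟨he, ha⟩ := step_inj hg.1 hg'.1 hg.2 hg'.2
          (erase_ne huni hr hg) (erase_ne huni hr hg')
          (p3 s hslt) (p3' s hslt)
          (by
            show step H ((step H)^[s] (q.1, q.2)) = step H ((step H)^[s] (q'.1, q'.2))
            convert hih using 2 <;> exact (Prod.mk.eta).symm)
        rw [← Prod.mk.eta (p := (step H)^[s] (q.1, q.2)),
          ← Prod.mk.eta (p := (step H)^[s] (q'.1, q'.2)), he, ha]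
    have h0 := hdown t (le_refl _)
    simp only [Nat.sub_self, Function.iterate_zero_apply] at h0
    have h1 : q.1 = q'.1 := congrArg Prod.fst h0
    have h2 : q.2 = q'.2 := congrArg Prod.snd h0
    obtain ⟨qa, qb⟩ := q
    obtain ⟨qa', qb'⟩ := q'
    simp only at h1 h2
    subst h1
    subst h2
    rfl
  calc H.card * r = P.card := hPcard.symm
    _ ≤ T.card := Finset.card_le_card_of_injOn Φ hmaps hinj
    _ = (k - 1) * ((r - 1) * n.choose (r - 1)) := hTcard
end CGP


/-- For `2 ≤ k ≤ r` and `n > r`,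
`ex_↻(n, P_k^r) ≤ ((k−1)(r−1)/r)·C(n, r−1)`. -/
theorem stmt9 (r k n : ℕ) (hk : 2 ≤ k) (hkr : k ≤ r) (hn : r < n) :
    (exCycP n r k : ℝ) ≤
      ((k : ℝ) - 1) * ((r : ℝ) - 1) / (r : ℝ) * (n.choose (r - 1) : ℝ) := by
  have : NeZero n := ⟨by omega⟩
  set A : ℕ := (k - 1) * ((r - 1) * n.choose (r - 1)) with hA
  have hbound : exCycP n r k ≤ A / r := by
    apply csSup_le
    · refine ⟨0, (∅ : Finset (Finset (Fin n))), ?_, ?_, rfl⟩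
      · intro e he; exact absurd he (Finset.notMem_empty e)
      · rintro ⟨v, hv⟩
        exact absurd (hv.2.1 0 (by omega)) (Finset.notMem_empty _)
    · rintro m ⟨H, huni, hfree, rfl⟩
      rw [Nat.le_div_iff_mul_le (by omega : 0 < r)]
      exact CGP.count huni hk hkr hfree
  calc (exCycP n r k : ℝ) ≤ ((A / r : ℕ) : ℝ) := Nat.cast_le.mpr hbound
    _ ≤ (A : ℝ) / (r : ℝ) := Nat.cast_div_le
    _ = ((k : ℝ) - 1) * ((r : ℝ) - 1) / (r : ℝ) * (n.choose (r - 1) : ℝ) := by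
        rw [hA]
        push_cast [Nat.cast_sub (by omega : 1 ≤ k), Nat.cast_sub (by omega : 1 ≤ r)]
        ring
end
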